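/- arXiv:2410.07993 — 11 statements merged into one kernel-verified Lean document; each statement's English description precedes it below -/
import Mathlib

section
/- For all positive integers n and k, and every colour-balanced edge-colouring c : E(K_{2nk}) → {1,…,k}, there exists a perfect matching M of K_{2nk} with f(M) ≤ k·√(2n). -/
open Finset

variable {V : Type*} [Fintype V] [DecidableEq V]

/-- The finset of fixed-point-free involutions (perfect matchings) of `V`. -/
def pmSet (V : Type*) [Fintype V] [DecidableEq V] : Finset (Equiv.Perm V) :=
  Finset.univ.filter fun f => (∀ x, f (f x) = x) ∧ ∀ x, f x ≠ x

/-- The edge set of the matching given by involution `f`. -/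
def pmEdges (f : Equiv.Perm V) : Finset (Sym2 V) :=
  Finset.univ.image fun a => s(a, f a)

lemma mem_pmSet {f : Equiv.Perm V} :
    f ∈ pmSet V ↔ (∀ x, f (f x) = x) ∧ ∀ x, f x ≠ x := by
  simp [pmSet]

lemma mem_pmEdges {f : Equiv.Perm V} (hf : ∀ x, f (f x) = x) {a b : V} :
    s(a, b) ∈ pmEdges f ↔ f a = b := by
  simp only [pmEdges, mem_image, mem_univ, true_and]
  constructor
  · rintro ⟨x, hx⟩
    rw [Sym2.eq_iff] at hx
    rcases hx with ⟨rfl, rfl⟩ | ⟨rfl, rfl⟩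
    · rfl
    · exact hf x
  · intro h
    exact ⟨a, by rw [h]⟩

lemma edge_eq_of_mem {f : Equiv.Perm V} (hf : ∀ x, f (f x) = x) {e : Sym2 V}
    (he : e ∈ pmEdges f) {v : V} (hv : v ∈ e) : e = s(v, f v) := by
  induction e with
  | _ x y =>
    rw [mem_pmEdges hf] at he
    rw [Sym2.mem_iff] at hv
    rcases hv with rfl | rfl
    · rw [he]
    · subst he
      rw [hf x, Sym2.eq_swap]

/-- Distinct edges of a matching are vertex-disjoint. -/
lemma not_mem_of_ne {f : Equiv.Perm V} (hf : ∀ x, f (f x) = x) {e e' : Sym2 V}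
    (he : e ∈ pmEdges f) (he' : e' ∈ pmEdges f) (hne : e ≠ e') {v : V} (hv : v ∈ e) :
    v ∉ e' := fun hv' =>
  hne ((edge_eq_of_mem hf he hv).trans (edge_eq_of_mem hf he' hv').symm)

lemma two_mul_card_pmEdges {f : Equiv.Perm V} (hf : ∀ x, f (f x) = x)
    (hf' : ∀ x, f x ≠ x) : 2 * (pmEdges f).card = Fintype.card V := by
  have h := Finset.card_eq_sum_card_image (fun a => s(a, f a)) Finset.univ
  rw [← Finset.card_univ, h, ← pmEdges]
  rw [Finset.sum_congr rfl (fun e he => ?_), Finset.sum_const, smul_eq_mul, mul_comm]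
  show (Finset.filter (fun a => s(a, f a) = e) Finset.univ).card = 2
  induction e with
  | _ x y =>
    rw [mem_pmEdges hf] at he
    subst he
    have : (Finset.filter (fun a => s(a, f a) = s(x, f x)) Finset.univ) = {x, f x} := by
      ext a
      simp only [mem_filter, mem_univ, true_and, mem_insert, mem_singleton, Sym2.eq_iff]
      constructor
      · rintro (⟨rfl, h⟩ | ⟨rfl, h⟩)
        · exact Or.inl rfl
        · exact Or.inr rfl
      · rintro (rfl | rfl)
        · exact Or.inl ⟨rfl, rfl⟩
        · exact Or.inr ⟨rfl, hf x⟩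
    rw [this, Finset.card_insert_of_notMem (by simp [Ne.symm (hf' x)]), Finset.card_singleton]

/-- Non-diagonal `Sym2` elements with both endpoints in `s`. -/
def sym2Of (s : Finset V) : Finset (Sym2 V) :=
  s.offDiag.image fun p => s(p.1, p.2)

lemma mem_sym2Of {s : Finset V} {a b : V} :
    s(a, b) ∈ sym2Of s ↔ a ∈ s ∧ b ∈ s ∧ a ≠ b := by
  simp only [sym2Of, mem_image, Finset.mem_offDiag, Prod.exists]
  constructor
  · rintro ⟨x, y, ⟨hx, hy, hxy⟩, h⟩
    rw [Sym2.eq_iff] at h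
    rcases h with ⟨rfl, rfl⟩ | ⟨rfl, rfl⟩
    · exact ⟨hx, hy, hxy⟩
    · exact ⟨hy, hx, Ne.symm hxy⟩
  · rintro ⟨ha, hb, hab⟩
    exact ⟨a, b, ⟨ha, hb, hab⟩, rfl⟩

lemma two_mul_card_sym2Of (s : Finset V) :
    2 * (sym2Of s).card = s.card * (s.card - 1) := by
  have h := Finset.card_eq_sum_card_image (fun p : V × V => s(p.1, p.2)) s.offDiag
  have h2 : ∀ e ∈ sym2Of s,
      (s.offDiag.filter fun p : V × V => s(p.1, p.2) = e).card = 2 := by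
    intro e he
    induction e with
    | _ x y =>
      rw [mem_sym2Of] at he
      obtain ⟨hx, hy, hxy⟩ := he
      have : (s.offDiag.filter fun p : V × V => s(p.1, p.2) = s(x, y)) = {(x, y), (y, x)} := by
        ext ⟨a, b⟩
        simp only [mem_filter, Finset.mem_offDiag, mem_insert, mem_singleton, Sym2.eq_iff,
          Prod.mk.injEq]
        constructor
        · rintro ⟨-, (⟨rfl, rfl⟩ | ⟨rfl, rfl⟩)⟩
          · exact Or.inl ⟨rfl, rfl⟩
          · exact Or.inr ⟨rfl, rfl⟩
        · rintro (⟨rfl, rfl⟩ | ⟨rfl, rfl⟩)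
          · exact ⟨⟨hx, hy, hxy⟩, Or.inl ⟨rfl, rfl⟩⟩
          · exact ⟨⟨hy, hx, Ne.symm hxy⟩, Or.inr ⟨rfl, rfl⟩⟩
      rw [this, Finset.card_insert_of_notMem (by simp [hxy]), Finset.card_singleton]
  rw [← sym2Of] at h
  rw [Finset.sum_congr rfl h2, Finset.sum_const, smul_eq_mul, mul_comm] at h
  rw [← h, Finset.offDiag_card, Nat.mul_sub_one]

/-- Conjugation preserves the matching set. -/
lemma conj_mem_pmSet {f : Equiv.Perm V} (hf : f ∈ pmSet V) (σ : Equiv.Perm V) :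
    σ * f * σ⁻¹ ∈ pmSet V := by
  rw [mem_pmSet] at hf ⊢
  obtain ⟨h1, h2⟩ := hf
  constructor
  · intro x
    simp [Equiv.Perm.mul_apply, h1]
  · intro x hx
    simp only [Equiv.Perm.mul_apply] at hx
    have : f (σ⁻¹ x) = σ⁻¹ x := by
      apply σ.injective
      simpa using hx
    exact h2 _ this

lemma mem_pmEdges_conj {f : Equiv.Perm V} (hf : f ∈ pmSet V) (σ : Equiv.Perm V) {a b : V} :
    s(σ a, σ b) ∈ pmEdges (σ * f * σ⁻¹) ↔ s(a, b) ∈ pmEdges f := by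
  rw [mem_pmSet] at hf
  rw [mem_pmEdges hf.1, mem_pmEdges (conj_mem_pmSet (mem_pmSet.2 hf) σ |> mem_pmSet.1).1]
  simp only [Equiv.Perm.mul_apply, Equiv.Perm.coe_inv, Equiv.symm_apply_apply]
  exact ⟨fun h => σ.injective (by simpa using h), fun h => by rw [h]⟩

/-- A permutation extending a correspondence between two injections. -/
lemma exists_perm_comp {β : Type*} (g₁ g₂ : β → V) (h₁ : Function.Injective g₁)
    (h₂ : Function.Injective g₂) : ∃ σ : Equiv.Perm V, ∀ b, σ (g₁ b) = g₂ b := by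
  classical
  refine ⟨((Equiv.ofInjective g₁ h₁).symm.trans (Equiv.ofInjective g₂ h₂)).extendSubtype,
    fun b => ?_⟩
  rw [Equiv.extendSubtype_apply_of_mem _ _ ⟨b, rfl⟩, Equiv.trans_apply,
    Equiv.ofInjective_symm_apply h₁ b, Equiv.ofInjective_apply]

/-- Number of perfect matchings containing the edge `e`. -/
def cnt1 (e : Sym2 V) : ℕ := ((pmSet V).filter fun f => e ∈ pmEdges f).card

/-- Number of perfect matchings containing both edges `e` and `e'`. -/
def cnt2 (e e' : Sym2 V) : ℕ :=
  ((pmSet V).filter fun f => e ∈ pmEdges f ∧ e' ∈ pmEdges f).card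

lemma cnt1_congr {a b a' b' : V} (σ : Equiv.Perm V) (ha : σ a = a') (hb : σ b = b') :
    cnt1 s(a, b) = cnt1 s(a', b') := by
  apply Finset.card_bij' (i := fun f _ => σ * f * σ⁻¹) (j := fun g _ => σ⁻¹ * g * σ)
  · intro f hf
    rw [Finset.mem_filter] at hf ⊢
    refine ⟨conj_mem_pmSet hf.1 σ, ?_⟩
    rw [← ha, ← hb, mem_pmEdges_conj hf.1 σ]
    exact hf.2
  · intro g hg
    rw [Finset.mem_filter] at hg ⊢
    have h1 : σ⁻¹ * g * σ = σ⁻¹ * g * (σ⁻¹)⁻¹ := by rw [inv_inv]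
    refine ⟨h1 ▸ conj_mem_pmSet hg.1 σ⁻¹, ?_⟩
    have h2 : σ⁻¹ * g * σ ∈ pmSet V := h1 ▸ conj_mem_pmSet hg.1 σ⁻¹
    have := mem_pmEdges_conj h2 σ (a := a) (b := b)
    rw [show σ * (σ⁻¹ * g * σ) * σ⁻¹ = g by group] at this
    rw [← this, ha, hb]
    exact hg.2
  · intro f _; group
  · intro g _; group

lemma cnt2_congr {a b x y a' b' x' y' : V} (σ : Equiv.Perm V)
    (ha : σ a = a') (hb : σ b = b') (hx : σ x = x') (hy : σ y = y') :
    cnt2 s(a, b) s(x, y) = cnt2 s(a', b') s(x', y') := by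
  apply Finset.card_bij' (i := fun f _ => σ * f * σ⁻¹) (j := fun g _ => σ⁻¹ * g * σ)
  · intro f hf
    rw [Finset.mem_filter] at hf ⊢
    refine ⟨conj_mem_pmSet hf.1 σ, ?_, ?_⟩
    · rw [← ha, ← hb, mem_pmEdges_conj hf.1 σ]; exact hf.2.1
    · rw [← hx, ← hy, mem_pmEdges_conj hf.1 σ]; exact hf.2.2
  · intro g hg
    rw [Finset.mem_filter] at hg ⊢
    have h1 : σ⁻¹ * g * σ = σ⁻¹ * g * (σ⁻¹)⁻¹ := by rw [inv_inv]
    have h2 : σ⁻¹ * g * σ ∈ pmSet V := h1 ▸ conj_mem_pmSet hg.1 σ⁻¹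
    refine ⟨h2, ?_, ?_⟩
    · have := mem_pmEdges_conj h2 σ (a := a) (b := b)
      rw [show σ * (σ⁻¹ * g * σ) * σ⁻¹ = g by group] at this
      rw [← this, ha, hb]; exact hg.2.1
    · have := mem_pmEdges_conj h2 σ (a := x) (b := y)
      rw [show σ * (σ⁻¹ * g * σ) * σ⁻¹ = g by group] at this
      rw [← this, hx, hy]; exact hg.2.2
  · intro f _; group
  · intro g _; group

lemma cnt1_eq {a b a' b' : V} (hab : a ≠ b) (hab' : a' ≠ b') :
    cnt1 s(a, b) = cnt1 s(a', b') := by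
  obtain ⟨σ, hσ⟩ := exists_perm_comp (fun t : Bool => bif t then a else b)
    (fun t : Bool => bif t then a' else b')
    (by intro s t h; cases s <;> cases t <;> simp_all)
    (by intro s t h; cases s <;> cases t <;> simp_all)
  exact cnt1_congr σ (hσ true) (hσ false)

lemma cnt2_eq {a b x y a' b' x' y' : V}
    (h1 : a ≠ b) (h2 : a ≠ x) (h3 : a ≠ y) (h4 : b ≠ x) (h5 : b ≠ y) (h6 : x ≠ y)
    (h1' : a' ≠ b') (h2' : a' ≠ x') (h3' : a' ≠ y') (h4' : b' ≠ x') (h5' : b' ≠ y')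
    (h6' : x' ≠ y') :
    cnt2 s(a, b) s(x, y) = cnt2 s(a', b') s(x', y') := by
  obtain ⟨σ, hσ⟩ := exists_perm_comp (![a, b, x, y]) (![a', b', x', y'])
    (by intro i j h; fin_cases i <;> fin_cases j <;> simp_all)
    (by intro i j h; fin_cases i <;> fin_cases j <;> simp_all)
  have e0 := hσ 0; have e1 := hσ 1; have e2 := hσ 2; have e3 := hσ 3
  simp only [Matrix.cons_val_zero, Matrix.cons_val_one, Matrix.head_cons,
    Matrix.cons_val_two, Matrix.tail_cons, Matrix.cons_val_three] at e0 e1 e2 e3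
  exact cnt2_congr σ e0 e1 e2 e3

lemma mem_of_mem_sym2Of {s : Finset V} {e : Sym2 V} (he : e ∈ sym2Of s) {v : V}
    (hv : v ∈ e) : v ∈ s := by
  induction e with
  | _ x y =>
    rw [mem_sym2Of] at he
    rw [Sym2.mem_iff] at hv
    rcases hv with rfl | rfl
    · exact he.1
    · exact he.2.1

lemma pmEdges_subset {f : Equiv.Perm V} (hf : f ∈ pmSet V) :
    pmEdges f ⊆ sym2Of (univ : Finset V) := by
  rw [mem_pmSet] at hf
  intro e he
  obtain ⟨a, -, rfl⟩ := Finset.mem_image.1 he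
  rw [mem_sym2Of]
  exact ⟨mem_univ _, mem_univ _, Ne.symm (hf.2 a)⟩

lemma card_pmEdges {m : ℕ} (hcard : Fintype.card V = 2 * m) {f : Equiv.Perm V}
    (hf : f ∈ pmSet V) : (pmEdges f).card = m := by
  rw [mem_pmSet] at hf
  have := two_mul_card_pmEdges hf.1 hf.2
  omega

lemma swap_cnt1 (K : Finset (Sym2 V)) :
    ∑ f ∈ pmSet V, (K.filter (· ∈ pmEdges f)).card = ∑ e ∈ K, cnt1 e := by
  simp only [Finset.card_filter, cnt1]
  exact Finset.sum_comm

lemma swap_cnt2 (K : Finset (Sym2 V)) :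
    ∑ f ∈ pmSet V,
        (K.offDiag.filter fun p => p.1 ∈ pmEdges f ∧ p.2 ∈ pmEdges f).card
      = ∑ p ∈ K.offDiag, cnt2 p.1 p.2 := by
  simp only [Finset.card_filter, cnt2]
  exact Finset.sum_comm

lemma offDiag_filter_eq (K : Finset (Sym2 V)) (f : Equiv.Perm V) :
    (K.filter (· ∈ pmEdges f)).offDiag
      = K.offDiag.filter fun p => p.1 ∈ pmEdges f ∧ p.2 ∈ pmEdges f := by
  ext ⟨x, y⟩
  simp only [Finset.mem_offDiag, Finset.mem_filter]
  tauto

/-- A perfect matching exists. -/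
lemma pmSet_nonempty {m : ℕ} (hm : 1 ≤ m) (hcard : Fintype.card V = 2 * m) :
    (pmSet V).Nonempty := by
  have hce : Fintype.card V = Fintype.card (Fin m × Fin 2) := by
    simp [hcard]; ring
  let e : V ≃ Fin m × Fin 2 := Fintype.equivOfCardEq hce
  let g : Equiv.Perm (Fin m × Fin 2) := Equiv.prodCongr (Equiv.refl _) (Equiv.swap 0 1)
  have hg : ∀ p : Fin m × Fin 2, g p = (p.1, Equiv.swap 0 1 p.2) := fun p => rfl
  refine ⟨e.symm.permCongr g, mem_pmSet.2 ⟨fun x => ?_, fun x hx => ?_⟩⟩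
  · simp only [Equiv.permCongr_apply, Equiv.symm_symm, Equiv.apply_symm_apply, hg,
      Equiv.swap_apply_self]
    simp
  · simp only [Equiv.permCongr_apply, Equiv.symm_symm, hg] at hx
    have h2 := congrArg e hx
    rw [Equiv.apply_symm_apply] at h2
    have : Equiv.swap (0 : Fin 2) 1 (e x).2 = (e x).2 := congrArg Prod.snd h2
    revert this
    have : ∀ t : Fin 2, Equiv.swap (0 : Fin 2) 1 t ≠ t := by decide
    exact this _

lemma filter_disj_eq {f : Equiv.Perm V} (hf : f ∈ pmSet V) {a b : V}
    (hE : s(a, b) ∈ pmEdges f) :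
    (sym2Of ((univ : Finset V) \ {a, b})).filter (· ∈ pmEdges f)
      = (pmEdges f).erase s(a, b) := by
  have hf' := mem_pmSet.1 hf
  ext e'
  rw [Finset.mem_filter, Finset.mem_erase]
  constructor
  · rintro ⟨hd, hmm⟩
    refine ⟨fun h => ?_, hmm⟩
    have ha : a ∈ ((univ : Finset V) \ {a, b}) :=
      mem_of_mem_sym2Of hd (h ▸ Sym2.mem_mk_left a b)
    simp at ha
  · rintro ⟨hne, hmm⟩
    refine ⟨?_, hmm⟩
    induction e' with
    | _ x y =>
      have hxy : x ≠ y := by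
        rw [mem_pmEdges hf'.1] at hmm
        rw [← hmm]
        exact Ne.symm (hf'.2 x)
      have hx : x ∉ s(a, b) := not_mem_of_ne hf'.1 hmm hE hne (Sym2.mem_mk_left x y)
      have hy : y ∉ s(a, b) := not_mem_of_ne hf'.1 hmm hE hne (Sym2.mem_mk_right x y)
      rw [Sym2.mem_iff, not_or] at hx hy
      rw [mem_sym2Of]
      simp only [Finset.mem_sdiff, Finset.mem_univ, true_and, Finset.mem_insert,
        Finset.mem_singleton, not_or]
      exact ⟨⟨hx.1, hx.2⟩, ⟨hy.1, hy.2⟩, hxy⟩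

lemma core {m : ℕ} (hm : 2 ≤ m) (hcard : Fintype.card V = 2 * m) :
    ∃ T T₂ : ℕ,
      (2 * m - 1) * T = (pmSet V).card ∧
      (2 * m - 3) * T₂ = T ∧
      (∀ e ∈ sym2Of (univ : Finset V), cnt1 e = T) ∧
      (∀ e e', e ∈ sym2Of (univ : Finset V) → e' ∈ sym2Of (univ : Finset V) →
        e ≠ e' → cnt2 e e' ≤ T₂) := by
  let ι : Fin (2 * m) ≃ V := (Fintype.equivFinOfCardEq hcard).symm
  have hι : Function.Injective ι := ι.injective
  have hne : ∀ i j : Fin (2 * m), i.val ≠ j.val → ι i ≠ ι j :=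
    fun i j h hh => h (congrArg Fin.val (hι hh))
  set v0 := ι ⟨0, by omega⟩ with hv0
  set v1 := ι ⟨1, by omega⟩ with hv1
  set v2 := ι ⟨2, by omega⟩ with hv2
  set v3 := ι ⟨3, by omega⟩ with hv3
  have h01 : v0 ≠ v1 := hne _ _ (by norm_num)
  have h02 : v0 ≠ v2 := hne _ _ (by norm_num)
  have h03 : v0 ≠ v3 := hne _ _ (by norm_num)
  have h12 : v1 ≠ v2 := hne _ _ (by norm_num)
  have h13 : v1 ≠ v3 := hne _ _ (by norm_num)
  have h23 : v2 ≠ v3 := hne _ _ (by norm_num)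
  refine ⟨cnt1 s(v0, v1), cnt2 s(v0, v1) s(v2, v3), ?_, ?_, ?_, ?_⟩
  -- first: the constancy of cnt1
  case refine_3 =>
    intro e he
    induction e with
    | _ x y =>
      rw [mem_sym2Of] at he
      exact cnt1_eq he.2.2 h01
  -- second: cnt2 bound
  case refine_4 =>
    intro e e' he he' hnee
    induction e with
    | _ x y =>
      induction e' with
      | _ x' y' =>
        rw [mem_sym2Of] at he he'
        by_cases hsh : x = x' ∨ x = y' ∨ y = x' ∨ y = y'
        · -- shared vertex: cnt2 = 0
          have : ∃ v, v ∈ s(x, y) ∧ v ∈ s(x', y') := by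
            rcases hsh with rfl | rfl | rfl | rfl
            · exact ⟨x, Sym2.mem_mk_left _ _, Sym2.mem_mk_left _ _⟩
            · exact ⟨x, Sym2.mem_mk_left _ _, Sym2.mem_mk_right _ _⟩
            · exact ⟨y, Sym2.mem_mk_right _ _, Sym2.mem_mk_left _ _⟩
            · exact ⟨y, Sym2.mem_mk_right _ _, Sym2.mem_mk_right _ _⟩
          obtain ⟨v, hv, hv'⟩ := this
          have : cnt2 s(x, y) s(x', y') = 0 := by
            rw [cnt2, Finset.card_eq_zero, Finset.filter_eq_empty_iff]
            rintro f hf ⟨hee, hee'⟩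
            exact not_mem_of_ne (mem_pmSet.1 hf).1 hee hee' hnee hv hv'
          omega
        · push_neg at hsh
          obtain ⟨hxx, hxy, hyx, hyy⟩ := hsh
          exact le_of_eq (cnt2_eq he.2.2 hxx hxy hyx hyy he'.2.2 h01 h02 h03 h12 h13 h23)
  -- now the two identities
  case refine_1 =>
    have hswap := swap_cnt1 (sym2Of (univ : Finset V))
    have hL : ∑ f ∈ pmSet V,
        ((sym2Of (univ : Finset V)).filter (· ∈ pmEdges f)).card = (pmSet V).card * m := by
      rw [Finset.sum_congr rfl fun f hf => ?_, Finset.sum_const, smul_eq_mul]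
      rw [show (sym2Of (univ : Finset V)).filter (· ∈ pmEdges f) = pmEdges f from ?_]
      · exact card_pmEdges hcard hf
      · rw [Finset.filter_mem_eq_inter]
        exact Finset.inter_eq_right.2 (pmEdges_subset hf)
    have hR : ∑ e ∈ sym2Of (univ : Finset V), cnt1 e
        = (sym2Of (univ : Finset V)).card * cnt1 s(v0, v1) := by
      rw [Finset.sum_congr rfl fun e he => ?_, Finset.sum_const, smul_eq_mul]
      induction e with
      | _ x y =>
        rw [mem_sym2Of] at he
        exact cnt1_eq he.2.2 h01
    have h2c : 2 * (sym2Of (univ : Finset V)).card = 2 * m * (2 * m - 1) := by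
      rw [two_mul_card_sym2Of, Finset.card_univ, hcard]
    apply Nat.eq_of_mul_eq_mul_left (show 0 < 2 * m by omega)
    calc 2 * m * ((2 * m - 1) * cnt1 s(v0, v1))
        = (2 * m * (2 * m - 1)) * cnt1 s(v0, v1) := by ring
      _ = 2 * ((sym2Of (univ : Finset V)).card * cnt1 s(v0, v1)) := by rw [← h2c]; ring
      _ = 2 * ((pmSet V).card * m) := by rw [← hR, ← hswap, hL]
      _ = 2 * m * (pmSet V).card := by ring
  case refine_2 =>
    set D := sym2Of ((univ : Finset V) \ {v0, v1}) with hD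
    -- constancy over D
    have hDconst : ∀ e' ∈ D, cnt2 s(v0, v1) e' = cnt2 s(v0, v1) s(v2, v3) := by
      intro e' he'
      induction e' with
      | _ x y =>
        rw [hD, mem_sym2Of] at he'
        obtain ⟨hx, hy, hxy⟩ := he'
        simp only [Finset.mem_sdiff, Finset.mem_insert, Finset.mem_singleton, not_or] at hx hy
        exact cnt2_eq h01 (Ne.symm hx.2.1) (Ne.symm hy.2.1) (Ne.symm hx.2.2) (Ne.symm hy.2.2)
          hxy h01 h02 h03 h12 h13 h23
    have hsum1 : ∑ e' ∈ D, cnt2 s(v0, v1) e' = D.card * cnt2 s(v0, v1) s(v2, v3) := by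
      rw [Finset.sum_congr rfl hDconst, Finset.sum_const, smul_eq_mul]
    -- double counting
    have hsum2 : ∑ e' ∈ D, cnt2 s(v0, v1) e' = (m - 1) * cnt1 s(v0, v1) := by
      simp only [cnt2, Finset.card_filter]
      rw [Finset.sum_comm]
      have hper : ∀ f ∈ pmSet V,
          (∑ e' ∈ D, if s(v0, v1) ∈ pmEdges f ∧ e' ∈ pmEdges f then 1 else 0)
            = if s(v0, v1) ∈ pmEdges f then m - 1 else 0 := by
        intro f hf
        by_cases hE : s(v0, v1) ∈ pmEdges f
        · rw [if_pos hE]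
          have : (∑ e' ∈ D, if s(v0, v1) ∈ pmEdges f ∧ e' ∈ pmEdges f then 1 else 0)
              = (D.filter (· ∈ pmEdges f)).card := by
            rw [Finset.card_filter]
            exact Finset.sum_congr rfl fun e' _ => by simp [hE]
          rw [this, hD, filter_disj_eq hf hE, Finset.card_erase_of_mem hE,
            card_pmEdges hcard hf]
        · rw [if_neg hE]
          exact Finset.sum_eq_zero fun e' _ => by simp [hE]
      rw [Finset.sum_congr rfl hper, cnt1, Finset.card_filter, Finset.mul_sum]
      exact Finset.sum_congr rfl fun f _ => by split <;> simp
    have hDcard : 2 * D.card = (2 * m - 2) * (2 * m - 3) := by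
      rw [hD, two_mul_card_sym2Of, Finset.card_sdiff_of_subset (by simp), Finset.card_univ, hcard]
      rw [Finset.card_insert_of_notMem (by simpa using h01), Finset.card_singleton]
      congr 1 <;> omega
    apply Nat.eq_of_mul_eq_mul_left (show 0 < 2 * m - 2 by omega)
    calc (2 * m - 2) * ((2 * m - 3) * cnt2 s(v0, v1) s(v2, v3))
        = ((2 * m - 2) * (2 * m - 3)) * cnt2 s(v0, v1) s(v2, v3) := by ring
      _ = 2 * (D.card * cnt2 s(v0, v1) s(v2, v3)) := by rw [← hDcard]; ring
      _ = 2 * ((m - 1) * cnt1 s(v0, v1)) := by rw [← hsum1, hsum2]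
      _ = (2 * (m - 1)) * cnt1 s(v0, v1) := by ring
      _ = (2 * m - 2) * cnt1 s(v0, v1) := by congr 1; omega

lemma key_counts {m : ℕ} (hm : 2 ≤ m) (hcard : Fintype.card V = 2 * m)
    (K : Finset (Sym2 V)) (hK : K ⊆ sym2Of (univ : Finset V)) :
    (2 * m - 1) * (∑ f ∈ pmSet V, (K.filter (· ∈ pmEdges f)).card)
        = K.card * (pmSet V).card ∧
      ((2 * m - 1) * (2 * m - 3))
          * (∑ f ∈ pmSet V, ((K.filter (· ∈ pmEdges f)).offDiag).card)
        ≤ K.card * K.card * (pmSet V).card := by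
  obtain ⟨T, T₂, hT, hT₂, hconst, hle⟩ := core hm hcard
  constructor
  · rw [swap_cnt1, Finset.sum_congr rfl fun e he => hconst e (hK he), Finset.sum_const,
      smul_eq_mul]
    calc (2 * m - 1) * (K.card * T) = K.card * ((2 * m - 1) * T) := by ring
      _ = K.card * (pmSet V).card := by rw [hT]
  · have h1 : ∑ f ∈ pmSet V, ((K.filter (· ∈ pmEdges f)).offDiag).card
        ≤ K.card * K.card * T₂ := by
      rw [Finset.sum_congr rfl fun f _ => congrArg Finset.card (offDiag_filter_eq K f),
        swap_cnt2]
      calc ∑ p ∈ K.offDiag, cnt2 p.1 p.2 ≤ ∑ _p ∈ K.offDiag, T₂ := by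
            refine Finset.sum_le_sum fun p hp => ?_
            rw [Finset.mem_offDiag] at hp
            exact hle p.1 p.2 (hK hp.1) (hK hp.2.1) hp.2.2
        _ = K.offDiag.card * T₂ := by rw [Finset.sum_const, smul_eq_mul]
        _ ≤ K.card * K.card * T₂ := by
            refine Nat.mul_le_mul_right _ ?_
            rw [Finset.offDiag_card]
            omega
    calc ((2 * m - 1) * (2 * m - 3)) * (∑ f ∈ pmSet V, ((K.filter (· ∈ pmEdges f)).offDiag).card)
        ≤ ((2 * m - 1) * (2 * m - 3)) * (K.card * K.card * T₂) :=
          Nat.mul_le_mul_left _ h1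
      _ = K.card * K.card * ((2 * m - 1) * ((2 * m - 3) * T₂)) := by ring
      _ = K.card * K.card * (pmSet V).card := by rw [hT₂, hT]

lemma colour_bound {m n : ℕ} (hm : 2 ≤ m) (hn23 : 2 * n + 3 ≤ 2 * m)
    (hcard : Fintype.card V = 2 * m) (K : Finset (Sym2 V))
    (hK : K ⊆ sym2Of (univ : Finset V)) (hKcard : K.card = n * (2 * m - 1)) :
    ∑ f ∈ pmSet V, |((K.filter (· ∈ pmEdges f)).card : ℝ) - (n : ℝ)|
      ≤ ((pmSet V).card : ℝ) * Real.sqrt (2 * n) := by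
  obtain ⟨hA, hB⟩ := key_counts hm hcard K hK
  set N := (pmSet V).card with hN
  set A : Equiv.Perm V → ℕ := fun f => (K.filter (· ∈ pmEdges f)).card with hAdef
  -- (1) first moment
  have h1 : ∑ f ∈ pmSet V, A f = n * N := by
    apply Nat.eq_of_mul_eq_mul_left (show 0 < 2 * m - 1 by omega)
    rw [hA, hKcard]; ring
  -- (2) second moment
  have hoff : ∀ f : Equiv.Perm V,
      (A f) * (A f) = ((K.filter (· ∈ pmEdges f)).offDiag).card + A f := by
    intro f
    have hAA : A f ≤ A f * A f := by
      rcases Nat.eq_zero_or_pos (A f) with h | h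
      · simp [h]
      · exact Nat.le_mul_of_pos_left _ h
    rw [Finset.offDiag_card]
    show A f * A f = A f * A f - A f + A f
    omega
  have h2 : ∑ f ∈ pmSet V, A f * A f ≤ (n * n + 2 * n) * N := by
    have e1 : ∑ f ∈ pmSet V, A f * A f
        = (∑ f ∈ pmSet V, ((K.filter (· ∈ pmEdges f)).offDiag).card)
          + ∑ f ∈ pmSet V, A f := by
      rw [← Finset.sum_add_distrib]
      exact Finset.sum_congr rfl fun f _ => hoff f
    have e2 : (∑ f ∈ pmSet V, ((K.filter (· ∈ pmEdges f)).offDiag).card)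
        ≤ (n * n + n) * N := by
      refine Nat.le_of_mul_le_mul_left ?_
        (show 0 < (2 * m - 1) * (2 * m - 3) from
          Nat.mul_pos (by omega) (by omega))
      calc ((2 * m - 1) * (2 * m - 3))
            * (∑ f ∈ pmSet V, ((K.filter (· ∈ pmEdges f)).offDiag).card)
          ≤ K.card * K.card * N := hB
        _ = (n * (2 * m - 1)) * (n * (2 * m - 1)) * N := by rw [hKcard]
        _ ≤ ((2 * m - 1) * (2 * m - 3)) * ((n * n + n) * N) := ?_
      set b := 2 * m - 3 with hb
      have hb2 : 2 * m - 1 = b + 2 := by omega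
      have hbn : 2 * n ≤ b := by omega
      rw [hb2]
      have hkey : n * (b + 2) ≤ (n + 1) * b := by
        calc n * (b + 2) = n * b + 2 * n := by ring
          _ ≤ n * b + b := by omega
          _ = (n + 1) * b := by ring
      calc (n * (b + 2)) * (n * (b + 2)) * N
          ≤ (n * (b + 2)) * ((n + 1) * b) * N :=
            Nat.mul_le_mul_right _ (Nat.mul_le_mul_left _ hkey)
        _ = ((b + 2) * b) * ((n * n + n) * N) := by ring
    calc ∑ f ∈ pmSet V, A f * A f = _ + _ := e1
      _ ≤ (n * n + n) * N + n * N := add_le_add e2 (le_of_eq h1)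
      _ = (n * n + 2 * n) * N := by ring
  -- real variance bound
  have h3 : ∑ f ∈ pmSet V, ((A f : ℝ) - (n : ℝ)) ^ 2 ≤ 2 * n * N := by
    have expand : ∀ f : Equiv.Perm V, ((A f : ℝ) - n) ^ 2
        = (A f : ℝ) * (A f : ℝ) - 2 * n * (A f : ℝ) + n * n := fun f => by ring
    rw [Finset.sum_congr rfl fun f _ => expand f, Finset.sum_add_distrib,
      Finset.sum_sub_distrib, ← Finset.mul_sum, Finset.sum_const, nsmul_eq_mul, ← hN]
    have c1 : (∑ f ∈ pmSet V, (A f : ℝ)) = (n : ℝ) * N := by exact_mod_cast h1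
    have c2 : (∑ f ∈ pmSet V, (A f : ℝ) * (A f : ℝ)) ≤ ((n : ℝ) * n + 2 * n) * N := by
      exact_mod_cast h2
    rw [c1]
    nlinarith [c2]
  -- Cauchy-Schwarz
  have h4 := Finset.sum_mul_sq_le_sq_mul_sq (pmSet V) (fun _ => (1 : ℝ))
    (fun f => |(A f : ℝ) - n|)
  simp only [one_mul, one_pow, Finset.sum_const, nsmul_eq_mul, mul_one, sq_abs] at h4
  have hnn : 0 ≤ ∑ f ∈ pmSet V, |(A f : ℝ) - n| :=
    Finset.sum_nonneg fun f _ => abs_nonneg _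
  have h5 : (∑ f ∈ pmSet V, |(A f : ℝ) - n|) ^ 2 ≤ (N : ℝ) ^ 2 * (2 * n) := by
    calc (∑ f ∈ pmSet V, |(A f : ℝ) - n|) ^ 2
        ≤ (N : ℝ) * (∑ f ∈ pmSet V, ((A f : ℝ) - n) ^ 2) := by rw [← hN] at h4; exact h4
      _ ≤ (N : ℝ) * (2 * n * N) := by
          refine mul_le_mul_of_nonneg_left h3 (by positivity)
      _ = (N : ℝ) ^ 2 * (2 * n) := by ring
  calc ∑ f ∈ pmSet V, |(A f : ℝ) - n|
      ≤ Real.sqrt ((N : ℝ) ^ 2 * (2 * n)) := (Real.le_sqrt hnn (by positivity)).2 h5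
    _ = (N : ℝ) * Real.sqrt (2 * n) := by
        rw [Real.sqrt_mul (by positivity), Real.sqrt_sq (by positivity)]

lemma master {n k m : ℕ} (hm : 2 ≤ m) (hn23 : 2 * n + 3 ≤ 2 * m)
    (hcard : Fintype.card V = 2 * m) (K : Fin k → Finset (Sym2 V))
    (hK : ∀ i, K i ⊆ sym2Of (univ : Finset V))
    (hKcard : ∀ i, (K i).card = n * (2 * m - 1)) :
    ∃ f ∈ pmSet V,
      ∑ i : Fin k, |(((K i).filter (· ∈ pmEdges f)).card : ℝ) - (n : ℝ)|
        ≤ (k : ℝ) * Real.sqrt (2 * n) := by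
  have hne : (pmSet V).Nonempty := pmSet_nonempty (by omega) hcard
  have hsum : ∑ f ∈ pmSet V,
      (∑ i : Fin k, |(((K i).filter (· ∈ pmEdges f)).card : ℝ) - (n : ℝ)|)
      ≤ ∑ _f ∈ pmSet V, (k : ℝ) * Real.sqrt (2 * n) := by
    rw [Finset.sum_comm]
    calc ∑ i : Fin k, ∑ f ∈ pmSet V,
          |(((K i).filter (· ∈ pmEdges f)).card : ℝ) - (n : ℝ)|
        ≤ ∑ _i : Fin k, ((pmSet V).card : ℝ) * Real.sqrt (2 * n) :=
          Finset.sum_le_sum fun i _ => colour_bound hm hn23 hcard (K i) (hK i) (hKcard i)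
      _ = (k : ℝ) * (((pmSet V).card : ℝ) * Real.sqrt (2 * n)) := by
          rw [Finset.sum_const, Finset.card_univ, Fintype.card_fin, nsmul_eq_mul]
      _ = ∑ _f ∈ pmSet V, (k : ℝ) * Real.sqrt (2 * n) := by
          rw [Finset.sum_const, nsmul_eq_mul]; ring
  obtain ⟨f, hf, hfle⟩ := Finset.exists_le_of_sum_le hne hsum
  exact ⟨f, hf, hfle⟩

/-- The subgraph associated to a fixed-point-free involution. -/
def pmSub (f : Equiv.Perm V) : (⊤ : SimpleGraph V).Subgraph where
  verts := Set.univ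
  Adj a b := (f a = b ∨ f b = a) ∧ a ≠ b
  adj_sub h := by simpa using h.2
  edge_vert _ := Set.mem_univ _
  symm := ⟨fun a b h => ⟨h.1.symm, Ne.symm h.2⟩⟩

lemma pmSub_isPerfectMatching {f : Equiv.Perm V} (hf : f ∈ pmSet V) :
    (pmSub f).IsPerfectMatching := by
  rw [mem_pmSet] at hf
  constructor
  · intro v _
    refine ⟨f v, ⟨Or.inl rfl, Ne.symm (hf.2 v)⟩, fun w hw => ?_⟩
    rcases hw.1 with h | h
    · exact h.symm
    · rw [← h, hf.1]
  · intro v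
    exact Set.mem_univ _

lemma pmSub_edgeSet {f : Equiv.Perm V} (hf : f ∈ pmSet V) (p : Sym2 V → Prop)
    [DecidablePred p] :
    ((pmSub f).edgeSet ∩ {e | p e}) = ↑((pmEdges f).filter p) := by
  rw [mem_pmSet] at hf
  ext e
  induction e with
  | _ a b =>
    simp only [Set.mem_inter_iff, SimpleGraph.Subgraph.mem_edgeSet, Set.mem_setOf_eq,
      Finset.coe_filter, pmSub]
    constructor
    · rintro ⟨⟨h1, h2⟩, h3⟩
      rcases h1 with h1 | h1
      · exact ⟨(mem_pmEdges hf.1).2 h1, h3⟩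
      · refine ⟨(mem_pmEdges hf.1).2 ?_, h3⟩
        rw [← h1, hf.1]
    · rintro ⟨h1, h3⟩
      have h2 := (mem_pmEdges hf.1).1 h1
      exact ⟨⟨Or.inl h2, fun h => hf.2 a (h ▸ h2)⟩, h3⟩


/-- For all positive integers `n` and `k`, and every colour-balanced
edge-colouring `c : E(K_{2nk}) → {1,…,k}`, there exists a perfect matching `M` of `K_{2nk}`
with `f(M) ≤ k·√(2n)`. -/
theorem almost_balanced_matching_sqrt_bound
    (n k : ℕ) (hn : 0 < n) (hk : 0 < k)
    (c : Sym2 (Fin (2 * n * k)) → Fin k)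
    (hc : ∀ i : Fin k,
      (((⊤ : SimpleGraph (Fin (2 * n * k))).edgeSet ∩ {e | c e = i}).ncard
        = (2 * n * k).choose 2 / k)) :
    ∃ M : (⊤ : SimpleGraph (Fin (2 * n * k))).Subgraph, M.IsPerfectMatching ∧
      ∑ i : Fin k, |((M.edgeSet ∩ {e | c e = i}).ncard : ℝ) - (n : ℝ)|
        ≤ (k : ℝ) * Real.sqrt (2 * n) := by
  classical
  have hcard : Fintype.card (Fin (2 * n * k)) = 2 * (n * k) := by
    rw [Fintype.card_fin]; ring
  set K : Fin k → Finset (Sym2 (Fin (2 * n * k))) :=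
    fun i => (sym2Of (Finset.univ : Finset (Fin (2 * n * k)))).filter (fun e => c e = i)
    with hKdef
  have hKsub : ∀ i, K i ⊆ sym2Of (Finset.univ : Finset (Fin (2 * n * k))) :=
    fun i => Finset.filter_subset _ _
  have hedge : ∀ e : Sym2 (Fin (2 * n * k)),
      e ∈ (⊤ : SimpleGraph (Fin (2 * n * k))).edgeSet
        ↔ e ∈ sym2Of (Finset.univ : Finset (Fin (2 * n * k))) := by
    intro e
    induction e with
    | _ a b =>
      rw [SimpleGraph.mem_edgeSet, SimpleGraph.top_adj, ← Finset.mem_coe]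
      rw [Finset.mem_coe, mem_sym2Of]
      simp
  have hKset : ∀ i, ((⊤ : SimpleGraph (Fin (2 * n * k))).edgeSet ∩ {e | c e = i})
      = ↑(K i) := by
    intro i
    ext e
    simp only [Set.mem_inter_iff, Set.mem_setOf_eq, hKdef, Finset.coe_filter, hedge e,
      Finset.mem_coe]
  have hchoose : (2 * n * k).choose 2 / k = n * (2 * (n * k) - 1) := by
    rw [Nat.choose_two_right]
    have h1 : 2 * n * k * (2 * n * k - 1) / 2 = n * k * (2 * n * k - 1) := by
      rw [show 2 * n * k * (2 * n * k - 1) = 2 * (n * k * (2 * n * k - 1)) by ring,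
        Nat.mul_div_cancel_left _ two_pos]
    rw [h1, show n * k * (2 * n * k - 1) = (n * (2 * n * k - 1)) * k by ring,
      Nat.mul_div_cancel _ hk]
    congr 2
    ring
  have hKcard : ∀ i, (K i).card = n * (2 * (n * k) - 1) := by
    intro i
    have h := hc i
    rw [hKset i, Set.ncard_coe_finset] at h
    rw [h, hchoose]
  have htrans : ∀ f ∈ pmSet (Fin (2 * n * k)), ∀ i,
      ((pmSub f).edgeSet ∩ {e | c e = i}).ncard
        = ((K i).filter (· ∈ pmEdges f)).card := by
    intro f hf i
    rw [pmSub_edgeSet hf (fun e => c e = i), Set.ncard_coe_finset]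
    congr 1
    ext e
    simp only [Finset.mem_filter, hKdef]
    constructor
    · rintro ⟨he, hci⟩
      exact ⟨⟨pmEdges_subset hf he, hci⟩, he⟩
    · rintro ⟨⟨_, hci⟩, he⟩
      exact ⟨he, hci⟩
  by_cases hk1 : k = 1
  · -- trivial : one colour
    subst hk1
    obtain ⟨f, hf⟩ := pmSet_nonempty (m := n * 1) (by omega) hcard
    refine ⟨pmSub f, pmSub_isPerfectMatching hf, ?_⟩
    rw [Fin.sum_univ_one]
    have hfill : ((K 0).filter (· ∈ pmEdges f)) = pmEdges f := by
      ext e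
      simp only [Finset.mem_filter, hKdef]
      constructor
      · rintro ⟨-, he⟩; exact he
      · intro he
        exact ⟨⟨pmEdges_subset hf he, Subsingleton.elim _ _⟩, he⟩
    rw [htrans f hf 0, hfill, card_pmEdges hcard hf]
    have : ((n * 1 : ℕ) : ℝ) - (n : ℝ) = 0 := by push_cast; ring
    rw [this, abs_zero, Nat.cast_one, one_mul]
    positivity
  · by_cases hn12 : n = 1 ∧ k = 2
    · -- trivial : n = 1, k = 2
      obtain ⟨hn1, hk2⟩ := hn12
      subst hn1; subst hk2
      obtain ⟨f, hf⟩ := pmSet_nonempty (m := 1 * 2) (by norm_num) hcard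
      refine ⟨pmSub f, pmSub_isPerfectMatching hf, ?_⟩
      have hbd : ∀ i : Fin 2, |((((K i).filter (· ∈ pmEdges f)).card : ℕ) : ℝ) - (1 : ℕ)| ≤ 1 := by
        intro i
        have h2 : ((K i).filter (· ∈ pmEdges f)).card ≤ 2 := by
          calc ((K i).filter (· ∈ pmEdges f)).card ≤ (pmEdges f).card :=
                Finset.card_le_card fun e he => (Finset.mem_filter.1 he).2
            _ = 2 := by rw [card_pmEdges hcard hf]
        have h2' : ((((K i).filter (· ∈ pmEdges f)).card : ℕ) : ℝ) ≤ 2 := by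
          exact_mod_cast h2
        have h0 : (0 : ℝ) ≤ ((((K i).filter (· ∈ pmEdges f)).card : ℕ) : ℝ) := by positivity
        rw [abs_le]
        push_cast
        constructor <;> linarith
      have hsqrt : (1 : ℝ) ≤ Real.sqrt (2 * (1 : ℕ)) := by
        rw [show ((2 : ℝ) * ((1 : ℕ) : ℝ)) = 2 by norm_num]
        nlinarith [Real.sq_sqrt (show (0:ℝ) ≤ 2 by norm_num), Real.sqrt_nonneg 2]
      rw [Fin.sum_univ_two, htrans f hf 0, htrans f hf 1]
      have b0 := hbd 0
      have b1 := hbd 1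
      push_cast at b0 b1 hsqrt ⊢
      linarith [b0, b1, hsqrt]
    · -- main case
      have hk2 : 2 ≤ k := by omega
      have hm2n : 2 * n ≤ n * k := by
        calc 2 * n = n * 2 := by ring
          _ ≤ n * k := Nat.mul_le_mul_left n hk2
      have hn23 : 2 * n + 3 ≤ 2 * (n * k) := by
        by_cases hn1 : n = 1
        · have hknot2 : k ≠ 2 := fun h => hn12 ⟨hn1, h⟩
          subst hn1
          omega
        · have h2n : 2 ≤ n := by omega
          omega
      have hm2 : 2 ≤ n * k := by omega
      obtain ⟨f, hf, hbound⟩ := master hm2 hn23 hcard K hKsub hKcard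
      refine ⟨pmSub f, pmSub_isPerfectMatching hf, ?_⟩
      calc ∑ i : Fin k, |(((pmSub f).edgeSet ∩ {e | c e = i}).ncard : ℝ) - (n : ℝ)|
          = ∑ i : Fin k, |((((K i).filter (· ∈ pmEdges f)).card : ℕ) : ℝ) - (n : ℝ)| := by
            refine Finset.sum_congr rfl fun i _ => ?_
            rw [htrans f hf i]
        _ ≤ (k : ℝ) * Real.sqrt (2 * n) := hbound
end

section
/- For all positive integers n and k, and every colour-balanced edge-colouring c : E(K_{2nk}) → {1,…,k}, there exists a perfect matching M of K_{2nk} with f(M) ≤ 3k·√(k·n·log(2k)), where log denotes the natural logarithm. -/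
open Finset Equiv

namespace PRaux
variable {α : Type*} [Fintype α] [DecidableEq α]

/-- Predicate: `σ` is a fixed-point-free involution. -/
def IsM (σ : Equiv.Perm α) : Prop := Function.Involutive σ ∧ ∀ v, σ v ≠ v

open scoped Classical in
/-- The finset of fixed-point-free involutions. -/
noncomputable def F (α : Type*) [Fintype α] [DecidableEq α] : Finset (Equiv.Perm α) :=
  univ.filter IsM

lemma mem_F {σ : Equiv.Perm α} : σ ∈ F α ↔ IsM σ := by
  classical simp [F]

/-- The edge set (as a finset) of the matching given by `σ`. -/
def edges (σ : Equiv.Perm α) : Finset (Sym2 α) := univ.image (fun v => s(v, σ v))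

lemma mem_edges {σ : Equiv.Perm α} (hσ : IsM σ) {a b : α} (hab : a ≠ b) :
    s(a, b) ∈ edges σ ↔ σ a = b := by
  constructor
  · intro h
    simp only [edges, mem_image, mem_univ, true_and] at h
    obtain ⟨v, hv⟩ := h
    rw [Sym2.eq_iff] at hv
    rcases hv with ⟨h1, h2⟩ | ⟨h1, h2⟩
    · rw [← h1, h2]
    · rw [← h2, ← h1, hσ.1]
  · intro h
    simp only [edges, mem_image, mem_univ, true_and]
    exact ⟨a, by rw [h]⟩

lemma edges_not_isDiag {σ : Equiv.Perm α} (hσ : IsM σ) {e : Sym2 α} (he : e ∈ edges σ) :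
    ¬ e.IsDiag := by
  simp only [edges, mem_image, mem_univ, true_and] at he
  obtain ⟨v, hv⟩ := he
  rw [← hv]
  simpa using (hσ.2 v).symm

lemma eq_of_mem_edges_of_mem {σ : Equiv.Perm α} (hσ : IsM σ) {e : Sym2 α} {v : α}
    (he : e ∈ edges σ) (hv : v ∈ e) : e = s(v, σ v) := by
  simp only [edges, mem_image, mem_univ, true_and] at he
  obtain ⟨u, hu⟩ := he
  rw [← hu] at hv ⊢
  rw [Sym2.mem_iff] at hv
  rcases hv with rfl | rfl
  · rfl
  · rw [hσ.1 u, Sym2.eq_swap]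

/-- Distinct edges of a matching are vertex-disjoint. -/
lemma edges_disj {σ : Equiv.Perm α} (hσ : IsM σ) {e f : Sym2 α}
    (he : e ∈ edges σ) (hf : f ∈ edges σ) (hne : e ≠ f) {v : α} (hve : v ∈ e) : v ∉ f := by
  intro hvf
  exact hne ((eq_of_mem_edges_of_mem hσ he hve).trans (eq_of_mem_edges_of_mem hσ hf hvf).symm)

lemma card_edges {σ : Equiv.Perm α} (hσ : IsM σ) :
    2 * (edges σ).card = Fintype.card α := by
  classical
  have h := Finset.card_eq_sum_card_image (fun v => s(v, σ v)) (univ : Finset α)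
  rw [← edges] at h
  have hfib : ∀ e ∈ edges σ, (univ.filter (fun v => s(v, σ v) = e)).card = 2 := by
    intro e he
    simp only [edges, mem_image, mem_univ, true_and] at he
    obtain ⟨u, hu⟩ := he
    have : univ.filter (fun v => s(v, σ v) = e) = {u, σ u} := by
      ext v
      simp only [mem_filter, mem_univ, true_and, mem_insert, mem_singleton, ← hu]
      constructor
      · intro h
        rw [Sym2.eq_iff] at h
        rcases h with ⟨h1, _⟩ | ⟨h1, _⟩
        · exact Or.inl h1
        · exact Or.inr h1
      · rintro (rfl | rfl)
        · rfl
        · rw [hσ.1 u, Sym2.eq_swap]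
    rw [this, Finset.card_insert_of_notMem (by simpa using (hσ.2 u).symm), Finset.card_singleton]
  rw [Finset.sum_congr rfl hfib, Finset.sum_const, smul_eq_mul] at h
  rw [Finset.card_univ] at h
  omega


lemma sym2_map_inj {β : Type*} {f : α → β} (hf : Function.Injective f) :
    Function.Injective (Sym2.map f) := by
  intro e e' h
  induction e using Sym2.ind with | _ a b =>
  induction e' using Sym2.ind with | _ c d =>
  rw [Sym2.map_pair_eq, Sym2.map_pair_eq, Sym2.eq_iff] at h
  rw [Sym2.eq_iff]
  rcases h with ⟨h1, h2⟩ | ⟨h1, h2⟩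
  · exact Or.inl ⟨hf h1, hf h2⟩
  · exact Or.inr ⟨hf h1, hf h2⟩

lemma isM_conj {σ : Equiv.Perm α} (τ : Equiv.Perm α) (hσ : IsM σ) :
    IsM (τ * σ * τ⁻¹) := by
  constructor
  · intro v
    simp [Equiv.Perm.mul_apply, hσ.1 (τ.symm v)]
  · intro v h
    simp only [Equiv.Perm.mul_apply] at h
    exact hσ.2 (τ⁻¹ v) (τ.injective (h.trans (by simp)))

lemma mem_edges_conj {σ : Equiv.Perm α} (τ : Equiv.Perm α) {e : Sym2 α} :
    e ∈ edges σ ↔ Sym2.map τ e ∈ edges (τ * σ * τ⁻¹) := by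
  simp only [edges, mem_image, mem_univ, true_and]
  constructor
  · rintro ⟨v, rfl⟩
    exact ⟨τ v, by simp [Equiv.Perm.mul_apply, Sym2.map_pair_eq]⟩
  · rintro ⟨v, hv⟩
    refine ⟨τ⁻¹ v, ?_⟩
    apply sym2_map_inj τ.injective
    rw [← hv, Sym2.map_pair_eq]
    simp [Equiv.Perm.mul_apply]

open scoped Classical in
/-- Number of f.p.f. involutions containing a given edge. -/
noncomputable def cnt (e : Sym2 α) : ℕ := ((F α).filter (fun σ => e ∈ edges σ)).card

open scoped Classical in
/-- Number of f.p.f. involutions containing a given pair of edges. -/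
noncomputable def cnt2 (p : Sym2 α × Sym2 α) : ℕ :=
  ((F α).filter (fun σ => p.1 ∈ edges σ ∧ p.2 ∈ edges σ)).card

lemma cnt_conj (τ : Equiv.Perm α) (e : Sym2 α) : cnt (Sym2.map τ e) = cnt e := by
  classical
  unfold cnt
  apply Finset.card_bij' (fun σ _ => τ⁻¹ * σ * τ) (fun σ _ => τ * σ * τ⁻¹)
  · intro σ hσ
    simp only [mem_filter, mem_F] at hσ ⊢
    refine ⟨by simpa using isM_conj τ⁻¹ hσ.1, ?_⟩
    have := (mem_edges_conj (σ := τ⁻¹ * σ * τ) τ (e := e)).mp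
    apply (mem_edges_conj (σ := τ⁻¹ * σ * τ) τ (e := e)).mpr
    have : τ * (τ⁻¹ * σ * τ) * τ⁻¹ = σ := by group
    rw [this]
    exact hσ.2
  · intro σ hσ
    simp only [mem_filter, mem_F] at hσ ⊢
    refine ⟨isM_conj τ hσ.1, ?_⟩
    exact (mem_edges_conj τ).mp hσ.2
  · intro σ _; group
  · intro σ _; group

lemma cnt2_conj (τ : Equiv.Perm α) (e f : Sym2 α) :
    cnt2 (Sym2.map τ e, Sym2.map τ f) = cnt2 (e, f) := by
  classical
  unfold cnt2
  apply Finset.card_bij' (fun σ _ => τ⁻¹ * σ * τ) (fun σ _ => τ * σ * τ⁻¹)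
  · intro σ hσ
    simp only [mem_filter, mem_F] at hσ ⊢
    have hid : τ * (τ⁻¹ * σ * τ) * τ⁻¹ = σ := by group
    refine ⟨by simpa using isM_conj τ⁻¹ hσ.1, ?_, ?_⟩
    · apply (mem_edges_conj τ).mpr; rw [hid]; exact hσ.2.1
    · apply (mem_edges_conj τ).mpr; rw [hid]; exact hσ.2.2
  · intro σ hσ
    simp only [mem_filter, mem_F] at hσ ⊢
    exact ⟨isM_conj τ hσ.1, (mem_edges_conj τ).mp hσ.2.1, (mem_edges_conj τ).mp hσ.2.2⟩
  · intro σ _; group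
  · intro σ _; group

/-- A permutation sending two given points to two given points. -/
lemma exists_perm_two {a b a' b' : α} (hab : a ≠ b) (hab' : a' ≠ b') :
    ∃ τ : Equiv.Perm α, τ a = a' ∧ τ b = b' := by
  set τ1 := Equiv.swap a a' with hτ1
  set τ2 := Equiv.swap (τ1 b) b' with hτ2
  refine ⟨τ2 * τ1, ?_, ?_⟩
  · have h1 : τ1 a = a' := Equiv.swap_apply_left a a'
    have hne1 : τ1 b ≠ a' := by
      exact fun h => hab (τ1.injective (h.trans h1.symm)).symm
    simp only [Equiv.Perm.mul_apply, h1]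
    exact Equiv.swap_apply_of_ne_of_ne (Ne.symm hne1) hab'
  · simp only [Equiv.Perm.mul_apply]
    exact Equiv.swap_apply_left _ _


private lemma adjust (τ : Equiv.Perm α) (x y : α) :
    (Equiv.swap (τ x) y * τ) x = y ∧
    ∀ z, z ≠ x → τ z ≠ y → (Equiv.swap (τ x) y * τ) z = τ z := by
  constructor
  · simp [Equiv.Perm.mul_apply]
  · intro z hz hzy
    simp only [Equiv.Perm.mul_apply]
    exact Equiv.swap_apply_of_ne_of_ne (fun h => hz (τ.injective h)) hzy

lemma exists_perm_four {a b c d a' b' c' d' : α}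
    (h1 : a ≠ b) (h2 : a ≠ c) (h3 : a ≠ d) (h4 : b ≠ c) (h5 : b ≠ d) (h6 : c ≠ d)
    (h1' : a' ≠ b') (h2' : a' ≠ c') (h3' : a' ≠ d') (h4' : b' ≠ c') (h5' : b' ≠ d')
    (h6' : c' ≠ d') :
    ∃ τ : Equiv.Perm α, τ a = a' ∧ τ b = b' ∧ τ c = c' ∧ τ d = d' := by
  obtain ⟨τ1, ha1, hb1⟩ := exists_perm_two h1 h1'
  set τ2 := Equiv.swap (τ1 c) c' * τ1 with hτ2
  have hc2 : τ2 c = c' := (adjust τ1 c c').1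
  have ha2 : τ2 a = a' := by rw [hτ2, (adjust τ1 c c').2 a h2 (by rw [ha1]; exact h2')]; exact ha1
  have hb2 : τ2 b = b' := by rw [hτ2, (adjust τ1 c c').2 b h4 (by rw [hb1]; exact h4')]; exact hb1
  set τ3 := Equiv.swap (τ2 d) d' * τ2 with hτ3
  refine ⟨τ3, ?_, ?_, ?_, (adjust τ2 d d').1⟩
  · rw [hτ3, (adjust τ2 d d').2 a h3 (by rw [ha2]; exact h3')]; exact ha2
  · rw [hτ3, (adjust τ2 d d').2 b h5 (by rw [hb2]; exact h5')]; exact hb2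
  · rw [hτ3, (adjust τ2 d d').2 c h6 (by rw [hc2]; exact h6')]; exact hc2

lemma cnt_const {e e' : Sym2 α} (he : ¬e.IsDiag) (he' : ¬e'.IsDiag) : cnt e = cnt e' := by
  induction e using Sym2.ind with | _ a b =>
  induction e' using Sym2.ind with | _ a' b' =>
  rw [Sym2.mk_isDiag_iff] at he he'
  obtain ⟨τ, hτa, hτb⟩ := exists_perm_two he he'
  rw [← hτa, ← hτb, ← Sym2.map_pair_eq, cnt_conj]

/-- Vertex-disjointness of two elements of `Sym2 α`. -/
def Sep (e f : Sym2 α) : Prop := ∀ v ∈ e, v ∉ f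

lemma sep_distinct {a b c d : α} (h : Sep s(a, b) s(c, d)) :
    a ≠ c ∧ a ≠ d ∧ b ≠ c ∧ b ≠ d := by
  have ha := h a (Sym2.mem_mk_left a b)
  have hb := h b (Sym2.mem_mk_right a b)
  rw [Sym2.mem_iff] at ha hb
  push_neg at ha hb
  exact ⟨ha.1, ha.2, hb.1, hb.2⟩

lemma cnt2_const {e f e' f' : Sym2 α} (he : ¬e.IsDiag) (hf : ¬f.IsDiag)
    (he' : ¬e'.IsDiag) (hf' : ¬f'.IsDiag) (hs : Sep e f) (hs' : Sep e' f') :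
    cnt2 (e, f) = cnt2 (e', f') := by
  induction e using Sym2.ind with | _ a b =>
  induction f using Sym2.ind with | _ c d =>
  induction e' using Sym2.ind with | _ a2 b2 =>
  induction f' using Sym2.ind with | _ c2 d2 =>
  rw [Sym2.mk_isDiag_iff] at he hf he' hf'
  obtain ⟨g1, g2, g3, g4⟩ := sep_distinct hs
  obtain ⟨g1', g2', g3', g4'⟩ := sep_distinct hs'
  obtain ⟨τ, hτ1, hτ2, hτ3, hτ4⟩ := exists_perm_four he g1 g2 g3 g4 hf he' g1' g2' g3' g4' hf'
  rw [← hτ1, ← hτ2, ← hτ3, ← hτ4, ← Sym2.map_pair_eq, ← Sym2.map_pair_eq, cnt2_conj]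

open scoped Classical in
lemma sum_cnt (s : Finset (Sym2 α)) :
    ∑ e ∈ s, cnt e = ∑ σ ∈ F α, (s ∩ edges σ).card := by
  unfold cnt
  simp_rw [Finset.card_filter]
  rw [Finset.sum_comm]
  refine Finset.sum_congr rfl fun σ _ => ?_
  rw [← Finset.card_filter, Finset.filter_mem_eq_inter]

open scoped Classical in
lemma sum_cnt2 (s : Finset (Sym2 α × Sym2 α)) :
    ∑ p ∈ s, cnt2 p
      = ∑ σ ∈ F α, (s.filter (fun p => p.1 ∈ edges σ ∧ p.2 ∈ edges σ)).card := by
  unfold cnt2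
  simp_rw [Finset.card_filter]
  exact Finset.sum_comm

open scoped Classical in
/-- All edges of the complete graph. -/
noncomputable def allE (α : Type*) [DecidableEq α] [Fintype α] : Finset (Sym2 α) :=
  univ.filter (fun e => ¬ e.IsDiag)

lemma mem_allE {e : Sym2 α} : e ∈ allE α ↔ ¬ e.IsDiag := by
  classical simp [allE]

lemma edges_subset_allE {σ : Equiv.Perm α} (hσ : IsM σ) : edges σ ⊆ allE α :=
  fun e he => mem_allE.mpr (edges_not_isDiag hσ he)

lemma allE_card : (allE α).card = (Fintype.card α).choose 2 := by
  classical
  rw [← Sym2.card_subtype_not_diag (α := α), Fintype.card_subtype]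
  rfl

open scoped Classical in
/-- All ordered pairs of disjoint edges. -/
noncomputable def Dall (α : Type*) [DecidableEq α] [Fintype α] :
    Finset (Sym2 α × Sym2 α) :=
  ((allE α) ×ˢ (allE α)).filter (fun p => Sep p.1 p.2)

open scoped Classical in
lemma Dall_card_eq_sum :
    (Dall α).card = ∑ e ∈ allE α, ((allE α).filter (fun f => Sep e f)).card := by
  classical
  unfold Dall
  rw [Finset.card_filter, Finset.sum_product]
  exact Finset.sum_congr rfl fun e _ => (Finset.card_filter _ _).symm

lemma edges_card {σ : Equiv.Perm α} (hσ : IsM σ) {N : ℕ} (hN : Fintype.card α = 2 * N) :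
    (edges σ).card = N := by
  have := card_edges hσ; omega

lemma cnt_mul_allE {N : ℕ} (hN : Fintype.card α = 2 * N) {e : Sym2 α} (he : ¬e.IsDiag) :
    (allE α).card * cnt e = (F α).card * N := by
  classical
  have h := sum_cnt (allE α)
  have h2 : ∀ σ ∈ F α, (allE α ∩ edges σ).card = N := fun σ hσ => by
    rw [Finset.inter_eq_right.mpr (edges_subset_allE (mem_F.mp hσ))]
    exact edges_card (mem_F.mp hσ) hN
  rw [Finset.sum_congr rfl h2, Finset.sum_const, smul_eq_mul] at h
  rw [Finset.sum_congr rfl (fun e' he' => cnt_const (mem_allE.mp he') he),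
    Finset.sum_const, smul_eq_mul] at h
  exact h

lemma sym2_exists_mem (e : Sym2 α) : ∃ v, v ∈ e := by
  induction e using Sym2.ind with | _ a b => exact ⟨a, Sym2.mem_mk_left a b⟩

open scoped Classical in
lemma mem_Dall {p : Sym2 α × Sym2 α} :
    p ∈ Dall α ↔ ¬p.1.IsDiag ∧ ¬p.2.IsDiag ∧ Sep p.1 p.2 := by
  simp [Dall, Finset.mem_product, mem_allE, and_assoc]

open scoped Classical in
lemma sep_offdiag {σ : Equiv.Perm α} (hσ : IsM σ) :
    (Dall α).filter (fun p => p.1 ∈ edges σ ∧ p.2 ∈ edges σ) = (edges σ).offDiag := by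
  ext p
  obtain ⟨e, f⟩ := p
  simp only [Finset.mem_filter, mem_Dall, Finset.mem_offDiag]
  constructor
  · rintro ⟨⟨hd1, hd2, hsep⟩, h1, h2⟩
    refine ⟨h1, h2, ?_⟩
    rintro rfl
    obtain ⟨v, hv⟩ := sym2_exists_mem e
    exact hsep v hv hv
  · rintro ⟨h1, h2, hne⟩
    exact ⟨⟨edges_not_isDiag hσ h1, edges_not_isDiag hσ h2,
      fun v hv => edges_disj hσ h1 h2 hne hv⟩, h1, h2⟩

lemma cnt2_mul {N : ℕ} (hN : Fintype.card α = 2 * N) {p : Sym2 α × Sym2 α}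
    (hp : p ∈ Dall α) :
    (Dall α).card * cnt2 p = (F α).card * (N * N - N) := by
  classical
  have h := sum_cnt2 (Dall α)
  have h2 : ∀ σ ∈ F α,
      ((Dall α).filter (fun q => q.1 ∈ edges σ ∧ q.2 ∈ edges σ)).card = N * N - N :=
    fun σ hσ => by
      rw [sep_offdiag (mem_F.mp hσ), Finset.offDiag_card, edges_card (mem_F.mp hσ) hN]
  rw [Finset.sum_congr rfl h2, Finset.sum_const, smul_eq_mul] at h
  have h3 : ∀ q ∈ Dall α, cnt2 q = cnt2 p := fun q hq => by
    obtain ⟨d1, d2, hs⟩ := mem_Dall.mp hq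
    obtain ⟨e1, e2, hs'⟩ := mem_Dall.mp hp
    obtain ⟨q1, q2⟩ := q
    obtain ⟨p1, p2⟩ := p
    exact cnt2_const d1 d2 e1 e2 hs hs'
  rw [Finset.sum_congr rfl h3, Finset.sum_const, smul_eq_mul] at h
  exact h

lemma cnt2_diag (e : Sym2 α) : cnt2 (e, e) = cnt e := by
  classical
  unfold cnt2 cnt
  congr 1
  exact Finset.filter_congr fun σ _ => by simp

lemma cnt2_zero {e f : Sym2 α} (hne : e ≠ f) (hnsep : ¬ Sep e f) : cnt2 (e, f) = 0 := by
  classical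
  unfold cnt2
  rw [Finset.card_eq_zero, Finset.filter_eq_empty_iff]
  rintro σ hσ ⟨he, hf⟩
  exact hnsep fun v hv => edges_disj (mem_F.mp hσ) he hf hne hv

lemma mem_sym2_image {a : α} {f : Sym2 α} (hf : ¬f.IsDiag) (ha : a ∈ f) :
    f ∈ (univ.erase a).image (fun x => s(a, x)) := by
  induction f using Sym2.ind with | _ u v =>
  rw [Sym2.mk_isDiag_iff] at hf
  rw [Sym2.mem_iff] at ha
  simp only [Finset.mem_image, Finset.mem_erase, Finset.mem_univ, and_true]
  rcases ha with rfl | rfl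
  · exact ⟨v, fun h => hf h.symm, rfl⟩
  · exact ⟨u, fun h => hf h, Sym2.eq_swap⟩

open scoped Classical in
lemma sep_filter_lb {e : Sym2 α} (he : e ∈ allE α) :
    (allE α).card + 3 ≤ ((allE α).filter (fun f => Sep e f)).card + 2 * Fintype.card α := by
  classical
  induction e using Sym2.ind with | _ a b =>
  have hab : a ≠ b := by simpa [Sym2.mk_isDiag_iff] using mem_allE.mp he
  set X := (allE α).filter (fun f => a ∈ f) with hX
  set Y := (allE α).filter (fun f => b ∈ f) with hY
  have hXle : X.card + 1 ≤ Fintype.card α := by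
    have h1 : X ⊆ (univ.erase a).image (fun x => s(a, x)) := fun f hf => by
      rw [hX, Finset.mem_filter] at hf
      exact mem_sym2_image (mem_allE.mp hf.1) hf.2
    calc X.card + 1 ≤ ((univ.erase a).image (fun x => s(a, x))).card + 1 :=
          by exact Nat.add_le_add_right (Finset.card_le_card h1) 1
      _ ≤ (univ.erase a).card + 1 := Nat.add_le_add_right Finset.card_image_le 1
      _ = Fintype.card α := by
          rw [Finset.card_erase_of_mem (Finset.mem_univ a), Finset.card_univ]
          have : 0 < Fintype.card α := Fintype.card_pos_iff.mpr ⟨a⟩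
          omega
  have hYle : Y.card + 1 ≤ Fintype.card α := by
    have h1 : Y ⊆ (univ.erase b).image (fun x => s(b, x)) := fun f hf => by
      rw [hY, Finset.mem_filter] at hf
      exact mem_sym2_image (mem_allE.mp hf.1) hf.2
    calc Y.card + 1 ≤ ((univ.erase b).image (fun x => s(b, x))).card + 1 :=
          by exact Nat.add_le_add_right (Finset.card_le_card h1) 1
      _ ≤ (univ.erase b).card + 1 := Nat.add_le_add_right Finset.card_image_le 1
      _ = Fintype.card α := by
          rw [Finset.card_erase_of_mem (Finset.mem_univ b), Finset.card_univ]
          have : 0 < Fintype.card α := Fintype.card_pos_iff.mpr ⟨a⟩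
          omega
  have hsub : (allE α).filter (fun f => ¬ Sep s(a, b) f) ⊆ X ∪ Y := by
    intro f hf
    rw [Finset.mem_filter] at hf
    obtain ⟨hfa, hfn⟩ := hf
    unfold Sep at hfn
    push_neg at hfn
    obtain ⟨v, hv1, hv2⟩ := hfn
    rw [Sym2.mem_iff] at hv1
    rw [Finset.mem_union, hX, hY, Finset.mem_filter, Finset.mem_filter]
    rcases hv1 with rfl | rfl
    · exact Or.inl ⟨hfa, hv2⟩
    · exact Or.inr ⟨hfa, hv2⟩
  have hmem : s(a, b) ∈ X ∩ Y := by
    rw [Finset.mem_inter, hX, hY, Finset.mem_filter, Finset.mem_filter]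
    exact ⟨⟨he, Sym2.mem_mk_left a b⟩, he, Sym2.mem_mk_right a b⟩
  have h5 := Finset.card_union_add_card_inter X Y
  have h6 : 1 ≤ (X ∩ Y).card := Finset.card_pos.mpr ⟨s(a, b), hmem⟩
  have h7 := Finset.card_le_card hsub
  have h8 := Finset.card_filter_add_card_filter_not (s := allE α)
    (p := fun f => Sep s(a, b) f)
  have h9 := Finset.card_union_le X Y
  omega

open scoped Classical in
lemma Dall_lb :
    (allE α).card * ((allE α).card + 3) ≤ (Dall α).card + (allE α).card * (2 * Fintype.card α) := by
  classical
  rw [Dall_card_eq_sum]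
  have h := Finset.sum_le_sum (s := allE α)
    (f := fun e => (allE α).card + 3)
    (g := fun e => ((allE α).filter (fun f => Sep e f)).card + 2 * Fintype.card α)
    (fun e he => sep_filter_lb he)
  rw [Finset.sum_const, smul_eq_mul, Finset.sum_add_distrib, Finset.sum_const, smul_eq_mul] at h
  calc (allE α).card * ((allE α).card + 3) = (allE α).card * ((allE α).card + 3) := rfl
    _ ≤ _ := by omega

lemma F_nonempty {N : ℕ} (hN : Fintype.card α = 2 * N) (hN0 : 0 < N) :
    (F α).Nonempty := by
  haveI : NeZero (2 * N) := ⟨by omega⟩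
  have e := Fintype.equivFinOfCardEq hN
  set x₀ : Fin (2 * N) := ⟨N, by omega⟩ with hx₀
  have hx : x₀ + x₀ = 0 := by
    apply Fin.ext
    rw [Fin.add_def]
    show (N + N) % (2 * N) = ((0 : Fin (2 * N)) : ℕ)
    rw [show N + N = 2 * N by omega, Nat.mod_self, Fin.val_zero]
  refine ⟨e.trans ((Equiv.addLeft x₀).trans e.symm), mem_F.mpr ⟨?_, ?_⟩⟩
  · intro v
    simp only [Equiv.trans_apply, Equiv.coe_addLeft, Equiv.apply_symm_apply]
    rw [← add_assoc, hx, zero_add, Equiv.symm_apply_apply]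
  · intro v h
    simp only [Equiv.trans_apply, Equiv.coe_addLeft] at h
    have h2 := congrArg e h
    rw [Equiv.apply_symm_apply] at h2
    have h3 : x₀ = 0 := by
      have := add_right_cancel (a := x₀) (b := e v) (c := 0) ?_
      · exact this
      · rw [h2, zero_add]
    rw [Fin.ext_iff] at h3
    simp [hx₀] at h3
    omega

/-- The perfect matching subgraph associated to a fixed-point-free involution. -/
def toSub (σ : Equiv.Perm α) (hσ : IsM σ) : (⊤ : SimpleGraph α).Subgraph where
  verts := Set.univ
  Adj v w := σ v = w ∧ v ≠ w
  adj_sub := fun h => h.2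
  edge_vert := fun _ => Set.mem_univ _
  symm := ⟨fun v w h => by
    obtain ⟨h1, h2⟩ := h
    subst h1
    exact ⟨hσ.1 v, hσ.2 v⟩⟩

lemma toSub_isPM (σ : Equiv.Perm α) (hσ : IsM σ) : (toSub σ hσ).IsPerfectMatching := by
  rw [SimpleGraph.Subgraph.isPerfectMatching_iff]
  intro v
  refine ⟨σ v, ⟨rfl, fun h => hσ.2 v h.symm⟩, ?_⟩
  rintro w ⟨h1, _⟩
  exact h1.symm

lemma toSub_edgeSet (σ : Equiv.Perm α) (hσ : IsM σ) :
    (toSub σ hσ).edgeSet = ↑(edges σ) := by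
  ext e
  induction e using Sym2.ind with | _ v w =>
  rw [SimpleGraph.Subgraph.mem_edgeSet, Finset.mem_coe]
  show (σ v = w ∧ v ≠ w) ↔ _
  constructor
  · rintro ⟨h1, h2⟩
    exact (mem_edges hσ h2).mpr h1
  · intro h
    have hvw : v ≠ w := by
      have := edges_not_isDiag hσ h
      simpa [Sym2.mk_isDiag_iff] using this
    exact ⟨(mem_edges hσ hvw).mp h, hvw⟩

lemma ncard_inter (σ : Equiv.Perm α) (hσ : IsM σ) (p : Sym2 α → Prop) [DecidablePred p] :
    ((toSub σ hσ).edgeSet ∩ {e | p e}).ncard = ((edges σ).filter p).card := by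
  rw [toSub_edgeSet, ← Set.ncard_coe_finset]
  congr 1
  ext e
  simp [Finset.mem_filter, Finset.mem_coe]
end PRaux

set_option maxHeartbeats 2000000 in
open PRaux in
/-- Pardey–Rautenbach. -/
theorem almost_balanced_matching_pardey_rautenbach
    (n k : ℕ) (hn : 0 < n) (hk : 0 < k)
    (c : Sym2 (Fin (2 * n * k)) → Fin k)
    (hc : ∀ i : Fin k,
      (((⊤ : SimpleGraph (Fin (2 * n * k))).edgeSet ∩ {e | c e = i}).ncard
        = (2 * n * k).choose 2 / k)) :
    ∃ M : (⊤ : SimpleGraph (Fin (2 * n * k))).Subgraph, M.IsPerfectMatching ∧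
      ∑ i : Fin k, |((M.edgeSet ∩ {e | c e = i}).ncard : ℝ) - (n : ℝ)|
        ≤ 3 * (k : ℝ) * Real.sqrt ((k : ℝ) * n * Real.log (2 * k)) := by
  classical
  have hcard : Fintype.card (Fin (2 * n * k)) = 2 * (n * k) := by
    rw [Fintype.card_fin]; ring
  have hNpos : 0 < n * k := Nat.mul_pos hn hk
  obtain ⟨σ₀, hσ₀⟩ := F_nonempty hcard hNpos
  have hRHS0 : 0 ≤ 3 * (k : ℝ) * Real.sqrt ((k : ℝ) * n * Real.log (2 * k)) := by positivity
  rcases Nat.lt_or_ge k 2 with hk2 | hk2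
  · -- trivial case k = 1
    have hk1 : k = 1 := by omega
    subst hk1
    refine ⟨toSub σ₀ (mem_F.mp hσ₀), toSub_isPM _ _, ?_⟩
    have hfil : ((edges σ₀).filter (fun e => c e = (0 : Fin 1))) = edges σ₀ :=
      Finset.filter_true_of_mem (fun e _ => Subsingleton.elim _ _)
    rw [Fin.sum_univ_one, ncard_inter, hfil, edges_card (mem_F.mp hσ₀) hcard]
    have : ((n * 1 : ℕ) : ℝ) - (n : ℝ) = 0 := by push_cast; ring
    rw [this, abs_zero]
    exact hRHS0
  · -- main case k ≥ 2
    have hnk2 : 2 ≤ n * k := le_trans hk2 (Nat.le_mul_of_pos_left k hn)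
    obtain ⟨m, hm⟩ : ∃ m, n * k = m + 2 := ⟨n * k - 2, by omega⟩
    have h2nk : 2 * n * k = 2 * m + 4 := by
      have : 2 * n * k = 2 * (n * k) := by ring
      omega
    set T := (F (Fin (2 * n * k))).card with hT
    have hT0 : 0 < T := Finset.card_pos.mpr ⟨σ₀, hσ₀⟩
    -- edge counts
    have hallE : (allE (Fin (2 * n * k))).card = (m + 2) * (2 * m + 3) := by
      rw [allE_card, Fintype.card_fin, h2nk, Nat.choose_two_right,
        show (2 * m + 4) * (2 * m + 4 - 1) = 2 * ((m + 2) * (2 * m + 3)) by rw [show 2 * m + 4 - 1 = 2 * m + 3 by omega]; ring,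
        Nat.mul_div_cancel_left _ (by norm_num)]
    set E : Fin k → Finset (Sym2 (Fin (2 * n * k))) :=
      fun i => (allE (Fin (2 * n * k))).filter (fun e => c e = i) with hE
    have hEcard : ∀ i, (E i).card = n * (2 * m + 3) := by
      intro i
      have hset : ((⊤ : SimpleGraph (Fin (2 * n * k))).edgeSet ∩ {e | c e = i})
          = ↑(E i) := by
        rw [SimpleGraph.edgeSet_top]
        ext e
        simp only [Set.mem_inter_iff, Set.mem_setOf_eq, hE, Finset.coe_filter,
          mem_allE, Set.mem_compl_iff, Sym2.mem_diagSet]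
      have h1 := hc i
      rw [hset, Set.ncard_coe_finset] at h1
      have hch : (2 * n * k).choose 2 = (n * (2 * m + 3)) * k := by
        rw [h2nk, Nat.choose_two_right,
          show (2 * m + 4) * (2 * m + 4 - 1) = 2 * ((m + 2) * (2 * m + 3)) by rw [show 2 * m + 4 - 1 = 2 * m + 3 by omega]; ring,
          Nat.mul_div_cancel_left _ (by norm_num)]
        have : (m + 2) * (2 * m + 3) = (n * k) * (2 * m + 3) := by rw [hm]
        rw [this]; ring
      rw [h1, hch, Nat.mul_div_cancel _ hk]
    -- reference edge and pair
    have h4 : 4 ≤ 2 * n * k := by omega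
    obtain ⟨x0, hx0v⟩ : ∃ x : Fin (2 * n * k), x.val = 0 := ⟨⟨0, by omega⟩, rfl⟩
    obtain ⟨x1, hx1v⟩ : ∃ x : Fin (2 * n * k), x.val = 1 := ⟨⟨1, by omega⟩, rfl⟩
    obtain ⟨x2, hx2v⟩ : ∃ x : Fin (2 * n * k), x.val = 2 := ⟨⟨2, by omega⟩, rfl⟩
    obtain ⟨x3, hx3v⟩ : ∃ x : Fin (2 * n * k), x.val = 3 := ⟨⟨3, by omega⟩, rfl⟩
    have hd0 : ¬ (s(x0, x1) : Sym2 (Fin (2 * n * k))).IsDiag := by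
      rw [Sym2.mk_isDiag_iff]
      intro h
      rw [Fin.ext_iff] at h
      omega
    have hd1 : ¬ (s(x2, x3) : Sym2 (Fin (2 * n * k))).IsDiag := by
      rw [Sym2.mk_isDiag_iff]
      intro h
      rw [Fin.ext_iff] at h
      omega
    have hsep : PRaux.Sep (s(x0, x1) : Sym2 (Fin (2 * n * k))) s(x2, x3) := by
      intro v hv hv'
      rw [Sym2.mem_iff] at hv hv'
      have h1 : v.val = 0 ∨ v.val = 1 := by
        rcases hv with rfl | rfl
        · exact Or.inl hx0v
        · exact Or.inr hx1v
      have h2 : v.val = 2 ∨ v.val = 3 := by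
        rcases hv' with rfl | rfl
        · exact Or.inl hx2v
        · exact Or.inr hx3v
      omega
    have hp₀ : ((s(x0, x1), s(x2, x3)) : Sym2 (Fin (2 * n * k)) × Sym2 (Fin (2 * n * k)))
        ∈ Dall (Fin (2 * n * k)) := mem_Dall.mpr ⟨hd0, hd1, hsep⟩
    set A := cnt (s(x0, x1) : Sym2 (Fin (2 * n * k))) with hAdef
    set B := cnt2 ((s(x0, x1), s(x2, x3)) :
      Sym2 (Fin (2 * n * k)) × Sym2 (Fin (2 * n * k))) with hBdef
    -- cnt identity
    have hA : (2 * m + 3) * A = T := by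
      have h := cnt_mul_allE hcard hd0
      rw [hallE, hm] at h
      have h2 : (m + 2) * ((2 * m + 3) * A) = (m + 2) * T := by
        rw [← mul_assoc]
        rw [mul_comm (m+2) (2*m+3)] at h ⊢
        rw [h]; ring
      exact Nat.eq_of_mul_eq_mul_left (by omega) h2
    -- cnt2 identity
    have hB : (Dall (Fin (2 * n * k))).card * B = T * ((m + 1) * (m + 2)) := by
      have h := cnt2_mul hcard hp₀
      rw [hm] at h
      have e1 : (m + 2) * (m + 2) = m * m + 4 * m + 4 := by ring
      have e2 : (m + 1) * (m + 2) = m * m + 3 * m + 2 := by ring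
      have : (m + 2) * (m + 2) - (m + 2) = (m + 1) * (m + 2) := by omega
      rw [this] at h
      exact h
    -- Dall lower bound
    have hD := Dall_lb (α := Fin (2 * n * k))
    rw [hallE, hcard] at hD
    -- intersection with matchings
    have hinter : ∀ i, ∀ σ ∈ F (Fin (2 * n * k)),
        E i ∩ edges σ = (edges σ).filter (fun e => c e = i) := by
      intro i σ hσ
      ext e
      simp only [Finset.mem_inter, hE, Finset.mem_filter, mem_allE]
      constructor
      · rintro ⟨⟨_, h2⟩, h3⟩; exact ⟨h3, h2⟩
      · rintro ⟨h1, h2⟩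
        exact ⟨⟨mem_allE.mp (edges_subset_allE (mem_F.mp hσ) h1), h2⟩, h1⟩
    set msig : Equiv.Perm (Fin (2 * n * k)) → Fin k → ℕ :=
      fun σ i => ((edges σ).filter (fun e => c e = i)).card with hmsig
    -- first moment
    have hsum : ∀ i, ∑ σ ∈ F (Fin (2 * n * k)), msig σ i = n * T := by
      intro i
      calc ∑ σ ∈ F (Fin (2 * n * k)), msig σ i
          = ∑ σ ∈ F (Fin (2 * n * k)), (E i ∩ edges σ).card :=
            Finset.sum_congr rfl (fun σ hσ => (congrArg Finset.card (hinter i σ hσ)).symm)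
        _ = ∑ e ∈ E i, cnt e := (sum_cnt (E i)).symm
        _ = (E i).card * A := by
            rw [Finset.sum_congr rfl (fun e he =>
              cnt_const (mem_allE.mp (Finset.mem_filter.mp he).1) hd0),
              Finset.sum_const, smul_eq_mul]
        _ = n * ((2 * m + 3) * A) := by rw [hEcard i]; ring
        _ = n * T := by rw [hA]
    -- second moment
    have hsq : ∀ i, ∑ σ ∈ F (Fin (2 * n * k)), (msig σ i) ^ 2
        ≤ n * T + (n * (2 * m + 3)) ^ 2 * B := by
      intro i
      have h := sum_cnt2 (E i ×ˢ E i)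
      have hR : ∀ σ ∈ F (Fin (2 * n * k)),
          ((E i ×ˢ E i).filter (fun p => p.1 ∈ edges σ ∧ p.2 ∈ edges σ)).card
            = msig σ i ^ 2 := by
        intro σ hσ
        rw [Finset.filter_product, Finset.card_product, Finset.filter_mem_eq_inter,
          hinter i σ hσ]
        have : msig σ i = ((edges σ).filter (fun e => c e = i)).card := by
          simp only [hmsig]
        rw [← this]; ring
      rw [Finset.sum_congr rfl hR] at h
      rw [← Finset.sum_filter_add_sum_filter_not (E i ×ˢ E i) (fun p => p.1 = p.2) cnt2]
        at h
      rw [← Finset.sum_filter_add_sum_filter_not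
        ((E i ×ˢ E i).filter (fun p => ¬ p.1 = p.2)) (fun p => PRaux.Sep p.1 p.2) cnt2]
        at h
      have hdiag : ∑ p ∈ (E i ×ˢ E i).filter (fun p => p.1 = p.2), cnt2 p = n * T := by
        have hbij : ∑ p ∈ (E i ×ˢ E i).filter (fun p => p.1 = p.2), cnt2 p
            = ∑ e ∈ E i, cnt e := by
          refine Finset.sum_bij' (fun p _ => p.1) (fun e _ => (e, e)) ?_ ?_ ?_ ?_ ?_
          · intro p hp
            rw [Finset.mem_filter, Finset.mem_product] at hp
            exact hp.1.1
          · intro e he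
            rw [Finset.mem_filter, Finset.mem_product]
            exact ⟨⟨he, he⟩, rfl⟩
          · rintro ⟨a, b⟩ hp
            obtain ⟨-, hp2⟩ := Finset.mem_filter.mp hp
            show (a, a) = (a, b)
            exact congrArg (Prod.mk a) hp2
          · intro e he
            rfl
          · intro p hp
            obtain ⟨hp1, hp2⟩ := Finset.mem_filter.mp hp
            calc cnt2 p = cnt2 (p.1, p.2) := rfl
              _ = cnt2 (p.1, p.1) := by rw [← hp2]
              _ = cnt p.1 := cnt2_diag p.1
        rw [hbij,
          Finset.sum_congr rfl (fun e he =>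
            cnt_const (mem_allE.mp (Finset.mem_filter.mp he).1) hd0),
          Finset.sum_const, smul_eq_mul, hEcard i]
        calc n * (2 * m + 3) * A = n * ((2 * m + 3) * A) := by ring
          _ = n * T := by rw [hA]
      have hzero : ∑ p ∈ ((E i ×ˢ E i).filter (fun p => ¬ p.1 = p.2)).filter
          (fun p => ¬ PRaux.Sep p.1 p.2), cnt2 p = 0 := by
        apply Finset.sum_eq_zero
        intro p hp
        rw [Finset.mem_filter, Finset.mem_filter] at hp
        have h0 : cnt2 (p.1, p.2) = 0 := cnt2_zero hp.1.2 hp.2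
        exact h0
      have hsepb : ∑ p ∈ ((E i ×ˢ E i).filter (fun p => ¬ p.1 = p.2)).filter
          (fun p => PRaux.Sep p.1 p.2), cnt2 p ≤ (n * (2 * m + 3)) ^ 2 * B := by
        have hconst : ∀ p ∈ ((E i ×ˢ E i).filter (fun p => ¬ p.1 = p.2)).filter
            (fun p => PRaux.Sep p.1 p.2), cnt2 p = B := by
          intro p hp
          rw [Finset.mem_filter, Finset.mem_filter, Finset.mem_product] at hp
          obtain ⟨⟨⟨hp1, hp2⟩, _⟩, hps⟩ := hp
          have hn1 : ¬ p.1.IsDiag := mem_allE.mp (Finset.mem_filter.mp hp1).1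
          have hn2 : ¬ p.2.IsDiag := mem_allE.mp (Finset.mem_filter.mp hp2).1
          exact cnt2_const hn1 hn2 hd0 hd1 hps hsep
        rw [Finset.sum_congr rfl hconst, Finset.sum_const, smul_eq_mul]
        have hcle : (((E i ×ˢ E i).filter (fun p => ¬ p.1 = p.2)).filter
            (fun p => PRaux.Sep p.1 p.2)).card ≤ (E i).card * (E i).card := by
          calc _ ≤ ((E i ×ˢ E i).filter (fun p => ¬ p.1 = p.2)).card :=
                Finset.card_filter_le _ _
            _ ≤ (E i ×ˢ E i).card := Finset.card_filter_le _ _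
            _ = (E i).card * (E i).card := Finset.card_product _ _
        calc _ ≤ ((E i).card * (E i).card) * B := Nat.mul_le_mul_right B hcle
          _ = (n * (2 * m + 3)) ^ 2 * B := by rw [hEcard i]; ring
      omega
    -- real-number endgame
    have hTR : (0 : ℝ) < T := by exact_mod_cast hT0
    have hnmN : n ≤ 2 * m + 1 := by
      have h1 : n * 2 ≤ n * k := Nat.mul_le_mul_left n hk2
      omega
    have hBT : (B : ℝ) * ((2 * m + 1) * (2 * m + 3)) ≤ T := by
      have hDR : ((m + 2) * (2 * m + 3) : ℝ) * ((m + 2) * (2 * m + 3) + 3)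
          ≤ ((Dall (Fin (2 * n * k))).card : ℝ)
            + ((m + 2) * (2 * m + 3) : ℝ) * (2 * (2 * ((n : ℝ) * k))) := by
        exact_mod_cast hD
      have hnkR : ((n : ℝ) * k) = (m : ℝ) + 2 := by exact_mod_cast hm
      rw [hnkR] at hDR
      have hkey : ((m + 2) * (2 * m + 3) : ℝ) * ((m + 2) * (2 * m + 3) + 3)
          - ((m + 2) * (2 * m + 3) : ℝ) * (2 * (2 * ((m : ℝ) + 2)))
          = ((m : ℝ) + 1) * (m + 2) * ((2 * m + 1) * (2 * m + 3)) := by ring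
      have hDlbR : ((m : ℝ) + 1) * (m + 2) * ((2 * m + 1) * (2 * m + 3))
          ≤ ((Dall (Fin (2 * n * k))).card : ℝ) := by linarith
      have hBR : ((Dall (Fin (2 * n * k))).card : ℝ) * B
          = (T : ℝ) * (((m : ℝ) + 1) * (m + 2)) := by exact_mod_cast hB
      have hB0 : (0 : ℝ) ≤ B := Nat.cast_nonneg B
      have h1 : ((B : ℝ) * ((2 * m + 1) * (2 * m + 3))) * (((m : ℝ) + 1) * (m + 2))
          ≤ (T : ℝ) * (((m : ℝ) + 1) * (m + 2)) := by nlinarith [hDlbR, hB0, hBR]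
      exact le_of_mul_le_mul_right h1 (by positivity)
    have hreal : ∀ i, ∑ σ ∈ F (Fin (2 * n * k)), ((msig σ i : ℝ) - n) ^ 2
        ≤ 3 * n * T := by
      intro i
      have hs1 : ∑ σ ∈ F (Fin (2 * n * k)), ((msig σ i : ℝ)) ^ 2
          ≤ (n : ℝ) * T + ((n : ℝ) * (2 * m + 3)) ^ 2 * B := by
        exact_mod_cast hsq i
      have hs2 : ∑ σ ∈ F (Fin (2 * n * k)), ((msig σ i : ℝ)) = (n : ℝ) * T := by
        exact_mod_cast hsum i
      have hstep : ((n : ℝ) * (2 * m + 3)) ^ 2 * B ≤ (n : ℝ) ^ 2 * T + 2 * n * T := by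
        have hnR1 : (1 : ℝ) ≤ n := by exact_mod_cast hn
        have hnmR : (n : ℝ) ≤ 2 * m + 1 := by exact_mod_cast hnmN
        have ha : ((n : ℝ) ^ 2 * (2 * m + 3)) * ((B : ℝ) * ((2 * m + 1) * (2 * m + 3)))
            ≤ ((n : ℝ) ^ 2 * (2 * m + 3)) * T :=
          mul_le_mul_of_nonneg_left hBT (by positivity)
        have key : (0 : ℝ) ≤ 2 * (n : ℝ) * T * ((2 * m + 1) - n) := by
          have := sub_nonneg.mpr hnmR
          have h2n : (0 : ℝ) ≤ 2 * (n : ℝ) * T := by positivity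
          exact mul_nonneg h2n this
        have hb : ((n : ℝ) ^ 2 * (2 * m + 3)) * T
            ≤ ((n : ℝ) ^ 2 * T + 2 * n * T) * (2 * m + 1) := by linarith [key]
        have hc : (((n : ℝ) * (2 * m + 3)) ^ 2 * B) * (2 * m + 1)
            ≤ ((n : ℝ) ^ 2 * T + 2 * n * T) * (2 * m + 1) := by linarith [ha, hb]
        exact le_of_mul_le_mul_right hc (by positivity)
      have hexp : ∑ σ ∈ F (Fin (2 * n * k)), ((msig σ i : ℝ) - n) ^ 2
          = (∑ σ ∈ F (Fin (2 * n * k)), ((msig σ i : ℝ)) ^ 2)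
            - 2 * n * (∑ σ ∈ F (Fin (2 * n * k)), ((msig σ i : ℝ)))
            + (n : ℝ) ^ 2 * T := by
        rw [Finset.sum_congr rfl (fun σ _ => show ((msig σ i : ℝ) - n) ^ 2
            = ((msig σ i : ℝ)) ^ 2 - 2 * n * ((msig σ i : ℝ)) + (n : ℝ) ^ 2 by ring),
          Finset.sum_add_distrib, Finset.sum_sub_distrib, ← Finset.mul_sum,
          Finset.sum_const, nsmul_eq_mul, hT]
        push_cast
        ring
      rw [hexp, hs2]
      linarith [hs1, hstep]
    -- Cauchy–Schwarz per colour
    have hCS : ∀ i, ∑ σ ∈ F (Fin (2 * n * k)), |(msig σ i : ℝ) - n|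
        ≤ Real.sqrt (3 * n) * T := by
      intro i
      have h1 := Finset.sum_mul_sq_le_sq_mul_sq (F (Fin (2 * n * k)))
        (fun σ => |(msig σ i : ℝ) - n|) (fun _ => 1)
      simp only [mul_one, one_pow, Finset.sum_const, nsmul_eq_mul, mul_one] at h1
      rw [← hT] at h1
      have h2 : ∑ σ ∈ F (Fin (2 * n * k)), |(msig σ i : ℝ) - n| ^ 2
          = ∑ σ ∈ F (Fin (2 * n * k)), ((msig σ i : ℝ) - n) ^ 2 :=
        Finset.sum_congr rfl fun σ _ => sq_abs _
      have h3 : (∑ σ ∈ F (Fin (2 * n * k)), |(msig σ i : ℝ) - n|) ^ 2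
          ≤ 3 * (n : ℝ) * (T : ℝ) ^ 2 := by
        have h5 := mul_le_mul_of_nonneg_right (hreal i) (Nat.cast_nonneg T : (0:ℝ) ≤ T)
        rw [h2] at h1
        linarith [h1, h5]
      have h4 : 0 ≤ ∑ σ ∈ F (Fin (2 * n * k)), |(msig σ i : ℝ) - n| :=
        Finset.sum_nonneg fun σ _ => abs_nonneg _
      calc ∑ σ ∈ F (Fin (2 * n * k)), |(msig σ i : ℝ) - n|
          = Real.sqrt ((∑ σ ∈ F (Fin (2 * n * k)), |(msig σ i : ℝ) - n|) ^ 2) :=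
            (Real.sqrt_sq h4).symm
        _ ≤ Real.sqrt (3 * (n : ℝ) * (T : ℝ) ^ 2) := Real.sqrt_le_sqrt h3
        _ = Real.sqrt (3 * n) * T := by
            rw [Real.sqrt_mul (by positivity), Real.sqrt_sq hTR.le]
    -- choose a good matching
    have htot : ∑ σ ∈ F (Fin (2 * n * k)), (∑ i : Fin k, |(msig σ i : ℝ) - n|)
        ≤ ∑ σ ∈ F (Fin (2 * n * k)), ((k : ℝ) * Real.sqrt (3 * n)) := by
      rw [Finset.sum_comm, Finset.sum_const, ← hT, nsmul_eq_mul]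
      calc ∑ i : Fin k, ∑ σ ∈ F (Fin (2 * n * k)), |(msig σ i : ℝ) - n|
          ≤ ∑ _i : Fin k, Real.sqrt (3 * n) * T := Finset.sum_le_sum (fun i _ => hCS i)
        _ = (k : ℝ) * (Real.sqrt (3 * n) * T) := by
            rw [Finset.sum_const, Finset.card_univ, Fintype.card_fin, nsmul_eq_mul]
        _ = (T : ℝ) * ((k : ℝ) * Real.sqrt (3 * n)) := by ring
    obtain ⟨σs, hσs, hfs⟩ := Finset.exists_le_of_sum_le ⟨σ₀, hσ₀⟩ htot
    refine ⟨toSub σs (mem_F.mp hσs), toSub_isPM _ _, ?_⟩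
    have hlog : (1 : ℝ) ≤ Real.log (2 * k) := by
      have hkR : (2 : ℝ) ≤ k := by exact_mod_cast hk2
      have h4le : (4 : ℝ) ≤ 2 * k := by linarith
      have hmono := Real.log_le_log (by norm_num : (0 : ℝ) < 4) h4le
      have hlog4 : Real.log 4 = 2 * Real.log 2 := by
        rw [show (4 : ℝ) = 2 ^ 2 by norm_num, Real.log_pow]
        push_cast; ring
      linarith [Real.log_two_gt_d9]
    have hfinal : (k : ℝ) * Real.sqrt (3 * n)
        ≤ 3 * (k : ℝ) * Real.sqrt ((k : ℝ) * n * Real.log (2 * k)) := by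
      have hkR : (2 : ℝ) ≤ k := by exact_mod_cast hk2
      have hnR : (1 : ℝ) ≤ n := by exact_mod_cast hn
      have hs3 : Real.sqrt (3 * n) ≤ 3 * Real.sqrt ((k : ℝ) * n * Real.log (2 * k)) := by
        have h9 : (3 : ℝ) * Real.sqrt ((k : ℝ) * n * Real.log (2 * k))
            = Real.sqrt (9 * ((k : ℝ) * n * Real.log (2 * k))) := by
          rw [show (9 : ℝ) * ((k : ℝ) * n * Real.log (2 * k))
            = 3 ^ 2 * ((k : ℝ) * n * Real.log (2 * k)) by ring,
            Real.sqrt_mul (show (0:ℝ) ≤ 3 ^ 2 by norm_num) ((k : ℝ) * n * Real.log (2 * k)),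
            Real.sqrt_sq (by norm_num : (0:ℝ) ≤ 3)]
        rw [h9]
        apply Real.sqrt_le_sqrt
        have hx : (2 : ℝ) * 1 ≤ (k : ℝ) * Real.log (2 * k) :=
          mul_le_mul hkR hlog (by norm_num) (by positivity)
        have hy := mul_le_mul_of_nonneg_left hx (show (0 : ℝ) ≤ 9 * (n : ℝ) by positivity)
        linarith [hy, hnR]
      calc (k : ℝ) * Real.sqrt (3 * n)
          ≤ (k : ℝ) * (3 * Real.sqrt ((k : ℝ) * n * Real.log (2 * k))) :=
            mul_le_mul_of_nonneg_left hs3 (by positivity)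
        _ = 3 * (k : ℝ) * Real.sqrt ((k : ℝ) * n * Real.log (2 * k)) := by ring
    have hgoal_eq : ∀ i : Fin k,
        ((((toSub σs (mem_F.mp hσs)).edgeSet ∩ {e | c e = i}).ncard : ℕ) : ℝ)
          = ((msig σs i : ℕ) : ℝ) := by
      intro i
      rw [ncard_inter]
    calc ∑ i : Fin k, |(((toSub σs (mem_F.mp hσs)).edgeSet ∩ {e | c e = i}).ncard : ℝ)
          - (n : ℝ)|
        = ∑ i : Fin k, |(msig σs i : ℝ) - n| := by
          refine Finset.sum_congr rfl fun i _ => ?_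
          rw [hgoal_eq i]
      _ ≤ (k : ℝ) * Real.sqrt (3 * n) := hfs
      _ ≤ 3 * (k : ℝ) * Real.sqrt ((k : ℝ) * n * Real.log (2 * k)) := hfinal
end

section
/- Let c : E(K_{2nk}) → {1,…,k} be any edge-colouring, M a perfect matching of K_{2nk}, and uv, xy distinct edges of M. Let M' := (M ∖ {uv, xy}) ∪ {ux, vy}. If w_M(uv) + w_M(xy) − w_M(ux) − w_M(vy) > 4, then g(M') < g(M). -/
/-- The weight `w_S(e)`: the number of edges in the edge set `S` having the same colour as `e`. -/
noncomputable def edgeWeight {N k : ℕ} (c : Sym2 (Fin N) → Fin k) (S : Set (Sym2 (Fin N)))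
    (e : Sym2 (Fin N)) : ℕ :=
  (S ∩ {e' | c e' = c e}).ncard

/-- `g(S) := ∑_{e ∈ S} w_S(e)`. -/
noncomputable def gFun {N k : ℕ} (c : Sym2 (Fin N) → Fin k) (S : Set (Sym2 (Fin N))) : ℕ :=
  ∑ e ∈ S.toFinite.toFinset, edgeWeight c S e

lemma edgeWeight_eq_filter_card {N k : ℕ} (c : Sym2 (Fin N) → Fin k) (S : Set (Sym2 (Fin N)))
    (e : Sym2 (Fin N)) :
    edgeWeight c S e = (S.toFinite.toFinset.filter (fun e' => c e' = c e)).card := by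
  rw [edgeWeight, ← Set.ncard_coe_finset]
  congr 1
  ext a
  simp [Set.Finite.mem_toFinset]

lemma gFun_eq_sum_sq {N k : ℕ} (c : Sym2 (Fin N) → Fin k) (S : Set (Sym2 (Fin N))) :
    gFun c S = ∑ i : Fin k, ((S.toFinite.toFinset.filter (fun e => c e = i)).card) ^ 2 := by
  unfold gFun
  simp_rw [edgeWeight_eq_filter_card]
  rw [← Finset.sum_fiberwise_of_maps_to (g := c) (t := Finset.univ)
    (fun e _ => Finset.mem_univ (c e))]
  refine Finset.sum_congr rfl fun i _ => ?_
  rw [Finset.sum_congr rfl (g := fun _ => (S.toFinite.toFinset.filter (fun e => c e = i)).card)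
    (fun e he => by rw [(Finset.mem_filter.mp he).2])]
  rw [Finset.sum_const, smul_eq_mul, sq]

lemma key_arith {k : ℕ} (a b : Fin k → ℤ) (c1 c2 d1 d2 : Fin k)
    (hb : ∀ i, b i = a i - ((if c1 = i then 1 else 0) + (if c2 = i then 1 else 0))
        + ((if d1 = i then 1 else 0) + (if d2 = i then 1 else 0)))
    (h : a d1 + a d2 + 4 < a c1 + a c2) :
    ∑ i, (b i) ^ 2 < ∑ i, (a i) ^ 2 := by
  have key : ∀ i : Fin k, (b i) ^ 2 ≤ (a i) ^ 2
      + 2 * a i * ((if d1 = i then (1:ℤ) else 0) + (if d2 = i then 1 else 0)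
        - (if c1 = i then 1 else 0) - (if c2 = i then 1 else 0))
      + 2 * ((if d1 = i then (1:ℤ) else 0) + (if d2 = i then 1 else 0)
        + (if c1 = i then 1 else 0) + (if c2 = i then 1 else 0)) := by
    intro i
    rw [hb i]
    split_ifs <;> nlinarith [sq_nonneg (a i)]
  have hsum : ∑ i, (b i) ^ 2 ≤ ∑ i, ((a i) ^ 2
      + 2 * a i * ((if d1 = i then (1:ℤ) else 0) + (if d2 = i then 1 else 0)
        - (if c1 = i then 1 else 0) - (if c2 = i then 1 else 0))
      + 2 * ((if d1 = i then (1:ℤ) else 0) + (if d2 = i then 1 else 0)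
        + (if c1 = i then 1 else 0) + (if c2 = i then 1 else 0))) :=
    Finset.sum_le_sum fun i _ => key i
  have hexp : ∑ i, ((a i) ^ 2
      + 2 * a i * ((if d1 = i then (1:ℤ) else 0) + (if d2 = i then 1 else 0)
        - (if c1 = i then 1 else 0) - (if c2 = i then 1 else 0))
      + 2 * ((if d1 = i then (1:ℤ) else 0) + (if d2 = i then 1 else 0)
        + (if c1 = i then 1 else 0) + (if c2 = i then 1 else 0)))
      = ∑ i, (a i) ^ 2 + 2 * (a d1 + a d2 - a c1 - a c2) + 8 := by
    simp only [mul_add, mul_sub, mul_ite, mul_one, mul_zero, add_sub_assoc]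
    rw [Finset.sum_add_distrib, Finset.sum_add_distrib]
    simp [Finset.sum_add_distrib, Finset.sum_sub_distrib, Finset.sum_ite_eq,
      Finset.mem_univ]
  rw [hexp] at hsum
  linarith

/-- Given any edge-colouring `c` of `K_{2nk}`, a perfect matching `M`,
distinct edges `uv, xy ∈ M`, and `M' := (M ∖ {uv, xy}) ∪ {ux, vy}`: if
`w_M(uv) + w_M(xy) − w_M(ux) − w_M(vy) > 4`, then `g(M') < g(M)`. -/
theorem swap_decreases_g
    (n k : ℕ) (hn : 0 < n) (hk : 0 < k)
    (c : Sym2 (Fin (2 * n * k)) → Fin k)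
    (M : (⊤ : SimpleGraph (Fin (2 * n * k))).Subgraph) (hM : M.IsPerfectMatching)
    (u v x y : Fin (2 * n * k))
    (huv : M.Adj u v) (hxy : M.Adj x y) (hne : s(u, v) ≠ s(x, y))
    (hcontr : edgeWeight c M.edgeSet s(u, v) + edgeWeight c M.edgeSet s(x, y)
      > edgeWeight c M.edgeSet s(u, x) + edgeWeight c M.edgeSet s(v, y) + 4) :
    gFun c ((M.edgeSet \ {s(u, v), s(x, y)}) ∪ {s(u, x), s(v, y)}) < gFun c M.edgeSet := by
  have huniq : ∀ w z z' : Fin (2 * n * k), M.Adj w z → M.Adj w z' → z = z' :=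
    fun w z z' h1 h2 => (hM.1 (hM.2 w)).unique h1 h2
  have hune : u ≠ v := (M.adj_sub huv).ne
  -- f1 = s(u,x) not in M
  have hf1 : s(u, x) ∉ M.edgeSet := by
    intro h
    rw [SimpleGraph.Subgraph.mem_edgeSet] at h
    have hxv : x = v := huniq u x v h huv
    have hyu : y = u := huniq v y u (hxv ▸ hxy) huv.symm
    exact hne (by rw [hxv, hyu]; exact Sym2.eq_swap)
  have hf2 : s(v, y) ∉ M.edgeSet := by
    intro h
    rw [SimpleGraph.Subgraph.mem_edgeSet] at h
    have hyu : y = u := huniq v y u h huv.symm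
    have hxv : x = v := huniq u x v (hyu ▸ hxy).symm huv
    exact hne (by rw [hxv, hyu]; exact Sym2.eq_swap)
  have hf12 : s(u, x) ≠ s(v, y) := by
    intro h
    rw [Sym2.eq_iff] at h
    rcases h with ⟨h1, h2⟩ | ⟨h1, h2⟩
    · exact hune h1
    · exact hne (by rw [h2, ← h1]; exact Sym2.eq_swap)
  have he1 : s(u, v) ∈ M.edgeSet := SimpleGraph.Subgraph.mem_edgeSet.mpr huv
  have he2 : s(x, y) ∈ M.edgeSet := SimpleGraph.Subgraph.mem_edgeSet.mpr hxy
  set S' : Set (Sym2 (Fin (2 * n * k))) :=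
    (M.edgeSet \ {s(u, v), s(x, y)}) ∪ {s(u, x), s(v, y)} with hS'
  set T : Finset (Sym2 (Fin (2 * n * k))) := M.edgeSet.toFinite.toFinset with hT
  set T' : Finset (Sym2 (Fin (2 * n * k))) := S'.toFinite.toFinset with hT'def
  have hT' : T' = (T \ {s(u, v), s(x, y)}) ∪ {s(u, x), s(v, y)} := by
    ext a
    simp only [hT'def, hT, Set.Finite.mem_toFinset, hS', Set.mem_union, Set.mem_diff,
      Set.mem_insert_iff, Set.mem_singleton_iff, Finset.mem_union, Finset.mem_sdiff,
      Finset.mem_insert, Finset.mem_singleton]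
  have he1T : s(u, v) ∈ T := (Set.Finite.mem_toFinset _).mpr he1
  have he2T : s(x, y) ∈ T := (Set.Finite.mem_toFinset _).mpr he2
  have hf1T : s(u, x) ∉ T := fun h => hf1 ((Set.Finite.mem_toFinset _).mp h)
  have hf2T : s(v, y) ∉ T := fun h => hf2 ((Set.Finite.mem_toFinset _).mp h)
  have hsubE : ({s(u, v), s(x, y)} : Finset (Sym2 (Fin (2 * n * k)))) ⊆ T := by
    intro a ha
    rcases Finset.mem_insert.mp ha with h | h
    · rwa [h]
    · rw [Finset.mem_singleton.mp h]; exact he2T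
  have hdisj : Disjoint (T \ {s(u, v), s(x, y)})
      ({s(u, x), s(v, y)} : Finset (Sym2 (Fin (2 * n * k)))) := by
    rw [Finset.disjoint_right]
    intro a ha
    rcases Finset.mem_insert.mp ha with h | h
    · subst h; simp [Finset.mem_sdiff]; intro h'; exact absurd h' hf1T
    · rw [Finset.mem_singleton.mp h]; simp [Finset.mem_sdiff]; intro h'; exact absurd h' hf2T
  -- card as integer sums
  have cardSum : ∀ (s : Finset (Sym2 (Fin (2 * n * k)))) (i : Fin k),
      (((s.filter (fun e => c e = i)).card : ℤ)) = ∑ e ∈ s, (if c e = i then (1:ℤ) else 0) := by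
    intro s i
    rw [Finset.card_filter]
    push_cast
    rfl
  set a : Fin k → ℤ := fun i => ((T.filter (fun e => c e = i)).card : ℤ) with ha
  set b : Fin k → ℤ := fun i => ((T'.filter (fun e => c e = i)).card : ℤ) with hbdef
  have hb : ∀ i, b i = a i - ((if c s(u, v) = i then 1 else 0) + (if c s(x, y) = i then 1 else 0))
      + ((if c s(u, x) = i then 1 else 0) + (if c s(v, y) = i then 1 else 0)) := by
    intro i
    rw [hbdef, ha]
    simp only
    rw [cardSum, cardSum, hT', Finset.sum_union hdisj,
      Finset.sum_sdiff_eq_sub hsubE, Finset.sum_pair hne, Finset.sum_pair hf12]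
  have hcontr' : a (c s(u, x)) + a (c s(v, y)) + 4 < a (c s(u, v)) + a (c s(x, y)) := by
    rw [edgeWeight_eq_filter_card, edgeWeight_eq_filter_card, edgeWeight_eq_filter_card,
      edgeWeight_eq_filter_card] at hcontr
    simp only [ha]
    exact_mod_cast hcontr
  have hmain : ∑ i, (b i) ^ 2 < ∑ i, (a i) ^ 2 := key_arith a b _ _ _ _ hb hcontr'
  have hmain' : ∑ i : Fin k, ((T'.filter (fun e => c e = i)).card : ℤ) ^ 2
      < ∑ i : Fin k, ((T.filter (fun e => c e = i)).card : ℤ) ^ 2 := hmain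
  rw [gFun_eq_sum_sq, gFun_eq_sum_sq]
  exact_mod_cast hmain'
end

section
/- Let c : E(K_{2nk}) → {1,…,k} be any edge-colouring, M a perfect matching of K_{2nk}, and uv, xy distinct edges of M. Let M' := (M ∖ {uv, xy}) ∪ {ux, vy}. Then g(M) − g(M') ≥ 2·(w_M(uv) + w_M(xy) − w_M(ux) − w_M(vy) − 4). -/
section aux
variable {N k : ℕ} (c : Sym2 (Fin N) → Fin k)

lemma edgeWeight_mono {S S' : Set (Sym2 (Fin N))} (h : S' ⊆ S) (e : Sym2 (Fin N)) :
    edgeWeight c S' e ≤ edgeWeight c S e :=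
  Set.ncard_le_ncard (Set.inter_subset_inter_left _ h) (Set.toFinite _)

lemma edgeWeight_insert_le (a : Sym2 (Fin N)) (S : Set (Sym2 (Fin N))) (e : Sym2 (Fin N)) :
    edgeWeight c (insert a S) e ≤ edgeWeight c S e + 1 := by
  unfold edgeWeight
  calc ((insert a S) ∩ {e' | c e' = c e}).ncard
      ≤ (insert a (S ∩ {e' | c e' = c e})).ncard :=
        Set.ncard_le_ncard (by intro z hz; rcases hz.1 with h | h <;> simp_all) (Set.toFinite _)
    _ ≤ (S ∩ {e' | c e' = c e}).ncard + 1 := Set.ncard_insert_le _ _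

lemma edgeWeight_diff_ge (a : Sym2 (Fin N)) (S : Set (Sym2 (Fin N))) (e : Sym2 (Fin N)) :
    edgeWeight c S e ≤ edgeWeight c (S \ {a}) e + 1 := by
  unfold edgeWeight
  calc (S ∩ {e' | c e' = c e}).ncard
      ≤ (insert a ((S \ {a}) ∩ {e' | c e' = c e})).ncard :=
        Set.ncard_le_ncard (by intro z hz; by_cases hz' : z = a <;> simp_all [hz.1, hz.2])
          (Set.toFinite _)
    _ ≤ _ := Set.ncard_insert_le _ _

lemma edgeWeight_insert_self {a : Sym2 (Fin N)} {S : Set (Sym2 (Fin N))} (ha : a ∉ S) :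
    edgeWeight c (insert a S) a = edgeWeight c S a + 1 := by
  unfold edgeWeight
  rw [Set.insert_inter_of_mem (by simp), Set.ncard_insert_of_notMem (fun h => ha h.1)]

lemma edgeWeight_insert_other {a : Sym2 (Fin N)} {S : Set (Sym2 (Fin N))} (ha : a ∉ S)
    (e : Sym2 (Fin N)) :
    edgeWeight c (insert a S) e = edgeWeight c S e + (if c a = c e then 1 else 0) := by
  unfold edgeWeight
  by_cases h : c a = c e
  · rw [Set.insert_inter_of_mem (by simpa using h),
      Set.ncard_insert_of_notMem (fun h' => ha h'.1), if_pos h]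
  · rw [Set.insert_inter_of_notMem (by simpa using h), if_neg h, add_zero]

lemma edgeWeight_eq_card (S : Set (Sym2 (Fin N))) (e : Sym2 (Fin N)) :
    edgeWeight c S e = (S.toFinite.toFinset.filter (fun e' => c e' = c e)).card := by
  unfold edgeWeight
  rw [← Set.ncard_coe_finset]
  congr 1
  ext z
  simp

lemma gFun_insert {a : Sym2 (Fin N)} {S : Set (Sym2 (Fin N))} (ha : a ∉ S) :
    gFun c (insert a S) = gFun c S + 2 * edgeWeight c S a + 1 := by
  unfold gFun
  have hfs : (insert a S).toFinite.toFinset = insert a S.toFinite.toFinset := by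
    ext z; simp
  rw [hfs, Finset.sum_insert (by simpa using ha), edgeWeight_insert_self c ha]
  have h1 : ∑ e ∈ S.toFinite.toFinset, edgeWeight c (insert a S) e
      = ∑ e ∈ S.toFinite.toFinset, (edgeWeight c S e + if c a = c e then 1 else 0) :=
    Finset.sum_congr rfl fun e _ => edgeWeight_insert_other c ha e
  rw [h1, Finset.sum_add_distrib]
  have hb : (∑ e ∈ S.toFinite.toFinset, if c a = c e then 1 else 0)
      = (S.toFinite.toFinset.filter (fun e => c a = c e)).card := by
    rw [Finset.card_filter]
  rw [hb]
  have h2 : (S.toFinite.toFinset.filter (fun e => c a = c e)).card = edgeWeight c S a := by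
    rw [edgeWeight_eq_card]
    congr 1
    ext z
    simp [eq_comm]
  rw [h2]
  ring

lemma gFun_remove {a : Sym2 (Fin N)} {S : Set (Sym2 (Fin N))} (ha : a ∈ S) :
    gFun c S = gFun c (S \ {a}) + 2 * edgeWeight c (S \ {a}) a + 1 := by
  have h := gFun_insert c (a := a) (S := S \ {a}) (by simp)
  rwa [Set.insert_diff_singleton, Set.insert_eq_of_mem ha] at h

end aux


/-- Given any edge-colouring `c` of `K_{2nk}`, a perfect matching `M`,
distinct edges `uv, xy ∈ M`, and `M' := (M ∖ {uv, xy}) ∪ {ux, vy}`, we have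
`g(M) − g(M') ≥ 2·(w_M(uv) + w_M(xy) − w_M(ux) − w_M(vy) − 4)`. -/
theorem swap_g_difference_bound
    (n k : ℕ) (hn : 0 < n) (hk : 0 < k)
    (c : Sym2 (Fin (2 * n * k)) → Fin k)
    (M : (⊤ : SimpleGraph (Fin (2 * n * k))).Subgraph) (hM : M.IsPerfectMatching)
    (u v x y : Fin (2 * n * k))
    (huv : M.Adj u v) (hxy : M.Adj x y) (hne : s(u, v) ≠ s(x, y)) :
    (gFun c M.edgeSet : ℤ)
        - gFun c ((M.edgeSet \ {s(u, v), s(x, y)}) ∪ {s(u, x), s(v, y)})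
      ≥ 2 * ((edgeWeight c M.edgeSet s(u, v) : ℤ) + edgeWeight c M.edgeSet s(x, y)
          - edgeWeight c M.edgeSet s(u, x) - edgeWeight c M.edgeSet s(v, y) - 4) := by
  have huniq : ∀ {a b b' : Fin (2 * n * k)}, M.Adj a b → M.Adj a b' → b = b' := by
    intro a b b' h h'
    obtain ⟨w, -, hw⟩ := hM.1 (M.edge_vert h)
    exact (hw b h).trans (hw b' h').symm
  have huv' : u ≠ v := (M.adj_sub huv).ne
  have hxy' : x ≠ y := (M.adj_sub hxy).ne
  have hux : u ≠ x := by
    intro h; subst h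
    exact hne (by rw [huniq huv hxy])
  have huy : u ≠ y := by
    intro h; subst h
    exact hne (by rw [huniq huv hxy.symm, Sym2.eq_swap])
  have hvx : v ≠ x := by
    intro h; subst h
    exact hne (by rw [huniq huv.symm hxy, Sym2.eq_swap])
  have hvy : v ≠ y := by
    intro h; subst h
    exact hne (by rw [huniq huv.symm hxy.symm])
  set S := M.edgeSet with hS
  have he1 : s(u, v) ∈ S := huv
  have he2 : s(x, y) ∈ S := hxy
  have hf1 : s(u, x) ∉ S := fun h => hvx (huniq huv h)
  have hf2 : s(v, y) ∉ S := fun h => huy (huniq huv.symm h)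
  have hf12 : s(u, x) ≠ s(v, y) := by
    simp [Sym2.eq_iff, huv', hux, huy, hvx]
  set S1 := S \ {s(u, v)} with hS1
  set S2 := S1 \ {s(x, y)} with hS2
  set S3 := insert s(u, x) S2 with hS3
  have hT : (S \ {s(u, v), s(x, y)}) ∪ {s(u, x), s(v, y)} = insert s(v, y) S3 := by
    ext z
    simp only [hS3, hS2, hS1, Set.mem_union, Set.mem_diff, Set.mem_insert_iff,
      Set.mem_singleton_iff]
    tauto
  have h1 : gFun c S = gFun c S1 + 2 * edgeWeight c S1 s(u, v) + 1 := gFun_remove c he1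
  have hw1 : edgeWeight c S s(u, v) = edgeWeight c S1 s(u, v) + 1 := by
    have := edgeWeight_insert_self c (a := s(u, v)) (S := S1) (by simp [hS1])
    rwa [hS1, Set.insert_diff_singleton, Set.insert_eq_of_mem he1] at this
  have he2' : s(x, y) ∈ S1 := ⟨he2, fun h => hne (by simpa using h.symm)⟩
  have h2 : gFun c S1 = gFun c S2 + 2 * edgeWeight c S2 s(x, y) + 1 := gFun_remove c he2'
  have hw2 : edgeWeight c S s(x, y) ≤ edgeWeight c S2 s(x, y) + 2 := by
    have a1 : edgeWeight c S s(x, y) ≤ edgeWeight c S1 s(x, y) + 1 :=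
      edgeWeight_diff_ge c s(u, v) S s(x, y)
    have a2 : edgeWeight c S1 s(x, y) ≤ edgeWeight c S2 s(x, y) + 1 :=
      edgeWeight_diff_ge c s(x, y) S1 s(x, y)
    omega
  have hf1' : s(u, x) ∉ S2 := fun h => hf1 h.1.1
  have h3 : gFun c S3 = gFun c S2 + 2 * edgeWeight c S2 s(u, x) + 1 := gFun_insert c hf1'
  have hw3 : edgeWeight c S2 s(u, x) ≤ edgeWeight c S s(u, x) :=
    edgeWeight_mono c (fun z hz => hz.1.1) _
  have hf2' : s(v, y) ∉ S3 := by
    intro h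
    rcases h with h | h
    · exact hf12 h.symm
    · exact hf2 h.1.1
  have h4 : gFun c (insert s(v, y) S3) = gFun c S3 + 2 * edgeWeight c S3 s(v, y) + 1 :=
    gFun_insert c hf2'
  have hw4 : edgeWeight c S3 s(v, y) ≤ edgeWeight c S s(v, y) + 1 := by
    have a1 : edgeWeight c S3 s(v, y) ≤ edgeWeight c S2 s(v, y) + 1 :=
      edgeWeight_insert_le c s(u, x) S2 s(v, y)
    have a2 : edgeWeight c S2 s(v, y) ≤ edgeWeight c S s(v, y) :=
      edgeWeight_mono c (fun z hz => hz.1.1) _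
    omega
  rw [hT]
  push_cast [h1, h2, h4, h3, hw1]
  push_cast at hw2 hw3 hw4
  linarith
end

section
/- Let n, k be positive integers with nk ≥ 2, let c : E(K_{2nk}) → {1,…,k} be any edge-colouring, and let M be a perfect matching of K_{2nk}. If (Σ_{e∈M} w_M(e))/|M| − (Σ_{e∈E∖M} w_M(e))/|E∖M| > 2, then M admits a contradicting swap, i.e. there exist distinct edges uv, xy ∈ M with w_M(uv) + w_M(xy) − w_M(ux) − w_M(vy) > 4. -/
/-- If `g : α → γ` maps `s` onto `t` with all fibres of size `2`, then summing `F ∘ g` over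
`s` gives twice the sum of `F` over `t`. -/
lemma sum_two_to_one {α γ : Type*} [DecidableEq γ] (s : Finset α) (t : Finset γ)
    (g : α → γ) (himg : s.image g = t)
    (hfib : ∀ b ∈ t, (s.filter fun a => g a = b).card = 2)
    (F : γ → ℕ) : ∑ a ∈ s, F (g a) = 2 * ∑ b ∈ t, F b := by
  rw [Finset.sum_comp, himg, Finset.mul_sum]
  exact Finset.sum_congr rfl fun b hb => by rw [hfib b hb, smul_eq_mul]

/-- Let `nk ≥ 2`, `c` any edge-colouring of `K_{2nk}` and `M` a perfect
matching. If the average weight over `M` exceeds the average weight over `E ∖ M` by more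
than `2`, then `M` admits a contradicting swap. -/
theorem average_weight_gap_gives_contradicting_swap
    (n k : ℕ) (hn : 0 < n) (hk : 0 < k) (hnk : 2 ≤ n * k)
    (c : Sym2 (Fin (2 * n * k)) → Fin k)
    (M : (⊤ : SimpleGraph (Fin (2 * n * k))).Subgraph) (hM : M.IsPerfectMatching)
    (hgap :
      (∑ e ∈ M.edgeSet.toFinite.toFinset, (edgeWeight c M.edgeSet e : ℝ))
          / (M.edgeSet.ncard : ℝ)
        - (∑ e ∈ ((⊤ : SimpleGraph (Fin (2 * n * k))).edgeSet \ M.edgeSet).toFinite.toFinset,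
              (edgeWeight c M.edgeSet e : ℝ))
          / ((((⊤ : SimpleGraph (Fin (2 * n * k))).edgeSet \ M.edgeSet)).ncard : ℝ)
        > 2) :
    ∃ u v x y : Fin (2 * n * k), M.Adj u v ∧ M.Adj x y ∧ s(u, v) ≠ s(x, y) ∧
      edgeWeight c M.edgeSet s(u, v) + edgeWeight c M.edgeSet s(x, y)
        > edgeWeight c M.edgeSet s(u, x) + edgeWeight c M.edgeSet s(v, y) + 4 := by
  classical
  by_contra hcon
  push_neg at hcon
  set w : Sym2 (Fin (2 * n * k)) → ℕ := edgeWeight c M.edgeSet with hw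
  obtain ⟨hmat, hsp⟩ := hM
  have hex : ∀ v : Fin (2 * n * k), ∃! u, M.Adj v u := fun v => hmat (hsp v)
  set f : Fin (2 * n * k) → Fin (2 * n * k) := fun v => (hex v).choose with hf
  have hfadj : ∀ v, M.Adj v (f v) := fun v => (hex v).choose_spec.1
  have hadj_iff : ∀ v u, M.Adj v u ↔ u = f v := by
    intro v u
    constructor
    · exact fun h => (hex v).choose_spec.2 u h
    · rintro rfl; exact hfadj v
  have hfne : ∀ v, f v ≠ v := fun v => (M.adj_sub (hfadj v)).ne'
  have hff : ∀ v, f (f v) = v :=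
    fun v => ((hadj_iff (f v) v).1 (hfadj v).symm).symm
  -- the finsets
  set EM : Finset (Sym2 (Fin (2 * n * k))) := M.edgeSet.toFinite.toFinset with hEM
  set EC : Finset (Sym2 (Fin (2 * n * k))) :=
    ((⊤ : SimpleGraph (Fin (2 * n * k))).edgeSet \ M.edgeSet).toFinite.toFinset with hEC
  set Q : Fin (2 * n * k) → Finset (Fin (2 * n * k)) :=
    fun x => Finset.univ.filter (fun y => y ≠ x ∧ y ≠ f x) with hQ
  set P : Finset ((_ : Fin (2 * n * k)) × Fin (2 * n * k)) := Finset.univ.sigma Q with hP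
  have hmemQ : ∀ x y, y ∈ Q x ↔ y ≠ x ∧ y ≠ f x := by
    intro x y; simp [hQ]
  have hmemP : ∀ p : (_ : Fin (2 * n * k)) × Fin (2 * n * k), p ∈ P ↔ p.2 ≠ p.1 ∧ p.2 ≠ f p.1 := by
    intro p; cases p with
    | mk x y => simp [hP, Finset.mem_sigma, hmemQ]
  -- image and fibre facts for the matching edges
  have himgM : Finset.univ.image (fun x => s(x, f x)) = EM := by
    ext e
    induction e using Sym2.ind with
    | _ u v =>
      simp only [Finset.mem_image, Finset.mem_univ, true_and, hEM,
        Set.Finite.mem_toFinset, SimpleGraph.Subgraph.mem_edgeSet]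
      constructor
      · rintro ⟨x, hx⟩
        rw [Sym2.eq_iff] at hx
        rcases hx with ⟨rfl, rfl⟩ | ⟨rfl, rfl⟩
        · exact hfadj x
        · exact (hfadj x).symm
      · intro h
        exact ⟨u, by rw [(hadj_iff u v).1 h]⟩
  have hfibM : ∀ e ∈ EM, (Finset.univ.filter fun x => s(x, f x) = e).card = 2 := by
    intro e
    induction e using Sym2.ind with
    | _ u v =>
      intro he
      simp only [hEM, Set.Finite.mem_toFinset, SimpleGraph.Subgraph.mem_edgeSet] at he
      have hv : v = f u := (hadj_iff u v).1 he
      subst hv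
      have heq : (Finset.univ.filter fun x => s(x, f x) = s(u, f u)) = {u, f u} := by
        ext x
        simp only [Finset.mem_filter, Finset.mem_univ, true_and, Finset.mem_insert,
          Finset.mem_singleton, Sym2.eq_iff]
        constructor
        · rintro (⟨rfl, -⟩ | ⟨rfl, -⟩)
          · exact Or.inl rfl
          · exact Or.inr rfl
        · rintro (rfl | rfl)
          · exact Or.inl ⟨rfl, rfl⟩
          · exact Or.inr ⟨rfl, hff u⟩
      rw [heq, Finset.card_pair (hfne u).symm]
  -- image and fibre facts for the non-matching edges
  have himgC : P.image (fun p => s(p.1, p.2)) = EC := by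
    ext e
    induction e using Sym2.ind with
    | _ u v =>
      simp only [Finset.mem_image, hEC, Set.Finite.mem_toFinset, Set.mem_diff,
        SimpleGraph.mem_edgeSet, SimpleGraph.Subgraph.mem_edgeSet, SimpleGraph.top_adj]
      constructor
      · rintro ⟨p, hp, he⟩
        rw [hmemP] at hp
        rw [Sym2.eq_iff] at he
        rcases he with ⟨h1, h2⟩ | ⟨h1, h2⟩
        · subst h1; subst h2
          refine ⟨hp.1.symm, fun hadj => hp.2 ((hadj_iff _ _).1 hadj)⟩
        · subst h1; subst h2
          refine ⟨hp.1, fun hadj => hp.2 ((hadj_iff _ _).1 hadj.symm)⟩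
      · rintro ⟨hne, hnadj⟩
        refine ⟨⟨u, v⟩, ?_, rfl⟩
        rw [hmemP]
        exact ⟨Ne.symm hne, fun hyf => hnadj ((hadj_iff u v).2 hyf)⟩
  have hfibC : ∀ e ∈ EC, (P.filter fun p => s(p.1, p.2) = e).card = 2 := by
    intro e
    induction e using Sym2.ind with
    | _ u v =>
      intro he
      simp only [hEC, Set.Finite.mem_toFinset, Set.mem_diff, SimpleGraph.mem_edgeSet,
        SimpleGraph.Subgraph.mem_edgeSet, SimpleGraph.top_adj] at he
      obtain ⟨hne, hnadj⟩ := he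
      have hvfu : v ≠ f u := fun hyf => hnadj ((hadj_iff u v).2 hyf)
      have hufv : u ≠ f v := fun hxf => hnadj (((hadj_iff v u).2 hxf).symm)
      have heq : (P.filter fun p => s(p.1, p.2) = s(u, v)) =
          {⟨u, v⟩, ⟨v, u⟩} := by
        ext p
        cases p with
        | mk x y =>
          simp only [Finset.mem_filter, hmemP, Finset.mem_insert, Finset.mem_singleton,
            Sym2.eq_iff, Sigma.mk.inj_iff, heq_eq_eq]
          constructor
          · rintro ⟨-, (⟨rfl, rfl⟩ | ⟨rfl, rfl⟩)⟩
            · exact Or.inl ⟨rfl, rfl⟩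
            · exact Or.inr ⟨rfl, rfl⟩
          · rintro (⟨rfl, rfl⟩ | ⟨rfl, rfl⟩)
            · exact ⟨⟨Ne.symm hne, hvfu⟩, Or.inl ⟨rfl, rfl⟩⟩
            · exact ⟨⟨hne, hufv⟩, Or.inr ⟨rfl, rfl⟩⟩
      rw [heq]
      rw [Finset.card_insert_of_notMem (by simp [hne]), Finset.card_singleton]
  -- counting
  have hcard1 : 2 * n * k = 2 * EM.card := by
    have := sum_two_to_one Finset.univ EM (fun x => s(x, f x)) himgM hfibM (fun _ => 1)
    simpa [Finset.card_univ] using this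
  have hQcard : ∀ x, (Q x).card = 2 * n * k - 2 := by
    intro x
    have : Q x = Finset.univ \ {x, f x} := by
      ext y
      simp [hmemQ, not_or, and_comm]
    rw [this, Finset.card_sdiff_of_subset (Finset.subset_univ _), Finset.card_univ]
    simp [Finset.card_pair (hfne x).symm]
  have hPcard : P.card = (2 * n * k) * (2 * n * k - 2) := by
    rw [hP, Finset.card_sigma]
    simp [hQcard, Finset.card_univ, mul_comm]
  have hcard2 : P.card = 2 * EC.card := by
    have := sum_two_to_one P EC (fun p => s(p.1, p.2)) himgC hfibC (fun _ => 1)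
    simpa using this
  -- main sums
  set g : ℕ := ∑ e ∈ EM, w e with hg
  set S : ℕ := ∑ e ∈ EC, w e with hS
  have hA : ∑ x : Fin (2 * n * k), w s(x, f x) = 2 * g :=
    sum_two_to_one Finset.univ EM (fun x => s(x, f x)) himgM hfibM w
  have hB : ∑ p ∈ P, w s(p.1, p.2) = 2 * S :=
    sum_two_to_one P EC (fun p => s(p.1, p.2)) himgC hfibC w
  have hL1 : ∑ p ∈ P, w s(p.1, f p.1) = (2 * n * k - 2) * (2 * g) := by
    rw [hP, Finset.sum_sigma]
    calc ∑ x : Fin (2 * n * k), ∑ _y ∈ Q x, w s(x, f x)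
        = ∑ x : Fin (2 * n * k), (2 * n * k - 2) * w s(x, f x) := by
          refine Finset.sum_congr rfl fun x _ => ?_
          rw [Finset.sum_const, hQcard x, smul_eq_mul]
      _ = (2 * n * k - 2) * (2 * g) := by rw [← Finset.mul_sum, hA]
  have hL2 : ∑ p ∈ P, w s(p.2, f p.2) = (2 * n * k - 2) * (2 * g) := by
    rw [← hL1]
    refine Finset.sum_nbij' (fun p => ⟨p.2, p.1⟩) (fun p => ⟨p.2, p.1⟩) ?_ ?_ ?_ ?_ ?_
    · rintro ⟨x, y⟩ hp
      simp only [hmemP] at hp ⊢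
      exact ⟨hp.1.symm, fun h => hp.2 (by rw [h, hff])⟩
    · rintro ⟨x, y⟩ hp
      simp only [hmemP] at hp ⊢
      exact ⟨hp.1.symm, fun h => hp.2 (by rw [h, hff])⟩
    · rintro ⟨x, y⟩ _; rfl
    · rintro ⟨x, y⟩ _; rfl
    · rintro ⟨x, y⟩ _; rfl
  have hR2 : ∑ p ∈ P, w s(f p.1, f p.2) = 2 * S := by
    rw [← hB]
    refine Finset.sum_nbij' (fun p => ⟨f p.1, f p.2⟩) (fun p => ⟨f p.1, f p.2⟩) ?_ ?_ ?_ ?_ ?_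
    · rintro ⟨x, y⟩ hp
      simp only [hmemP] at hp ⊢
      constructor
      · intro h
        exact hp.1 (by have := congrArg f h; rwa [hff, hff] at this)
      · intro h
        rw [hff] at h
        exact hp.2 (by have := congrArg f h; rwa [hff] at this)
    · rintro ⟨x, y⟩ hp
      simp only [hmemP] at hp ⊢
      constructor
      · intro h
        exact hp.1 (by have := congrArg f h; rwa [hff, hff] at this)
      · intro h
        rw [hff] at h
        exact hp.2 (by have := congrArg f h; rwa [hff] at this)
    · rintro ⟨x, y⟩ _; simp only; rw [hff, hff]
    · rintro ⟨x, y⟩ _; simp only; rw [hff, hff]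
    · rintro ⟨x, y⟩ _; rfl
  -- the summed swap inequality
  have hswap : ∀ p ∈ P, w s(p.1, f p.1) + w s(p.2, f p.2)
      ≤ w s(p.1, p.2) + w s(f p.1, f p.2) + 4 := by
    intro p hp
    rw [hmemP] at hp
    have hedge : s(p.1, f p.1) ≠ s(p.2, f p.2) := by
      intro hcontra
      rw [Sym2.eq_iff] at hcontra
      rcases hcontra with ⟨h1, -⟩ | ⟨h1, h2⟩
      · exact hp.1 h1.symm
      · exact hp.2 h2.symm
    exact hcon p.1 (f p.1) p.2 (f p.2) (hfadj p.1) (hfadj p.2) hedge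
  have key : 2 * ((2 * n * k - 2) * (2 * g)) ≤ 2 * (2 * S) + P.card * 4 := by
    have := Finset.sum_le_sum hswap
    rw [Finset.sum_add_distrib, Finset.sum_add_distrib, Finset.sum_add_distrib,
      Finset.sum_const, hL1, hL2, hB, hR2, smul_eq_mul] at this
    linarith
  -- extract the sizes
  have hcard1' : n * k = EM.card := by
    have h : 2 * (n * k) = 2 * EM.card := by rw [← mul_assoc]; exact hcard1
    omega
  obtain ⟨t, ht⟩ : ∃ t, EM.card = t + 2 := ⟨EM.card - 2, by omega⟩
  have hNt : 2 * n * k = 2 * t + 4 := by rw [mul_assoc]; omega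
  have hN2 : 2 * n * k - 2 = 2 * t + 2 := by rw [mul_assoc]; omega
  have hECcard : EC.card = (t + 2) * (2 * t + 2) := by
    have h1 : 2 * EC.card = (2 * t + 4) * (2 * t + 2) := by
      rw [← hcard2, hPcard, hN2, hNt]
    have h2 : (2 * t + 4) * (2 * t + 2) = 2 * ((t + 2) * (2 * t + 2)) := by ring
    exact Nat.eq_of_mul_eq_mul_left (by norm_num) (h1.trans h2)
  have key2 : (2 * t + 2) * g ≤ S + (2 * t + 4) * (2 * t + 2) := by
    rw [hPcard, hN2, hNt] at key
    nlinarith [key]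
  -- rewrite the gap hypothesis
  have hgap' : (g : ℝ) / ((t : ℝ) + 2)
      - (S : ℝ) / (((t : ℝ) + 2) * (2 * (t : ℝ) + 2)) > 2 := by
    have e1 : M.edgeSet.ncard = EM.card := Set.ncard_eq_toFinset_card _ _
    have e2 : ((⊤ : SimpleGraph (Fin (2 * n * k))).edgeSet \ M.edgeSet).ncard = EC.card :=
      Set.ncard_eq_toFinset_card _ _
    rw [e1, e2, ht, hECcard] at hgap
    convert hgap using 3 <;> push_cast [hg, hS] <;> ring
  -- derive the contradiction
  have ha : (0 : ℝ) < (t : ℝ) + 2 := by positivity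
  have hb : (0 : ℝ) < ((t : ℝ) + 2) * (2 * (t : ℝ) + 2) := by positivity
  have key3 : (2 * (t : ℝ) + 2) * g ≤ S + (2 * (t : ℝ) + 4) * (2 * (t : ℝ) + 2) := by
    exact_mod_cast key2
  have h2 : (g : ℝ) / ((t : ℝ) + 2)
      - (S : ℝ) / (((t : ℝ) + 2) * (2 * (t : ℝ) + 2)) ≤ 2 := by
    rw [div_sub_div _ _ ha.ne' hb.ne', div_le_iff₀ (by positivity)]
    nlinarith [mul_le_mul_of_nonneg_left key3 ha.le]
  linarith
end

section
/- Let n, k be positive integers with nk ≥ 2, let c : E(K_{2nk}) → {1,…,k} be a colour-balanced edge-colouring, and let M be a perfect matching of K_{2nk} that admits no contradicting swap. Then g(M) ≤ n²k + 4nk(nk−1)/(2nk−1). -/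
private lemma fiber_sum {α β : Type*} [DecidableEq β] {R : Type*} [AddCommMonoid R]
    (s : Finset α) (t : Finset β) (φ : α → β) (f : β → R)
    (h : ∀ a ∈ s, φ a ∈ t) :
    ∑ a ∈ s, f (φ a) = ∑ b ∈ t, (s.filter fun a => φ a = b).card • f b := by
  classical
  rw [← Finset.sum_fiberwise_of_maps_to h (fun a => f (φ a))]
  refine Finset.sum_congr rfl fun b _ => ?_
  rw [Finset.sum_congr rfl (fun a ha => by rw [(Finset.mem_filter.mp ha).2]),
    Finset.sum_const]

set_option maxHeartbeats 1000000 in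
/-- Let `nk ≥ 2`, `c` a colour-balanced edge-colouring of `K_{2nk}`, and `M`
a perfect matching admitting no contradicting swap. Then
`g(M) ≤ n²k + 4nk(nk−1)/(2nk−1)`. -/
theorem g_bound_of_no_contradicting_swap
    (n k : ℕ) (hn : 0 < n) (hk : 0 < k) (hnk : 2 ≤ n * k)
    (c : Sym2 (Fin (2 * n * k)) → Fin k)
    (hc : ∀ i : Fin k,
      (((⊤ : SimpleGraph (Fin (2 * n * k))).edgeSet ∩ {e | c e = i}).ncard
        = (2 * n * k).choose 2 / k))
    (M : (⊤ : SimpleGraph (Fin (2 * n * k))).Subgraph) (hM : M.IsPerfectMatching)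
    (hswap : ∀ u v x y : Fin (2 * n * k), M.Adj u v → M.Adj x y → s(u, v) ≠ s(x, y) →
      edgeWeight c M.edgeSet s(u, v) + edgeWeight c M.edgeSet s(x, y)
          ≤ edgeWeight c M.edgeSet s(u, x) + edgeWeight c M.edgeSet s(v, y) + 4 ∧
      edgeWeight c M.edgeSet s(u, v) + edgeWeight c M.edgeSet s(x, y)
          ≤ edgeWeight c M.edgeSet s(u, y) + edgeWeight c M.edgeSet s(v, x) + 4) :
    ((∑ e ∈ M.edgeSet.toFinite.toFinset, edgeWeight c M.edgeSet e : ℕ) : ℝ)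
      ≤ (n : ℝ) ^ 2 * k + 4 * n * k * ((n : ℝ) * k - 1) / (2 * (n : ℝ) * k - 1) := by
  classical
  obtain ⟨p, hp, hup⟩ : ∃ p : Fin (2*n*k) → Fin (2*n*k),
      (∀ v, M.Adj v (p v)) ∧ ∀ v y, M.Adj v y → y = p v := by
    choose p h1 h2 using fun v => (SimpleGraph.Subgraph.isPerfectMatching_iff.mp hM) v
    exact ⟨p, h1, h2⟩
  have hne : ∀ v, v ≠ p v := fun v => (hp v).ne
  have pp : ∀ v, p (p v) = v := fun v => ((hup (p v) v ((hp v).symm))).symm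
  have hpbij : Function.Bijective p := Function.Involutive.bijective pp
  set ME := M.edgeSet.toFinite.toFinset with hMEdef
  set TE := (⊤ : SimpleGraph (Fin (2*n*k))).edgeSet.toFinite.toFinset with hTEdef
  set m : Fin k → ℕ := fun i => (M.edgeSet ∩ {e' | c e' = i}).ncard with hm
  have hwm : ∀ e, edgeWeight c M.edgeSet e = m (c e) := fun e => by simp only [hm]; rfl
  set W : Sym2 (Fin (2*n*k)) → ℝ := fun e => (edgeWeight c M.edgeSet e : ℝ) with hW
  have hWsymm : ∀ a b, W s(a, b) = W s(b, a) := fun a b => by rw [Sym2.eq_swap]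
  -- translating ncards to finset cards
  have hmf : ∀ i, m i = (ME.filter fun e => c e = i).card := by
    intro i
    have h1 : ((M.edgeSet.toFinite).inter_of_left {e' | c e' = i}).toFinset
        = ME.filter fun e => c e = i := by
      ext e
      simp only [hMEdef, Set.Finite.mem_toFinset, Set.mem_inter_iff, Set.mem_setOf_eq,
        Finset.mem_filter]
    simp only [hm]
    rw [Set.ncard_eq_toFinset_card _ ((M.edgeSet.toFinite).inter_of_left _), h1]
  have hchoose : (2*n*k).choose 2 / k = n * (2*n*k - 1) := by
    have h1 : (2*n*k).choose 2 = k * (n * (2*n*k-1)) := by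
      rw [Nat.choose_two_right]
      have h2 : 2*n*k * (2*n*k - 1) = 2 * (k * (n * (2*n*k-1))) := by
        generalize (2*n*k - 1) = t; ring
      rw [h2, Nat.mul_div_cancel_left _ (by norm_num)]
    rw [h1, Nat.mul_div_cancel_left _ hk]
  have hcf : ∀ i, (TE.filter fun e => c e = i).card = n * (2*n*k-1) := by
    intro i
    have h2 := hc i
    rw [Set.ncard_eq_toFinset_card _
      ((((⊤ : SimpleGraph (Fin (2*n*k))).edgeSet).toFinite).inter_of_left _)] at h2
    have h1 : ((((⊤ : SimpleGraph (Fin (2*n*k))).edgeSet).toFinite).inter_of_left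
        {e | c e = i}).toFinset = TE.filter fun e => c e = i := by
      ext e
      simp only [hTEdef, Set.Finite.mem_toFinset, Set.mem_inter_iff, Set.mem_setOf_eq,
        Finset.mem_filter]
    rw [h1] at h2
    rw [h2, hchoose]
  -- fibers of v ↦ s(v, p v) over ME all have size 2
  have hfib1 : ∀ e ∈ ME, ((Finset.univ : Finset (Fin (2*n*k))).filter
      fun v => s(v, p v) = e).card = 2 := by
    intro e he
    rw [hMEdef, Set.Finite.mem_toFinset] at he
    revert he
    induction e using Sym2.ind with
    | _ a b =>
      intro he
      rw [SimpleGraph.Subgraph.mem_edgeSet] at he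
      have hab : a ≠ b := he.ne
      have hpa : p a = b := (hup a b he).symm
      have hpb : p b = a := (hup b a he.symm).symm
      have h1 : (Finset.univ.filter fun v => s(v, p v) = s(a,b)) = {a, b} := by
        ext v
        simp only [Finset.mem_filter, Finset.mem_univ, true_and, Finset.mem_insert,
          Finset.mem_singleton, Sym2.eq_iff]
        constructor
        · rintro (⟨h1, h2⟩ | ⟨h1, h2⟩)
          · exact Or.inl h1
          · exact Or.inr h1
        · rintro (rfl | rfl)
          · exact Or.inl ⟨rfl, hpa⟩
          · exact Or.inr ⟨rfl, hpb⟩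
      rw [h1, Finset.card_pair hab]
  have hmaps1 : ∀ v ∈ (Finset.univ : Finset (Fin (2*n*k))), s(v, p v) ∈ ME := fun v _ => by
    rw [hMEdef, Set.Finite.mem_toFinset]
    exact SimpleGraph.Subgraph.mem_edgeSet.mpr (hp v)
  -- |ME| = nk
  have hMEcard : ME.card = n * k := by
    have h1 := fiber_sum (Finset.univ : Finset (Fin (2*n*k))) ME (fun v => s(v, p v))
      (fun _ => (1:ℕ)) hmaps1
    have h2 : ∑ e ∈ ME, ((Finset.univ.filter fun v => s(v, p v) = e).card • (1:ℕ))
        = ∑ _e ∈ ME, 2 :=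
      Finset.sum_congr rfl fun e he => by rw [hfib1 e he, smul_eq_mul, mul_one]
    rw [h2] at h1
    simp only [Finset.sum_const, smul_eq_mul, mul_one, Finset.card_univ,
      Fintype.card_fin] at h1
    have h4 : ME.card * 2 = (n * k) * 2 := by rw [← h1]; ring
    exact Nat.eq_of_mul_eq_mul_right (by norm_num) h4
  have hsum_mi : ∑ i : Fin k, m i = n * k := by
    calc ∑ i : Fin k, m i = ∑ i : Fin k, (ME.filter fun e => c e = i).card :=
          Finset.sum_congr rfl fun i _ => hmf i
      _ = ME.card := (Finset.card_eq_sum_card_fiberwise fun e _ => Finset.mem_univ (c e)).symm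
      _ = n * k := hMEcard
  -- the vertex sum VG equals twice the edge sum g
  set g : ℝ := ∑ e ∈ ME, W e with hgdef
  set VG : ℝ := ∑ v : Fin (2*n*k), W s(v, p v) with hVGdef
  have hVG : VG = 2 * g := by
    rw [hVGdef, fiber_sum (Finset.univ : Finset (Fin (2*n*k))) ME (fun v => s(v, p v)) W hmaps1,
      hgdef, Finset.mul_sum]
    refine Finset.sum_congr rfl fun e he => ?_
    rw [hfib1 e he]
    simp
  -- the total sum over all edges of K_{2nk}
  set ES : ℝ := ∑ e ∈ TE, W e with hESdef
  have hESval : ES = (n : ℝ) * ((2*n*k - 1 : ℕ) : ℝ) * (n * k) := by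
    have h1 := fiber_sum TE (Finset.univ : Finset (Fin k)) c (fun i => (m i : ℝ))
      (fun e _ => Finset.mem_univ _)
    have h0 : ES = ∑ e ∈ TE, ((m (c e) : ℕ) : ℝ) := by
      rw [hESdef]; exact Finset.sum_congr rfl fun e _ => by simp only [hW, hwm]
    beta_reduce at h1
    rw [h0, h1]
    calc ∑ i : Fin k, (TE.filter fun e => c e = i).card • ((m i : ℕ) : ℝ)
        = ∑ i : Fin k, ((n * (2*n*k-1) : ℕ) : ℝ) * ((m i : ℕ) : ℝ) :=
          Finset.sum_congr rfl fun i _ => by rw [hcf i, nsmul_eq_mul]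
      _ = ((n * (2*n*k-1) : ℕ) : ℝ) * (((∑ i : Fin k, m i : ℕ)) : ℝ) := by
          rw [← Finset.mul_sum, Nat.cast_sum]
      _ = _ := by rw [hsum_mi]; push_cast; ring
  -- helper sums
  have hcardW : ∀ (r : ℝ), ∑ _x : Fin (2*n*k), r = (2*(n:ℝ)*k) * r := by
    intro r
    rw [Finset.sum_const, Finset.card_univ, Fintype.card_fin, nsmul_eq_mul]
    push_cast; ring
  have hsd2 : ∀ (u : Fin (2*n*k)) (f : Fin (2*n*k) → ℝ),
      ∑ x ∈ Finset.univ \ {u, p u}, f x = (∑ x : Fin (2*n*k), f x) - f u - f (p u) := by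
    intro u f
    rw [Finset.sum_sdiff_eq_sub (Finset.subset_univ _), Finset.sum_pair (hne u)]
    ring
  have hsd1 : ∀ (u : Fin (2*n*k)) (f : Fin (2*n*k) → ℝ),
      ∑ x ∈ Finset.univ \ {u}, f x = (∑ x : Fin (2*n*k), f x) - f u := by
    intro u f
    rw [Finset.sum_sdiff_eq_sub (Finset.subset_univ _), Finset.sum_singleton]
  -- the off-diagonal pair sum equals twice the total edge sum
  set Toff : Finset (Fin (2*n*k) × Fin (2*n*k)) :=
    (Finset.univ ×ˢ Finset.univ).filter (fun q => q.2 ≠ q.1) with hToffdef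
  have hToffsum : ∀ F : Fin (2*n*k) × Fin (2*n*k) → ℝ,
      ∑ q ∈ Toff, F q = ∑ u : Fin (2*n*k), ∑ x ∈ Finset.univ \ {u}, F (u, x) := by
    intro F
    rw [hToffdef, Finset.sum_filter, Finset.sum_product]
    refine Finset.sum_congr rfl fun u _ => ?_
    rw [← Finset.sum_filter]
    refine Finset.sum_congr ?_ fun x _ => rfl
    ext x; simp [ne_comm]
  have hfib2 : ∀ e ∈ TE, (Toff.filter fun q => s(q.1, q.2) = e).card = 2 := by
    intro e he
    rw [hTEdef, Set.Finite.mem_toFinset] at he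
    revert he
    induction e using Sym2.ind with
    | _ a b =>
      intro he
      rw [SimpleGraph.mem_edgeSet, SimpleGraph.top_adj] at he
      have h1 : (Toff.filter fun q => s(q.1, q.2) = s(a, b)) = {(a, b), (b, a)} := by
        ext q
        obtain ⟨u, x⟩ := q
        simp only [hToffdef, Finset.mem_filter, Finset.mem_product, Finset.mem_univ, true_and,
          Finset.mem_insert, Finset.mem_singleton, Sym2.eq_iff, Prod.mk.injEq, ne_eq]
        constructor
        · rintro ⟨-, (⟨rfl, rfl⟩ | ⟨rfl, rfl⟩)⟩
          · exact Or.inl ⟨rfl, rfl⟩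
          · exact Or.inr ⟨rfl, rfl⟩
        · rintro (⟨rfl, rfl⟩ | ⟨rfl, rfl⟩)
          · exact ⟨fun h => he h.symm, Or.inl ⟨rfl, rfl⟩⟩
          · exact ⟨fun h => he h, Or.inr ⟨rfl, rfl⟩⟩
      rw [h1, Finset.card_pair (by simp [Prod.ext_iff]; intro h; exact absurd h he)]
  have hmaps2 : ∀ q ∈ Toff, s(q.1, q.2) ∈ TE := by
    intro q hq
    rw [hToffdef, Finset.mem_filter] at hq
    rw [hTEdef, Set.Finite.mem_toFinset, SimpleGraph.mem_edgeSet, SimpleGraph.top_adj]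
    exact fun h => hq.2 h.symm
  have hOff : ∑ q ∈ Toff, W s(q.1, q.2) = 2 * ES := by
    rw [fiber_sum Toff TE (fun q => s(q.1, q.2)) W hmaps2, hESdef, Finset.mul_sum]
    refine Finset.sum_congr rfl fun e he => ?_
    rw [hfib2 e he]
    simp
  have hOff' : ∑ q ∈ Toff, W s(q.1, q.2)
      = (∑ u : Fin (2*n*k), ∑ x : Fin (2*n*k), W s(u, x))
        - ∑ u : Fin (2*n*k), W s(u, u) := by
    rw [hToffsum (fun q => W s(q.1, q.2))]
    simp only
    rw [Finset.sum_congr rfl fun u (_ : u ∈ Finset.univ) => hsd1 u (fun x => W s(u, x))]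
    rw [Finset.sum_sub_distrib]
  -- the main double sum inequality coming from the no-contradicting-swap hypothesis
  have hmain : ∑ u : Fin (2*n*k), ∑ x ∈ Finset.univ \ {u, p u}, (W s(u, p u) + W s(x, p x))
      ≤ ∑ u : Fin (2*n*k), ∑ x ∈ Finset.univ \ {u, p u},
          (W s(u, x) + W s(p u, p x) + 4) := by
    refine Finset.sum_le_sum fun u _ => Finset.sum_le_sum fun x hx => ?_
    rw [Finset.mem_sdiff, Finset.mem_insert, Finset.mem_singleton] at hx
    push_neg at hx
    obtain ⟨-, hxu, hxpu⟩ := hx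
    have hne2 : s(u, p u) ≠ s(x, p x) := by
      intro h
      rcases Sym2.eq_iff.mp h with ⟨h1, h2⟩ | ⟨h1, h2⟩
      · exact hxu h1.symm
      · exact hxpu h2.symm
    have h4 := (hswap u (p u) x (p x) (hp u) (hp x) hne2).1
    simp only [hW]
    exact_mod_cast h4
  -- computing both sides of hmain
  have eqL : ∑ u : Fin (2*n*k), ∑ x ∈ Finset.univ \ {u, p u}, (W s(u, p u) + W s(x, p x))
      = (4*(n:ℝ)*k - 4) * VG := by
    have step : ∀ u : Fin (2*n*k), ∑ x ∈ Finset.univ \ {u, p u}, (W s(u, p u) + W s(x, p x))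
        = (2*(n:ℝ)*k - 4) * W s(u, p u) + VG := by
      intro u
      rw [hsd2 u (fun x => W s(u, p u) + W s(x, p x))]
      beta_reduce
      rw [Finset.sum_add_distrib, hcardW (W s(u, p u)), pp u, hWsymm (p u) u, ← hVGdef]
      ring
    rw [Finset.sum_congr rfl fun u _ => step u, Finset.sum_add_distrib, ← Finset.mul_sum,
      ← hVGdef, hcardW VG]
    ring
  have eqR : ∑ u : Fin (2*n*k), ∑ x ∈ Finset.univ \ {u, p u}, (W s(u, x) + W s(p u, p x) + 4)
      = 4 * ES - 2 * VG + (2*(n:ℝ)*k) * (2*(n:ℝ)*k*4 - 8) := by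
    have step : ∀ u : Fin (2*n*k),
        ∑ x ∈ Finset.univ \ {u, p u}, (W s(u, x) + W s(p u, p x) + 4)
        = (∑ x : Fin (2*n*k), W s(u, x)) + (∑ x : Fin (2*n*k), W s(p u, x))
          - W s(u, u) - W s(p u, p u) - 2 * W s(u, p u) + (2*(n:ℝ)*k*4 - 8) := by
      intro u
      rw [hsd2 u (fun x => W s(u, x) + W s(p u, p x) + 4)]
      beta_reduce
      rw [Finset.sum_add_distrib, Finset.sum_add_distrib, hcardW (4:ℝ),
        show (∑ x : Fin (2*n*k), W s(p u, p x)) = ∑ x : Fin (2*n*k), W s(p u, x) from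
          Fintype.sum_bijective p hpbij _ _ (fun x => rfl),
        pp u, hWsymm (p u) u]
      ring
    rw [Finset.sum_congr rfl fun u _ => step u]
    have hre1 : (∑ u : Fin (2*n*k), ∑ x : Fin (2*n*k), W s(p u, x))
        = ∑ u : Fin (2*n*k), ∑ x : Fin (2*n*k), W s(u, x) :=
      Fintype.sum_bijective p hpbij _ _ (fun u => rfl)
    have hre2 : (∑ u : Fin (2*n*k), W s(p u, p u)) = ∑ u : Fin (2*n*k), W s(u, u) :=
      Fintype.sum_bijective p hpbij _ _ (fun u => rfl)
    simp only [Finset.sum_add_distrib, Finset.sum_sub_distrib, hre1, hre2, hcardW,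
      ← Finset.mul_sum, ← hVGdef]
    have hDD := hOff'.symm.trans hOff
    nlinarith [hDD]
  -- put everything together
  have hposnk : (2:ℝ) ≤ (n:ℝ) * k := by exact_mod_cast hnk
  have key : (2*(n:ℝ)*k - 1) * g ≤ ES + (2*(n:ℝ)*k) * ((2*(n:ℝ)*k) - 2) := by
    rw [eqL, eqR, hVG] at hmain
    nlinarith [hmain]
  have h1le : (1:ℕ) ≤ 2*n*k := by
    have := Nat.mul_pos (Nat.mul_pos (by norm_num : 0 < 2) hn) hk
    omega
  have hES2 : ES = (n:ℝ) * (2*(n:ℝ)*k - 1) * ((n:ℝ) * k) := by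
    rw [hESval]
    rw [Nat.cast_sub h1le]
    push_cast
    ring
  have hgoal : ((∑ e ∈ ME, edgeWeight c M.edgeSet e : ℕ) : ℝ) = g := by
    rw [hgdef, Nat.cast_sum]
  rw [hgoal]
  have hpos : (0:ℝ) < 2*(n:ℝ)*k - 1 := by nlinarith
  have htarget : (n:ℝ) ^ 2 * k + 4 * n * k * ((n:ℝ) * k - 1) / (2 * (n:ℝ) * k - 1)
      = ((n:ℝ)^2 * k * (2*(n:ℝ)*k - 1) + 4 * n * k * ((n:ℝ)*k - 1)) / (2*(n:ℝ)*k - 1) := by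
    rw [add_div, mul_div_cancel_right₀ _ hpos.ne']
  rw [htarget, le_div_iff₀ hpos]
  nlinarith [key, hES2]
end

section
/- Let n, k be positive integers with nk ≥ 2, let c : E(K_{2nk}) → {1,…,k} be a colour-balanced edge-colouring, and let M be a perfect matching of K_{2nk} that admits no contradicting swap. Then Σ_{i=1}^k (m_i(M) − n)² < 2nk. -/
open Finset

lemma fiber_sum_s7 {β : Type*} {k : ℕ} (s : Finset β) (c : β → Fin k) (φ : Fin k → ℕ) :
    ∑ e ∈ s, φ (c e) = ∑ i : Fin k, (s.filter (fun e => c e = i)).card * φ i := by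
  classical
  rw [← Finset.sum_fiberwise_of_maps_to (fun x _ => Finset.mem_univ (c x)) (fun e => φ (c e))]
  refine Finset.sum_congr rfl fun i _ => ?_
  rw [Finset.sum_congr rfl (fun e he => by rw [(Finset.mem_filter.mp he).2]),
    Finset.sum_const, smul_eq_mul]

lemma double_count {α β : Type*} [DecidableEq β] (s : Finset α) (t : Finset β)
    (g : α → β) (φ : β → ℕ)
    (hmap : ∀ x ∈ s, g x ∈ t)
    (hfib : ∀ y ∈ t, (s.filter fun x => g x = y).card = 2) :
    ∑ x ∈ s, φ (g x) = 2 * ∑ y ∈ t, φ y := by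
  classical
  rw [← Finset.sum_fiberwise_of_maps_to hmap (fun x => φ (g x)), Finset.mul_sum]
  refine Finset.sum_congr rfl fun y hy => ?_
  rw [Finset.sum_congr rfl (fun x hx => by rw [(Finset.mem_filter.mp hx).2]),
    Finset.sum_const, hfib y hy, smul_eq_mul]

/-- Let `nk ≥ 2`, `c` a colour-balanced edge-colouring of `K_{2nk}`, and `M`
a perfect matching admitting no contradicting swap. Then `∑ᵢ (mᵢ(M) − n)² < 2nk`. -/
theorem square_deviation_bound_of_no_contradicting_swap
    (n k : ℕ) (hn : 0 < n) (hk : 0 < k) (hnk : 2 ≤ n * k)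
    (c : Sym2 (Fin (2 * n * k)) → Fin k)
    (hc : ∀ i : Fin k,
      (((⊤ : SimpleGraph (Fin (2 * n * k))).edgeSet ∩ {e | c e = i}).ncard
        = (2 * n * k).choose 2 / k))
    (M : (⊤ : SimpleGraph (Fin (2 * n * k))).Subgraph) (hM : M.IsPerfectMatching)
    (hswap : ∀ u v x y : Fin (2 * n * k), M.Adj u v → M.Adj x y → s(u, v) ≠ s(x, y) →
      edgeWeight c M.edgeSet s(u, v) + edgeWeight c M.edgeSet s(x, y)
          ≤ edgeWeight c M.edgeSet s(u, x) + edgeWeight c M.edgeSet s(v, y) + 4 ∧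
      edgeWeight c M.edgeSet s(u, v) + edgeWeight c M.edgeSet s(x, y)
          ≤ edgeWeight c M.edgeSet s(u, y) + edgeWeight c M.edgeSet s(v, x) + 4) :
    ∑ i : Fin k, (((M.edgeSet ∩ {e | c e = i}).ncard : ℤ) - (n : ℤ)) ^ 2
      < 2 * (n : ℤ) * k := by
  classical
  -- the partner function of the perfect matching
  have hex : ∀ v : Fin (2 * n * k), ∃! w, M.Adj v w := fun v => hM.1 (hM.2 v)
  choose f hf hfu using hex
  have hfinv : ∀ v, f (f v) = v := fun v => (hfu (f v) v (hf v).symm).symm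
  have hfne : ∀ v, f v ≠ v := fun v => (M.adj_sub (hf v)).ne'
  have hNnk : 2 * n * k = 2 * (n * k) := by ring
  -- finsets of matching edges and of all edges
  set Mf : Finset (Sym2 (Fin (2 * n * k))) := (Set.toFinite M.edgeSet).toFinset with hMf
  set TF : Finset (Sym2 (Fin (2 * n * k))) :=
    (Set.toFinite (⊤ : SimpleGraph (Fin (2 * n * k))).edgeSet).toFinset with hTF
  have hmem_Mf : ∀ e, e ∈ Mf ↔ e ∈ M.edgeSet := fun e => Set.Finite.mem_toFinset _
  have hmem_TF : ∀ e, e ∈ TF ↔ ¬ e.IsDiag := by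
    intro e
    rw [hTF, Set.Finite.mem_toFinset, SimpleGraph.edgeSet_top]
    rfl
  -- the colour counts
  set m : Fin k → ℕ := fun i => (M.edgeSet ∩ {e | c e = i}).ncard with hm
  have hW : ∀ e, edgeWeight c M.edgeSet e = m (c e) := fun e => rfl
  have hmcard : ∀ i, m i = (Mf.filter (fun e => c e = i)).card := by
    intro i
    have h1 : M.edgeSet ∩ {e | c e = i} = ↑(Mf.filter (fun e => c e = i)) := by
      ext e; simp [hmem_Mf e]
    show (M.edgeSet ∩ {e | c e = i}).ncard = _
    rw [h1, Set.ncard_coe_finset]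
  -- size of each colour class among all edges
  have hchoose : (2 * n * k).choose 2 / k = n * (2 * n * k - 1) := by
    rw [Nat.choose_two_right]
    rw [show 2 * n * k * (2 * n * k - 1) = 2 * (n * k * (2 * n * k - 1)) by ring]
    rw [Nat.mul_div_cancel_left _ (by norm_num : 0 < 2)]
    rw [show n * k * (2 * n * k - 1) = k * (n * (2 * n * k - 1)) by ring]
    rw [Nat.mul_div_cancel_left _ hk]
  have hTcard : ∀ i, (TF.filter (fun e => c e = i)).card = n * (2 * n * k - 1) := by
    intro i
    have h1 : (⊤ : SimpleGraph (Fin (2 * n * k))).edgeSet ∩ {e | c e = i}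
        = ↑(TF.filter (fun e => c e = i)) := by
      ext e
      simp only [Finset.coe_filter, Set.mem_inter_iff, Set.mem_setOf_eq, hTF,
        Set.Finite.mem_toFinset]
    have := hc i
    rw [h1, Set.ncard_coe_finset, hchoose] at this
    exact this
  -- fibers of the map `u ↦ s(u, f u)` over matching edges
  have hMmap : ∀ u ∈ (univ : Finset (Fin (2 * n * k))), s(u, f u) ∈ Mf := by
    intro u _
    rw [hmem_Mf]
    exact (hf u)
  have hMfib : ∀ e ∈ Mf, ((univ : Finset (Fin (2 * n * k))).filter
      (fun u => s(u, f u) = e)).card = 2 := by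
    intro e he
    induction e using Sym2.ind with
    | _ a b =>
      have hab : M.Adj a b := (hmem_Mf _).mp he
      have hne : a ≠ b := (M.adj_sub hab).ne
      have hfa : f a = b := (hfu a b hab).symm
      have hfb : f b = a := (hfu b a hab.symm).symm
      have : (univ : Finset (Fin (2 * n * k))).filter (fun u => s(u, f u) = s(a, b))
          = {a, b} := by
        ext u
        simp only [Finset.mem_filter, Finset.mem_univ, true_and, Finset.mem_insert,
          Finset.mem_singleton, Sym2.eq_iff]
        constructor
        · rintro (⟨h1, _⟩ | ⟨h1, _⟩)
          · exact Or.inl h1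
          · exact Or.inr h1
        · rintro (rfl | rfl)
          · exact Or.inl ⟨rfl, hfa⟩
          · exact Or.inr ⟨rfl, hfb⟩
      rw [this, Finset.card_insert_of_notMem (by simpa using hne), Finset.card_singleton]
  -- cardinality facts
  have hMfcard : Mf.card = n * k := by
    have := double_count (univ : Finset (Fin (2 * n * k))) Mf (fun u => s(u, f u))
      (fun _ => 1) hMmap hMfib
    simp only [Finset.sum_const, smul_eq_mul, mul_one, Finset.card_univ,
      Fintype.card_fin] at this
    omega
  have hsum_m : ∑ i : Fin k, m i = n * k := by
    have := fiber_sum_s7 Mf c (fun _ => 1)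
    simp only [Finset.sum_const, smul_eq_mul, mul_one] at this
    rw [hMfcard] at this
    rw [Finset.sum_congr rfl (fun i _ => (hmcard i))]
    omega
  -- key quantities
  set S : ℕ := ∑ i : Fin k, m i * m i with hS
  set T : ℕ := ∑ e ∈ TF, m (c e) with hT
  set G : ℕ := ∑ u : Fin (2 * n * k), m (c s(u, f u)) with hG
  have hG2S : G = 2 * S := by
    rw [hG, double_count _ Mf (fun u => s(u, f u)) (fun e => m (c e)) hMmap hMfib,
      fiber_sum_s7 Mf c m, hS]
    congr 1
    exact Finset.sum_congr rfl fun i _ => by rw [← hmcard i]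
  have hTval : T = n * (2 * n * k - 1) * (n * k) := by
    rw [hT, fiber_sum_s7 TF c m]
    rw [Finset.sum_congr rfl (fun i _ => by rw [hTcard i]), ← Finset.mul_sum, hsum_m]
  -- the pair sets
  set D : Finset (Fin (2 * n * k) × Fin (2 * n * k)) :=
    univ.filter (fun p => p.2 ≠ p.1) with hD
  set P : Finset (Fin (2 * n * k) × Fin (2 * n * k)) :=
    univ.filter (fun p => p.2 ≠ p.1 ∧ p.2 ≠ f p.1) with hP
  -- the sum over D of cross weights is 2T
  have hDmap : ∀ p ∈ D, s(p.1, p.2) ∈ TF := by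
    intro p hp
    rw [hmem_TF, Sym2.mk_isDiag_iff]
    exact fun h => (Finset.mem_filter.mp hp).2 h.symm
  have hDfib : ∀ e ∈ TF, (D.filter (fun p => s(p.1, p.2) = e)).card = 2 := by
    intro e he
    induction e using Sym2.ind with
    | _ a b =>
      have hne : a ≠ b := fun h => ((hmem_TF _).mp he) (Sym2.mk_isDiag_iff.mpr h)
      have : D.filter (fun p => s(p.1, p.2) = s(a, b)) = {(a, b), (b, a)} := by
        ext p
        simp only [hD, Finset.filter_filter, Finset.mem_filter, Finset.mem_univ, true_and,
          Finset.mem_insert, Finset.mem_singleton, Sym2.eq_iff, Prod.ext_iff]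
        constructor
        · rintro ⟨_, (⟨h1, h2⟩ | ⟨h1, h2⟩)⟩
          · exact Or.inl ⟨h1, h2⟩
          · exact Or.inr ⟨h1, h2⟩
        · rintro (⟨h1, h2⟩ | ⟨h1, h2⟩) <;> subst h1 <;> subst h2
          · exact ⟨fun h => hne h.symm, Or.inl ⟨rfl, rfl⟩⟩
          · exact ⟨hne, Or.inr ⟨rfl, rfl⟩⟩
      rw [this, Finset.card_insert_of_notMem (by simp [Prod.ext_iff]; exact fun h _ => hne h),
        Finset.card_singleton]
  have hDT : ∑ p ∈ D, m (c s(p.1, p.2)) = 2 * T := by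
    rw [hT]
    exact double_count D TF (fun p => s(p.1, p.2)) (fun e => m (c e)) hDmap hDfib
  -- split D into P and the matched pairs
  have hsplit : (∑ p ∈ P, m (c s(p.1, p.2))) + G = 2 * T := by
    have h1 := Finset.sum_filter_add_sum_filter_not D (fun p => p.2 ≠ f p.1)
      (fun p => m (c s(p.1, p.2)))
    have hPD : D.filter (fun p => p.2 ≠ f p.1) = P := by
      rw [hD, hP, Finset.filter_filter]
    have hDM : ∑ p ∈ D.filter (fun p => ¬ p.2 ≠ f p.1), m (c s(p.1, p.2)) = G := by
      rw [hG]
      refine Finset.sum_nbij' (fun p => p.1) (fun u => (u, f u)) ?_ ?_ ?_ ?_ ?_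
      · intro a _; exact Finset.mem_univ _
      · intro u _
        simp [hD, hfne u]
      · intro p hp
        simp only [hD, Finset.mem_filter, not_not] at hp
        exact Prod.ext rfl hp.2.symm
      · intro u _; rfl
      · intro p hp
        simp only [hD, Finset.mem_filter, not_not] at hp
        rw [hp.2]
    rw [hPD, hDM] at h1
    rw [h1, hDT]
  -- the reflected cross sum equals the direct cross sum
  have hPB : ∑ p ∈ P, m (c s(f p.1, f p.2)) = ∑ p ∈ P, m (c s(p.1, p.2)) := by
    refine Finset.sum_nbij' (fun p => (f p.1, f p.2)) (fun p => (f p.1, f p.2)) ?_ ?_ ?_ ?_ ?_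
    · intro p hp
      simp only [hP, Finset.mem_filter, Finset.mem_univ, true_and] at hp ⊢
      constructor
      · intro h; exact hp.1 (by rw [← hfinv p.2, h, hfinv])
      · intro h; exact hp.2 (by rw [← hfinv p.2, h, hfinv])
    · intro p hp
      simp only [hP, Finset.mem_filter, Finset.mem_univ, true_and] at hp ⊢
      constructor
      · intro h; exact hp.1 (by rw [← hfinv p.2, h, hfinv])
      · intro h; exact hp.2 (by rw [← hfinv p.2, h, hfinv])
    · intro p _; exact Prod.ext (hfinv p.1) (hfinv p.2)
    · intro p _; exact Prod.ext (hfinv p.1) (hfinv p.2)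
    · intro p _; rfl
  -- counting the sections of P
  have hxcard : ∀ u : Fin (2 * n * k),
      ((univ : Finset (Fin (2 * n * k))).filter (fun x => x ≠ u ∧ x ≠ f u)).card
        = 2 * n * k - 2 := by
    intro u
    have h1 : (univ : Finset (Fin (2 * n * k))).filter (fun x => x ≠ u ∧ x ≠ f u)
        = ({u, f u} : Finset (Fin (2 * n * k)))ᶜ := by
      ext x
      simp [not_or]
    rw [h1, Finset.card_compl, Finset.card_insert_of_notMem (by simpa using (hfne u).symm),
      Finset.card_singleton, Fintype.card_fin]
  -- sums over P of the left-hand side terms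
  have hL1 : ∑ p ∈ P, m (c s(p.1, f p.1)) = (2 * n * k - 2) * G := by
    rw [hP, Finset.sum_filter, Fintype.sum_prod_type, hG, Finset.mul_sum]
    refine Finset.sum_congr rfl fun u _ => ?_
    rw [← Finset.sum_filter]
    show ∑ _x ∈ Finset.univ.filter (fun x => x ≠ u ∧ x ≠ f u), m (c s(u, f u)) = _
    rw [Finset.sum_const, hxcard u, smul_eq_mul]
  have hL2 : ∑ p ∈ P, m (c s(p.2, f p.2)) = (2 * n * k - 2) * G := by
    rw [hP, Finset.sum_filter, Fintype.sum_prod_type_right, hG, Finset.mul_sum]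
    refine Finset.sum_congr rfl fun x _ => ?_
    rw [← Finset.sum_filter]
    show ∑ _u ∈ Finset.univ.filter (fun u => x ≠ u ∧ x ≠ f u), m (c s(x, f x)) = _
    have h2 : (univ : Finset (Fin (2 * n * k))).filter (fun u => x ≠ u ∧ x ≠ f u)
        = (univ : Finset (Fin (2 * n * k))).filter (fun u => u ≠ x ∧ u ≠ f x) := by
      ext u
      simp only [Finset.mem_filter, Finset.mem_univ, true_and]
      constructor
      · rintro ⟨h1, h2⟩
        exact ⟨fun h => h1 h.symm, fun h => h2 (by rw [h, hfinv])⟩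
      · rintro ⟨h1, h2⟩
        exact ⟨fun h => h1 h.symm, fun h => h2 (by rw [h, hfinv])⟩
    rw [h2, Finset.sum_const, hxcard x, smul_eq_mul]
  have hP4 : ∑ p ∈ P, (4 : ℕ) = (2 * n * k) * ((2 * n * k - 2) * 4) := by
    rw [hP, Finset.sum_filter, Fintype.sum_prod_type,
      show (2 * n * k) * ((2 * n * k - 2) * 4) = ∑ _u : Fin (2 * n * k), ((2 * n * k - 2) * 4) by
        rw [Finset.sum_const, Finset.card_univ, Fintype.card_fin, smul_eq_mul]]
    refine Finset.sum_congr rfl fun u _ => ?_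
    rw [← Finset.sum_filter]
    show ∑ _x ∈ Finset.univ.filter (fun x => x ≠ u ∧ x ≠ f u), (4:ℕ) = _
    rw [Finset.sum_const, hxcard u, smul_eq_mul]
  -- the main inequality from the no-contradicting-swap assumption
  have key : ∑ p ∈ P, (m (c s(p.1, f p.1)) + m (c s(p.2, f p.2)))
      ≤ ∑ p ∈ P, (m (c s(p.1, p.2)) + m (c s(f p.1, f p.2)) + 4) := by
    refine Finset.sum_le_sum fun p hp => ?_
    simp only [hP, Finset.mem_filter, Finset.mem_univ, true_and] at hp
    have hne : s(p.1, f p.1) ≠ s(p.2, f p.2) := by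
      intro heq
      rw [Sym2.eq_iff] at heq
      rcases heq with (⟨h1, _⟩ | ⟨h1, h2⟩)
      · exact hp.1 h1.symm
      · exact hp.2 h2.symm
    have := (hswap p.1 (f p.1) p.2 (f p.2) (hf p.1) (hf p.2) hne).1
    simpa only [hW] using this
  -- assemble the numeric inequality
  have hineq : 2 * ((2 * n * k - 2) * G)
      ≤ 2 * (∑ p ∈ P, m (c s(p.1, p.2))) + (2 * n * k) * ((2 * n * k - 2) * 4) := by
    calc 2 * ((2 * n * k - 2) * G)
        = ∑ p ∈ P, (m (c s(p.1, f p.1)) + m (c s(p.2, f p.2))) := by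
          rw [Finset.sum_add_distrib, hL1, hL2]; ring
      _ ≤ ∑ p ∈ P, (m (c s(p.1, p.2)) + m (c s(f p.1, f p.2)) + 4) := key
      _ = 2 * (∑ p ∈ P, m (c s(p.1, p.2))) + (2 * n * k) * ((2 * n * k - 2) * 4) := by
          rw [Finset.sum_add_distrib, Finset.sum_add_distrib, hPB, hP4]; ring
  -- deduce S < n*n*k + 2*n*k
  have hSbound : (S : ℤ) < (n : ℤ) * ((n : ℤ) * k) + 2 * ((n : ℤ) * k) := by
    rw [hG2S] at hineq hsplit
    rw [hTval] at hsplit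
    have h2le : 2 ≤ 2 * n * k := by omega
    have h1le : 1 ≤ 2 * n * k := by omega
    have F1 : ((2 * ((2 * n * k - 2) * (2 * S)) : ℕ) : ℤ)
        ≤ ((2 * ∑ p ∈ P, m (c s(p.1, p.2)) + 2 * n * k * ((2 * n * k - 2) * 4) : ℕ) : ℤ) :=
      Nat.cast_le.mpr hineq
    have F2 : ((∑ p ∈ P, m (c s(p.1, p.2)) + 2 * S : ℕ) : ℤ)
        = ((2 * (n * (2 * n * k - 1) * (n * k)) : ℕ) : ℤ) := by exact_mod_cast hsplit
    push_cast [Nat.cast_sub h2le, Nat.cast_sub h1le] at F1 F2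
    obtain ⟨A, hA⟩ : ∃ a : ℤ, (∑ p ∈ P, ((m (c s(p.1, p.2)) : ℤ))) = a := ⟨_, rfl⟩
    obtain ⟨SZ, hSZ⟩ : ∃ a : ℤ, ((S : ℕ) : ℤ) = a := ⟨_, rfl⟩
    rw [hA, hSZ] at F1 F2
    rw [hSZ]
    have hx : (2 : ℤ) ≤ (n : ℤ) * k := by exact_mod_cast hnk
    have hn1 : (1 : ℤ) ≤ (n : ℤ) := by exact_mod_cast hn
    have hx0 : (0 : ℤ) < (n : ℤ) * k := by linarith
    have s1 : (2 * (n : ℤ) * k - 1) * SZ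
        ≤ (n : ℤ) * (2 * (n : ℤ) * k - 1) * ((n : ℤ) * k)
          + (2 * (n : ℤ) * k - 2) * (2 * (n : ℤ) * k) := by linarith only [F1, F2]
    have s2 : (2 * (n : ℤ) * k - 2) * (2 * (n : ℤ) * k)
        < (2 * (n : ℤ) * k - 1) * (2 * (n : ℤ) * k) :=
      mul_lt_mul_of_pos_right (by linarith) (by linarith)
    have s3 : (2 * (n : ℤ) * k - 1) * SZ
        < (2 * (n : ℤ) * k - 1) * ((n : ℤ) * ((n : ℤ) * k) + 2 * ((n : ℤ) * k)) := by
      linarith only [s1, s2]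
    have hpos : (0 : ℤ) < 2 * (n : ℤ) * k - 1 := by linarith
    exact lt_of_mul_lt_mul_left s3 (le_of_lt hpos)
  -- conclude
  have hgoal : ∀ i : Fin k, (M.edgeSet ∩ {e | c e = i}).ncard = m i := fun i => rfl
  have hZ : ∑ i : Fin k, (((M.edgeSet ∩ {e | c e = i}).ncard : ℤ) - (n : ℤ)) ^ 2
      = (S : ℤ) - (n : ℤ) * n * k := by
    simp only [hgoal]
    have e1 : ∀ i ∈ (univ : Finset (Fin k)), ((m i : ℤ) - n) ^ 2
        = (m i : ℤ) * (m i) - 2 * n * (m i) + n * n := fun i _ => by ring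
    rw [Finset.sum_congr rfl e1]
    rw [Finset.sum_add_distrib, Finset.sum_sub_distrib, ← Finset.mul_sum, Finset.sum_const,
      Finset.card_univ, Fintype.card_fin, nsmul_eq_mul]
    have e2 : (∑ i : Fin k, (m i : ℤ) * (m i)) = (S : ℤ) := by
      rw [hS]; push_cast; rfl
    have e3 : (∑ i : Fin k, (m i : ℤ)) = (n : ℤ) * k := by
      rw [← Nat.cast_sum, hsum_m, Nat.cast_mul]
    rw [e2, e3]
    ring
  rw [hZ]
  linarith [hSbound]
end

section
/- In the partition setup below, for all x, y, z ∈ {1,…,t} with x ≠ y, it is not the case that (x,z) ≃ (y,z), and it is not the case that (z,x) ≃ (z,y). In particular, the number s of ≃-equivalence classes of {1,…,t}² satisfies s ≥ 2t − 1. -/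
/-- `width(A) := max { m x − m y : x, y ∈ A }`. -/
noncomputable def setWidth {k : ℕ} (m : Fin k → ℤ) (A : Finset (Fin k)) : ℤ :=
  sSup {d : ℤ | ∃ x ∈ A, ∃ y ∈ A, d = m x - m y}

/-- `d(A, B) := min { |m x − m y| : x ∈ A, y ∈ B }`. -/
noncomputable def setDist {k : ℕ} (m : Fin k → ℤ) (A B : Finset (Fin k)) : ℤ :=
  sInf {d : ℤ | ∃ x ∈ A, ∃ y ∈ B, d = |m x - m y|}

/-- The relation `≻`: `(i,j) ≻ (i',j')` iff `m x + m y > m x' + m y' + 4` for all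
`x ∈ A i, y ∈ A j, x' ∈ A i', y' ∈ A j'`. -/
def succRel {k t : ℕ} (m : Fin k → ℤ) (A : Fin t → Finset (Fin k)) :
    Fin t × Fin t → Fin t × Fin t → Prop := fun p q =>
  ∀ x ∈ A p.1, ∀ y ∈ A p.2, ∀ x' ∈ A q.1, ∀ y' ∈ A q.2,
    m x' + m y' + 4 < m x + m y

/-- The relation `∼`: `≻`-incomparability. -/
def simRel {k t : ℕ} (m : Fin k → ℤ) (A : Fin t → Finset (Fin k)) :
    Fin t × Fin t → Fin t × Fin t → Prop := fun p q =>
  ¬ succRel m A p q ∧ ¬ succRel m A q p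

/-- The relation `≃`: the transitive closure of `∼`. -/
def simeqRel {k t : ℕ} (m : Fin k → ℤ) (A : Fin t → Finset (Fin k)) :
    Fin t × Fin t → Fin t × Fin t → Prop :=
  Relation.TransGen (simRel m A)



private lemma walk_bound {α : Type*} {G : SimpleGraph α} (g : α → ℤ) (c : ℤ)
    (h : ∀ a b, G.Adj a b → |g a - g b| ≤ c) :
    ∀ {a b : α} (w : G.Walk a b), |g a - g b| ≤ w.length * c := by
  intro a b w
  induction w with
  | nil => simp
  | @cons u v x hadj w ih =>
    have h1 := h _ _ hadj
    have : |g u - g x| ≤ |g u - g v| + |g v - g x| := by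
      calc |g u - g x| = |(g u - g v) + (g v - g x)| := by ring_nf
        _ ≤ _ := abs_add_le _ _
    simp only [SimpleGraph.Walk.length_cons]
    push_cast
    linarith

private lemma transGen_bound {α : Type*} [Fintype α] [DecidableEq α]
    {s : α → α → Prop} (hsymm : ∀ a b, s a b → s b a) {g : α → ℤ} {c : ℤ} (hc : 0 ≤ c)
    (hstep : ∀ a b, s a b → |g a - g b| ≤ c) {a b : α} (h : Relation.TransGen s a b) :
    |g a - g b| ≤ ((Fintype.card α - 1 : ℕ) : ℤ) * c := by
  by_cases hab : a = b
  · subst hab; simp; positivity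
  · set G : SimpleGraph α :=
      { Adj := fun x y => x ≠ y ∧ s x y
        symm := ⟨fun x y hxy => ⟨Ne.symm hxy.1, hsymm _ _ hxy.2⟩⟩
        loopless := ⟨fun x hx => hx.1 rfl⟩ } with hG
    have hR : Relation.ReflTransGen G.Adj a b := by
      clear hab
      induction h with
      | single hs =>
        rename_i c'
        by_cases hac : a = c'
        · subst hac; exact .refl
        · exact .single ⟨hac, hs⟩
      | tail h1 h2 ih =>
        rename_i b' c'
        by_cases hbc : b' = c'
        · subst hbc; exact ih
        · exact ih.tail ⟨hbc, h2⟩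
    have hreach : G.Reachable a b := (SimpleGraph.reachable_iff_reflTransGen a b).2 hR
    obtain ⟨w⟩ := hreach
    have hAdj : ∀ x y, G.Adj x y → |g x - g y| ≤ c := fun x y hxy => hstep _ _ hxy.2
    have hb := walk_bound g c hAdj w.toPath.1
    have hlen : w.toPath.1.length < Fintype.card α :=
      SimpleGraph.Walk.IsPath.length_lt w.toPath.2
    have hcard : 1 ≤ Fintype.card α := Fintype.card_pos_iff.2 ⟨a⟩
    calc |g a - g b| ≤ w.toPath.1.length * c := hb
      _ ≤ ((Fintype.card α - 1 : ℕ) : ℤ) * c := by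
          apply mul_le_mul_of_nonneg_right _ hc
          exact_mod_cast Nat.le_sub_one_of_lt hlen
private lemma width_spec {k : ℕ} (m : Fin k → ℤ) (A : Finset (Fin k))
    {x y : Fin k} (hx : x ∈ A) (hy : y ∈ A) : m x - m y ≤ setWidth m A := by
  have hsub : {d : ℤ | ∃ x ∈ A, ∃ y ∈ A, d = m x - m y} ⊆
      Set.range (fun p : Fin k × Fin k => m p.1 - m p.2) := by
    rintro d ⟨x, hx, y, hy, rfl⟩; exact ⟨(x, y), rfl⟩
  exact le_csSup ((Set.finite_range _).subset hsub).bddAbove ⟨x, hx, y, hy, rfl⟩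

private lemma width_nonneg {k : ℕ} (m : Fin k → ℤ) (A : Finset (Fin k))
    (hA : A.Nonempty) : 0 ≤ setWidth m A := by
  obtain ⟨x, hx⟩ := hA
  have := width_spec m A hx hx
  simpa using this

private lemma dist_le {k : ℕ} (m : Fin k → ℤ) (A B : Finset (Fin k))
    {x y : Fin k} (hx : x ∈ A) (hy : y ∈ B) : setDist m A B ≤ |m x - m y| := by
  have hb : BddBelow {d : ℤ | ∃ x ∈ A, ∃ y ∈ B, d = |m x - m y|} := by
    refine ⟨0, ?_⟩
    rintro d ⟨x, -, y, -, rfl⟩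
    positivity
  exact csInf_le hb ⟨x, hx, y, hy, rfl⟩

private lemma sum_pow_le (k : ℕ) (hk : 1 ≤ k) :
    ∀ l : ℕ, ∑ j ∈ Finset.Icc 1 l, (4 : ℤ) ^ (j * k) ≤ 2 * 4 ^ (l * k) := by
  intro l
  induction l with
  | zero => simp
  | succ n ih =>
    rw [Finset.sum_Icc_succ_top (by omega)]
    have h4 : (2 : ℤ) ≤ 4 ^ k := by
      calc (2:ℤ) ≤ 4 ^ 1 := by norm_num
        _ ≤ 4 ^ k := pow_le_pow_right₀ (by norm_num) hk
    have hpos : (0:ℤ) < 4 ^ (n * k) := by positivity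
    have hrw : (4 : ℤ) ^ ((n + 1) * k) = 4 ^ (n * k) * 4 ^ k := by
      rw [← pow_add]; ring_nf
    nlinarith [pow_pos (show (0:ℤ) < 4 by norm_num) ((n+1)*k)]

private lemma twelve_lemma : ∀ k : ℕ, 4 ≤ k → (12 * k * k : ℤ) ≤ 4 ^ k := by
  intro k hk
  induction k with
  | zero => omega
  | succ n ih =>
    rcases Nat.lt_or_ge n 4 with h | h
    · interval_cases n
      · omega
      · omega
      · omega
      · norm_num
    · have hn := ih (by omega)
      have h2 : ((n:ℤ)+1)^2 ≤ 2 * n^2 := by nlinarith [show (4:ℤ) ≤ n by exact_mod_cast h]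
      have : (4:ℤ)^(n+1) = 4 * 4^n := by ring
      push_cast
      nlinarith

private lemma eqvGen_reduce {α : Type*} {s : α → α → Prop} (hs : ∀ a b, s a b → s b a) :
    ∀ {a b : α}, Relation.EqvGen (Relation.TransGen s) a b →
      a = b ∨ Relation.TransGen s a b := by
  have tsymm : ∀ a b, Relation.TransGen s a b → Relation.TransGen s b a := by
    intro a b h
    induction h with
    | single h1 => exact .single (hs _ _ h1)
    | tail h1 h2 ih => exact (Relation.TransGen.single (hs _ _ h2)).trans ih
  intro a b h
  induction h with
  | rel _ _ h => exact Or.inr h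
  | refl _ => exact Or.inl rfl
  | symm x y _ ih => rcases ih with rfl | h; exacts [Or.inl rfl, Or.inr (tsymm _ _ h)]
  | trans x y z _ _ ih1 ih2 =>
    rcases ih1 with rfl | h1
    · exact ih2
    · rcases ih2 with rfl | h2
      · exact Or.inr h1
      · exact Or.inr (h1.trans h2)

/-- In the partition setup, for all `x ≠ y` and any `z`, neither
`(x,z) ≃ (y,z)` nor `(z,x) ≃ (z,y)`; in particular the number `s` of `≃`-equivalence
classes of `{1,…,t}²` satisfies `s ≥ 2t − 1`. -/
theorem simeq_classes_lower_bound
    (k t : ℕ) (hk : 4 ≤ k) (m : Fin k → ℤ)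
    (A : Fin t → Finset (Fin k))
    (hne : ∀ i : Fin t, (A i).Nonempty)
    (hpart : ∀ x : Fin k, ∃! i : Fin t, x ∈ A i)
    (horder : ∀ i j : Fin t, i < j → ∀ x ∈ A i, ∀ y ∈ A j, m y < m x)
    (hwidth : ∑ i : Fin t, setWidth m (A i)
      ≤ ∑ j ∈ Finset.Icc 1 (k - t), (4 : ℤ) ^ (j * k))
    (hsep : ∀ i j : Fin t, i ≠ j →
      (4 : ℤ) ^ ((k - t + 1) * k) < setDist m (A i) (A j)) :
    (∀ x y z : Fin t, x ≠ y →
      ¬ simeqRel m A (x, z) (y, z) ∧ ¬ simeqRel m A (z, x) (z, y)) ∧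
    2 * t - 1 ≤ Nat.card (Quot (simeqRel m A)) := by
  classical
  choose r hr using hne
  set D : ℤ := 4 ^ ((k - t + 1) * k) with hD
  set W : ℤ := ∑ i : Fin t, setWidth m (A i) with hWdef
  set f : Fin t × Fin t → ℤ := fun p => m (r p.1) + m (r p.2) with hf
  -- basic facts
  have hW0 : 0 ≤ W :=
    Finset.sum_nonneg fun i _ => width_nonneg m (A i) ⟨r i, hr i⟩
  have hwleW : ∀ i : Fin t, setWidth m (A i) ≤ W := fun i =>
    Finset.single_le_sum (fun j _ => width_nonneg m (A j) ⟨r j, hr j⟩) (Finset.mem_univ i)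
  have htk : t ≤ k := by
    have hinj : Function.Injective r := by
      intro i j hij
      obtain ⟨i₀, -, hu⟩ := hpart (r j)
      have h1 : i = i₀ := hu i (hij ▸ hr i)
      have h2 : j = i₀ := hu j (hr j)
      rw [h1, h2]
    simpa using Fintype.card_le_of_injective r hinj
  have hgap : ∀ i j : Fin t, i ≠ j → D < |m (r i) - m (r j)| := fun i j hij =>
    lt_of_lt_of_le (hsep i j hij) (dist_le m (A i) (A j) (hr i) (hr j))
  have hgap' : ∀ i j : Fin t, i < j → D < m (r i) - m (r j) := by
    intro i j hij
    have h1 := hgap i j (ne_of_lt hij)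
    have h2 : m (r j) < m (r i) := horder i j hij _ (hr i) _ (hr j)
    rwa [abs_of_pos (by linarith)] at h1
  -- step bound
  have hstep : ∀ p q : Fin t × Fin t, simRel m A p q → |f p - f q| ≤ 4 + 4 * W := by
    intro p q hpq
    have key : ∀ p q : Fin t × Fin t, ¬ succRel m A p q → f p - f q ≤ 4 + 4 * W := by
      intro p q h1
      unfold succRel at h1
      push_neg at h1
      obtain ⟨x, hx, y, hy, x', hx', y', hy', hle⟩ := h1
      have b1 : m (r p.1) - m x ≤ W := le_trans (width_spec m (A p.1) (hr p.1) hx) (hwleW p.1)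
      have b2 : m (r p.2) - m y ≤ W := le_trans (width_spec m (A p.2) (hr p.2) hy) (hwleW p.2)
      have b3 : m x' - m (r q.1) ≤ W := le_trans (width_spec m (A q.1) hx' (hr q.1)) (hwleW q.1)
      have b4 : m y' - m (r q.2) ≤ W := le_trans (width_spec m (A q.2) hy' (hr q.2)) (hwleW q.2)
      simp only [hf]
      linarith
    exact abs_le.2 ⟨by linarith [key q p hpq.2], by linarith [key p q hpq.1]⟩
  have hsymm : ∀ p q : Fin t × Fin t, simRel m A p q → simRel m A q p :=
    fun p q h => ⟨h.2, h.1⟩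
  -- global bound along equivalence
  set B : ℤ := ((Fintype.card (Fin t × Fin t) - 1 : ℕ) : ℤ) * (4 + 4 * W) with hB
  have hbound : ∀ p q : Fin t × Fin t, simeqRel m A p q → |f p - f q| ≤ B :=
    fun p q h => transGen_bound hsymm (by linarith) hstep h
  -- B ≤ D
  have hBD : B ≤ D := by
    have hcard : ((Fintype.card (Fin t × Fin t) - 1 : ℕ) : ℤ) ≤ (k : ℤ) * k := by
      have : Fintype.card (Fin t × Fin t) - 1 ≤ k * k := by
        simp only [Fintype.card_prod, Fintype.card_fin]
        have := Nat.mul_le_mul htk htk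
        omega
      exact_mod_cast le_trans (Nat.cast_le.2 this) (by push_cast; ring_nf; exact le_refl _)
    have hWle : W ≤ 2 * 4 ^ ((k - t) * k) :=
      le_trans hwidth (sum_pow_le k (by omega) (k - t))
    have hp : (0:ℤ) < 4 ^ ((k - t) * k) := by positivity
    have h44 : 4 + 4 * W ≤ 12 * 4 ^ ((k - t) * k) := by nlinarith
    have h12 := twelve_lemma k hk
    have hrw : D = 4 ^ ((k - t) * k) * 4 ^ k := by
      rw [hD, ← pow_add]; ring_nf
    have hc0 : (0:ℤ) ≤ ((Fintype.card (Fin t × Fin t) - 1 : ℕ) : ℤ) := Nat.cast_nonneg _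
    calc B ≤ ((k:ℤ) * k) * (12 * 4 ^ ((k - t) * k)) := by
            apply mul_le_mul hcard h44 (by linarith) (by positivity)
      _ = (12 * k * k) * 4 ^ ((k - t) * k) := by ring
      _ ≤ 4 ^ k * 4 ^ ((k - t) * k) := by
            apply mul_le_mul_of_nonneg_right h12 (by positivity)
      _ = D := by rw [hrw]; ring
  have hB0 : 0 ≤ B := mul_nonneg (Nat.cast_nonneg _) (by linarith)
  -- Part 1
  have part1 : ∀ x y z : Fin t, x ≠ y →
      ¬ simeqRel m A (x, z) (y, z) ∧ ¬ simeqRel m A (z, x) (z, y) := by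
    intro x y z hxy
    have hgxy := hgap x y hxy
    constructor
    · intro h
      have h1 := hbound _ _ h
      have h2 : f (x, z) - f (y, z) = m (r x) - m (r y) := by simp only [hf]; ring
      rw [h2] at h1
      linarith
    · intro h
      have h1 := hbound _ _ h
      have h2 : f (z, x) - f (z, y) = m (r x) - m (r y) := by simp only [hf]; ring
      rw [h2] at h1
      linarith
  refine ⟨part1, ?_⟩
  -- Part 2
  have ht1 : 1 ≤ t := by
    obtain ⟨i, -, -⟩ := hpart ⟨0, by omega⟩
    have : Nonempty (Fin t) := ⟨i⟩
    have h0 := Fintype.card_pos_iff.2 this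
    simp at h0
    omega
  set idx : ℕ → Fin t := fun n => ⟨min n (t - 1), by omega⟩ with hidx
  set q : ℕ → Fin t × Fin t := fun i => (idx ((i + 1) / 2), idx (i / 2)) with hq
  have hidxlt : ∀ a : ℕ, a + 1 ≤ t - 1 → idx a < idx (a + 1) := by
    intro a ha
    simp only [hidx, Fin.mk_lt_mk]
    omega
  have hstep2 : ∀ i : ℕ, i + 1 ≤ 2 * t - 2 → f (q (i + 1)) + D < f (q i) := by
    intro i hi
    rcases Nat.even_or_odd i with ⟨a, rfl⟩ | ⟨a, rfl⟩
    · -- i = a + a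
      have e1 : (a + a + 1) / 2 = a := by omega
      have e2 : (a + a) / 2 = a := by omega
      have e3 : (a + a + 1 + 1) / 2 = a + 1 := by omega
      have hlt : idx a < idx (a + 1) := hidxlt a (by omega)
      have hg := hgap' (idx a) (idx (a + 1)) hlt
      simp only [hq, hf, e1, e2, e3]
      linarith
    · -- i = 2a + 1
      have e1 : (2 * a + 1 + 1) / 2 = a + 1 := by omega
      have e2 : (2 * a + 1) / 2 = a := by omega
      have e3 : (2 * a + 1 + 1 + 1) / 2 = a + 1 := by omega
      have hlt : idx a < idx (a + 1) := hidxlt a (by omega)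
      have hg := hgap' (idx a) (idx (a + 1)) hlt
      simp only [hq, hf, e1, e2, e3]
      linarith
  have hD0 : 0 < D := by positivity
  have hmono : ∀ i j : ℕ, i < j → j ≤ 2 * t - 2 → f (q j) + D < f (q i) := by
    intro i j
    induction j with
    | zero => omega
    | succ n ih =>
      intro hij hn
      rcases Nat.lt_or_ge i n with h | h
      · have h1 := ih h (by omega)
        have h2 := hstep2 n (by omega)
        linarith
      · have : i = n := by omega
        subst this
        exact hstep2 i hn
  set F : Fin (2 * t - 1) → Quot (simeqRel m A) := fun i => Quot.mk _ (q i.val) with hF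
  have hcontra : ∀ i j : Fin (2 * t - 1), i.val < j.val → F i ≠ F j := by
    intro i j hij hFeq
    have hjb : j.val ≤ 2 * t - 2 := by omega
    have hm := hmono i.val j.val hij hjb
    have := Quot.eqvGen_exact hFeq
    rcases eqvGen_reduce hsymm this with heq | hsim
    · rw [heq] at hm; linarith
    · have h1 := hbound _ _ hsim
      have : f (q i.val) - f (q j.val) ≤ B := le_trans (le_abs_self _) h1
      linarith
  have hinjF : Function.Injective F := by
    intro i j hij
    rcases lt_trichotomy i.val j.val with h | h | h
    · exact absurd hij (hcontra i j h)
    · exact Fin.ext h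
    · exact absurd hij.symm (hcontra j i h)
  have hfin : Finite (Quot (simeqRel m A)) :=
    Finite.of_surjective (Quot.mk _) Quot.mk_surjective
  calc 2 * t - 1 = Nat.card (Fin (2 * t - 1)) := by simp
    _ ≤ Nat.card (Quot (simeqRel m A)) := Nat.card_le_card_of_injective F hinjF
end

section
/- Let t ≥ 1 and let T be a t×t matrix with integer entries such that in every row the sum of the absolute values of the entries is at most 4. Then every nonzero real eigenvalue λ of T satisfies |λ| ≥ 4^{1−t}. -/
open Polynomial Matrix

private lemma multiset_norm_prod (s : Multiset ℂ) : ‖s.prod‖ = (s.map norm).prod := by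
  induction s using Multiset.induction with
  | empty => simp
  | cons a s ih => simp [norm_mul, ih]

private lemma multiset_prod_le_pow (r : ℝ) (hr : 1 ≤ r) (s : Multiset ℂ)
    (h : ∀ x ∈ s, ‖x‖ ≤ r) : (s.map norm).prod ≤ r ^ Multiset.card s := by
  induction s using Multiset.induction with
  | empty => simp
  | cons a s ih =>
    simp only [Multiset.map_cons, Multiset.prod_cons, Multiset.card_cons, pow_succ]
    have h1 : ‖a‖ ≤ r := h a (Multiset.mem_cons_self a s)
    have h2 : (s.map norm).prod ≤ r ^ Multiset.card s :=
      ih (fun x hx => h x (Multiset.mem_cons_of_mem hx))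
    have h3 : (0:ℝ) ≤ (s.map norm).prod := Multiset.prod_nonneg (by
      intro x hx; obtain ⟨y, -, rfl⟩ := Multiset.mem_map.mp hx; exact norm_nonneg y)
    calc ‖a‖ * (s.map norm).prod ≤ r * (s.map norm).prod :=
          mul_le_mul_of_nonneg_right h1 h3
      _ ≤ r * r ^ Multiset.card s := mul_le_mul_of_nonneg_left h2 (by linarith)
      _ = r ^ Multiset.card s * r := by ring

private lemma root_norm_le {t : ℕ} (ht : 1 ≤ t) (A : Matrix (Fin t) (Fin t) ℂ) (r : ℝ)
    (hr : ∀ i, ∑ j, ‖A i j‖ ≤ r) {μ : ℂ} (hμ : A.charpoly.IsRoot μ) : ‖μ‖ ≤ r := by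
  have : Nonempty (Fin t) := ⟨⟨0, ht⟩⟩
  have h0 : ((Matrix.scalar (Fin t)) μ - A).det = 0 := by
    have := hμ
    rw [IsRoot.def, Matrix.charpoly, _root_.eval_det, matPolyEquiv_charmatrix] at this
    simpa using this
  obtain ⟨v, hv, hv0⟩ := Matrix.exists_mulVec_eq_zero_iff.mpr h0
  have hAv : A *ᵥ v = μ • v := by
    have h := hv0
    rw [Matrix.sub_mulVec] at h
    have hs : (Matrix.scalar (Fin t)) μ *ᵥ v = μ • v := by
      ext i; simp [Matrix.scalar, Matrix.mulVec_diagonal]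
    rw [hs] at h
    exact (sub_eq_zero.mp h).symm
  obtain ⟨i, -, hi⟩ := Finset.exists_mem_eq_sup' Finset.univ_nonempty (fun i => ‖v i‖)
  have hvi : v i ≠ 0 := by
    intro h
    apply hv
    ext j
    have : ‖v j‖ ≤ ‖v i‖ := hi ▸ Finset.le_sup' (fun i => ‖v i‖) (Finset.mem_univ j)
    rw [h, norm_zero] at this
    simpa using le_antisymm this (norm_nonneg _)
  have key : ‖μ‖ * ‖v i‖ ≤ r * ‖v i‖ := by
    have h1 : ‖μ‖ * ‖v i‖ = ‖∑ j, A i j * v j‖ := by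
      rw [← norm_mul]
      congr 1
      have := congrFun hAv i
      simpa [Matrix.mulVec, dotProduct, Pi.smul_apply, smul_eq_mul, mul_comm] using this.symm
    rw [h1]
    calc ‖∑ j, A i j * v j‖ ≤ ∑ j, ‖A i j‖ * ‖v j‖ := by
          refine (norm_sum_le _ _).trans ?_
          exact Finset.sum_le_sum fun j _ => le_of_eq (norm_mul _ _)
      _ ≤ ∑ j, ‖A i j‖ * ‖v i‖ := by
          refine Finset.sum_le_sum fun j _ => ?_
          exact mul_le_mul_of_nonneg_left
            (hi ▸ Finset.le_sup' (fun i => ‖v i‖) (Finset.mem_univ j)) (norm_nonneg _)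
      _ = (∑ j, ‖A i j‖) * ‖v i‖ := by rw [Finset.sum_mul]
      _ ≤ r * ‖v i‖ := mul_le_mul_of_nonneg_right (hr i) (norm_nonneg _)
  exact le_of_mul_le_mul_right key (norm_pos_iff.mpr hvi)

/-- Let `t ≥ 1` and `T` a `t×t` integer matrix in which every row has
sum of absolute values of entries at most `4`. Then every nonzero real eigenvalue `λ`
of `T` satisfies `|λ| ≥ 4^(1−t)`. -/
theorem eigenvalue_lower_bound
    (t : ℕ) (ht : 1 ≤ t) (T : Matrix (Fin t) (Fin t) ℤ)
    (hrow : ∀ i : Fin t, ∑ j : Fin t, |T i j| ≤ 4)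
    (lam : ℝ) (hlam : ((T.map (Int.cast : ℤ → ℝ)).charpoly).IsRoot lam)
    (hne : lam ≠ 0) :
    (4 : ℝ) ^ ((1 : ℤ) - (t : ℤ)) ≤ |lam| := by
  classical
  set A : Matrix (Fin t) (Fin t) ℂ := T.map (Int.cast : ℤ → ℂ) with hA
  set p : ℂ[X] := A.charpoly with hp
  have hpmap : p = (T.charpoly).map (Int.castRingHom ℂ) :=
    Matrix.charpoly_map T (Int.castRingHom ℂ)
  -- (lam : ℂ) is a root of p
  have hroot : p.IsRoot (lam : ℂ) := by
    have h1 : (T.map (Int.cast : ℤ → ℝ)).charpoly = (T.charpoly).map (Int.castRingHom ℝ) :=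
      Matrix.charpoly_map T (Int.castRingHom ℝ)
    have h2 : p = ((T.map (Int.cast : ℤ → ℝ)).charpoly).map (algebraMap ℝ ℂ) := by
      rw [hpmap, h1, Polynomial.map_map]
      congr 1
    rw [h2]
    exact Polynomial.IsRoot.map hlam
  have hmonic : p.Monic := A.charpoly_monic
  have hpne : p ≠ 0 := hmonic.ne_zero
  have hdeg : p.natDegree = t := by
    rw [hp, Matrix.charpoly_natDegree_eq_dim, Fintype.card_fin]
  have hcard : Multiset.card p.roots = p.natDegree :=
    splits_iff_card_roots.mp (IsAlgClosed.splits p)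
  have hfac : (p.roots.map fun a => X - C a).prod = p := by
    have := Polynomial.C_leadingCoeff_mul_prod_multiset_X_sub_C hcard
    rwa [hmonic.leadingCoeff, _root_.map_one, one_mul] at this
  set R : Multiset ℂ := p.roots with hR
  set m : Multiset ℂ := R.filter (fun x => ¬ x = 0) with hm
  set k : ℕ := R.count 0 with hk
  have hzsplit : R.filter (fun x => x = 0) + m = R := Multiset.filter_add_not _ R
  have hzrep : R.filter (fun x => x = 0) = Multiset.replicate k 0 := by
    rw [hk]
    exact Multiset.filter_eq' R 0
  set q : ℂ[X] := (m.map fun a => X - C a).prod with hq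
  have hfac2 : p = X ^ k * q := by
    rw [← hfac, ← hzsplit, Multiset.map_add, Multiset.prod_add, hzrep]
    congr 1
    rw [Multiset.map_replicate, Multiset.prod_replicate]
    simp
  -- the coefficient of p at k is the product of (-a) over nonzero roots
  have hcoeff : p.coeff k = q.coeff 0 := by
    rw [hfac2]
    simpa using Polynomial.coeff_X_pow_mul q k 0
  have hqeval : q.coeff 0 = (m.map fun a => -a).prod := by
    rw [Polynomial.coeff_zero_eq_eval_zero, hq, Polynomial.eval_multiset_prod,
      Multiset.map_map]
    congr 1
    apply Multiset.map_congr rfl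
    intro x hx
    simp
  -- the coefficient is a nonzero integer, so its norm is at least 1
  have hint : p.coeff k = ((T.charpoly.coeff k : ℤ) : ℂ) := by
    rw [hpmap, Polynomial.coeff_map]
    rfl
  have hne0 : p.coeff k ≠ 0 := by
    rw [hcoeff, hqeval]
    apply Multiset.prod_ne_zero
    intro h0
    obtain ⟨y, hy, hy0⟩ := Multiset.mem_map.mp h0
    have : y ≠ 0 := (Multiset.mem_filter.mp hy).2
    exact this (by simpa using hy0.symm)
  have hone : (1 : ℝ) ≤ ‖p.coeff k‖ := by
    rw [hint]
    have : T.charpoly.coeff k ≠ 0 := by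
      intro h
      apply hne0
      rw [hint, h]
      simp
    have h1 : (1 : ℤ) ≤ |T.charpoly.coeff k| := Int.one_le_abs this
    calc (1:ℝ) ≤ |(T.charpoly.coeff k : ℝ)| := by exact_mod_cast h1
      _ = ‖((T.charpoly.coeff k : ℤ) : ℂ)‖ := (Complex.norm_intCast _).symm
  -- norm of the coefficient = product of norms of nonzero roots
  have hnorm : ‖p.coeff k‖ = (m.map norm).prod := by
    rw [hcoeff, hqeval, multiset_norm_prod, Multiset.map_map]
    congr 1
    apply Multiset.map_congr rfl
    intro x hx
    simp
  -- lam is among the nonzero roots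
  have hlamC : (lam : ℂ) ∈ m := by
    rw [hm, Multiset.mem_filter]
    refine ⟨?_, by simpa using hne⟩
    rw [hR, Polynomial.mem_roots hpne]
    exact hroot
  -- every root has norm at most 4
  have hbound : ∀ x ∈ m, ‖x‖ ≤ (4:ℝ) := by
    intro x hx
    have hxR : x ∈ R := Multiset.mem_of_mem_filter hx
    have hxroot : p.IsRoot x := (Polynomial.mem_roots hpne).mp hxR
    apply root_norm_le ht A 4 _ hxroot
    intro i
    have : ∑ j, ‖A i j‖ = ((∑ j, |T i j| : ℤ) : ℝ) := by
      push_cast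
      apply Finset.sum_congr rfl
      intro j _
      rw [hA]
      simp [Matrix.map_apply]
    rw [this]
    exact_mod_cast hrow i
  -- split off lam from the product
  have hprodsplit : ‖(lam:ℂ)‖ * ((m.erase (lam:ℂ)).map norm).prod = (m.map norm).prod :=
    Multiset.prod_map_erase hlamC
  have hcardm : Multiset.card m ≤ t := by
    calc Multiset.card m ≤ Multiset.card R :=
          Multiset.card_le_card (Multiset.filter_le (fun x => ¬ x = 0) R)
      _ = t := by rw [hcard, hdeg]
  have hcarderase : Multiset.card (m.erase (lam:ℂ)) ≤ t - 1 := by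
    rw [Multiset.card_erase_of_mem hlamC]
    exact Nat.pred_le_pred hcardm
  have herasebound : ((m.erase (lam:ℂ)).map norm).prod ≤ (4:ℝ) ^ (t - 1) := by
    refine le_trans (multiset_prod_le_pow 4 (by norm_num) _ ?_) ?_
    · intro x hx
      exact hbound x (Multiset.mem_of_mem_erase hx)
    · exact pow_le_pow_right₀ (by norm_num) hcarderase
  -- conclude
  have hfinal : (1:ℝ) ≤ |lam| * (4:ℝ) ^ (t - 1) := by
    have hlamnorm : ‖(lam:ℂ)‖ = |lam| := by
      rw [Complex.norm_real, Real.norm_eq_abs]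
    calc (1:ℝ) ≤ ‖p.coeff k‖ := hone
      _ = (m.map norm).prod := hnorm
      _ = ‖(lam:ℂ)‖ * ((m.erase (lam:ℂ)).map norm).prod := hprodsplit.symm
      _ ≤ ‖(lam:ℂ)‖ * (4:ℝ) ^ (t - 1) :=
          mul_le_mul_of_nonneg_left herasebound (norm_nonneg _)
      _ = |lam| * (4:ℝ) ^ (t - 1) := by rw [hlamnorm]
  have hzpow : (4 : ℝ) ^ ((1 : ℤ) - (t : ℤ)) = ((4:ℝ) ^ (t - 1))⁻¹ := by
    have h1 : (1 : ℤ) - (t : ℤ) = -((t - 1 : ℕ) : ℤ) := by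
      push_cast [Nat.cast_sub ht]
      ring
    rw [h1, _root_.zpow_neg, zpow_natCast]
  rw [hzpow, inv_le_iff_one_le_mul₀ (by positivity)]
  exact hfinal
end

section
/- Let t, s be positive integers, a : {1,…,t} → ℝ, and β : {1,…,t}² → {1,…,s} such that for all (i,j), (i',j') ∈ {1,…,t}², β(i,j) ≤ β(i',j') implies a_i + a_j ≥ a_{i'} + a_{j'}. Let z : {1,…,t}² → ℝ be symmetric (z_{i,j} = z_{j,i}) with Σ_{i=1}^t Σ_{j=1}^t z_{i,j} = 0 and such that for every h ∈ {1,…,s}, Σ_{(i,j) : β(i,j) ≤ h} z_{i,j} ≥ 0. Then Σ_{i=1}^t a_i · (Σ_{j=1}^t z_{i,j}) ≥ 0. -/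
/-- Let `t, s ≥ 1`, `a : {1,…,t} → ℝ`, and `β : {1,…,t}² → {1,…,s}` such
that `β(p) ≤ β(q)` implies `a_{p₁} + a_{p₂} ≥ a_{q₁} + a_{q₂}`. If `z` is symmetric with
total sum `0` and every initial-level partial sum `∑_{β(i,j) ≤ h} z_{i,j}` is nonnegative,
then `∑ᵢ aᵢ · (∑ⱼ z_{i,j}) ≥ 0`. -/
theorem weighted_sum_nonneg
    (t s : ℕ) (ht : 0 < t) (hs : 0 < s)
    (a : Fin t → ℝ) (β : Fin t × Fin t → Fin s)
    (hβ : ∀ p q : Fin t × Fin t, β p ≤ β q → a q.1 + a q.2 ≤ a p.1 + a p.2)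
    (z : Fin t → Fin t → ℝ)
    (hsymm : ∀ i j : Fin t, z i j = z j i)
    (hzero : ∑ i : Fin t, ∑ j : Fin t, z i j = 0)
    (hlevel : ∀ h : Fin s,
      0 ≤ ∑ p ∈ Finset.univ.filter (fun p : Fin t × Fin t => β p ≤ h), z p.1 p.2) :
    0 ≤ ∑ i : Fin t, a i * ∑ j : Fin t, z i j := by
  classical
  have hne : (Finset.univ : Finset (Fin t × Fin t)).Nonempty :=
    ⟨(⟨0, ht⟩, ⟨0, ht⟩), Finset.mem_univ _⟩
  set F : Fin t × Fin t → ℝ := fun p => a p.1 + a p.2 with hF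
  -- the "level set" up to k (as naturals)
  set L : ℕ → Finset (Fin t × Fin t) :=
    fun k => Finset.univ.filter (fun p => (β p : ℕ) ≤ k) with hL
  have hLmono : ∀ {k l : ℕ}, k ≤ l → L k ⊆ L l := by
    intro k l hkl p hp
    simp only [hL, Finset.mem_filter, Finset.mem_univ, true_and] at hp ⊢
    omega
  -- the antitone extension g of F along β
  set g : ℕ → ℝ := fun k =>
    if h : (L k).Nonempty then (L k).inf' h F else Finset.univ.sup' hne F with hg
  have hgeq : ∀ p : Fin t × Fin t, g (β p) = F p := by
    intro p
    have hpmem : p ∈ L (β p) := by simp [hL]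
    have hne' : (L (β p)).Nonempty := ⟨p, hpmem⟩
    rw [hg]
    simp only [hne', dif_pos]
    apply le_antisymm
    · exact Finset.inf'_le _ hpmem
    · apply Finset.le_inf'
      intro q hq
      simp only [hL, Finset.mem_filter, Finset.mem_univ, true_and] at hq
      exact hβ q p (Fin.le_def.mpr hq)
  have hganti : ∀ {k l : ℕ}, k ≤ l → g l ≤ g k := by
    intro k l hkl
    rw [hg]
    by_cases hk : (L k).Nonempty
    · have hl : (L l).Nonempty := hk.mono (hLmono hkl)
      simp only [hk, hl, dif_pos]
      obtain ⟨p, hp, hpe⟩ := Finset.exists_mem_eq_inf' hk F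
      rw [hpe]
      exact Finset.inf'_le _ (hLmono hkl hp)
    · simp only [hk, dif_neg]
      by_cases hl : (L l).Nonempty
      · simp only [hl, dif_pos]
        obtain ⟨p, hp, hpe⟩ := Finset.exists_mem_eq_inf' hl F
        rw [hpe]
        exact Finset.le_sup' _ (Finset.mem_univ p)
      · simp [hl]
  -- fiberwise sums
  set G : ℕ → ℝ :=
    fun h => ∑ p ∈ Finset.univ.filter (fun p : Fin t × Fin t => (β p : ℕ) = h),
      z p.1 p.2 with hG
  -- partial sums of G are level sums
  have hpartial : ∀ n : ℕ, ∑ j ∈ Finset.range n, G j = ∑ p ∈ L (n - 1), z p.1 p.2 ∨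
      (n = 0 ∧ ∑ j ∈ Finset.range n, G j = 0) := by
    intro n; cases n with
    | zero => right; simp
    | succ m =>
      left
      have hmap : ∀ p ∈ L m, (β p : ℕ) ∈ Finset.range (m + 1) := by
        intro p hp
        simp only [hL, Finset.mem_filter, Finset.mem_univ, true_and] at hp
        simp [Nat.lt_succ_iff, hp]
      have := Finset.sum_fiberwise_of_maps_to hmap (fun p => z p.1 p.2)
      simp only [Nat.add_sub_cancel]
      rw [← this]
      apply Finset.sum_congr rfl
      intro j hj
      rw [hG]
      apply Finset.sum_congr _ (fun _ _ => rfl)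
      ext p
      simp only [hL, Finset.mem_filter, Finset.mem_univ, true_and, Finset.mem_range,
        Nat.lt_succ_iff] at hj ⊢
      omega
  have hpartial' : ∀ n : ℕ, 0 < n → ∑ j ∈ Finset.range n, G j = ∑ p ∈ L (n - 1), z p.1 p.2 := by
    intro n hn
    rcases hpartial n with h | ⟨h0, _⟩
    · exact h
    · omega
  -- level sums are nonneg for n-1 < s
  have hLsum : ∀ k : ℕ, k < s → 0 ≤ ∑ p ∈ L k, z p.1 p.2 := by
    intro k hk
    have hset : L k = Finset.univ.filter (fun p => β p ≤ (⟨k, hk⟩ : Fin s)) := by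
      ext p; simp [hL, Fin.le_def]
    rw [hset]; exact hlevel ⟨k, hk⟩
  -- total sum is zero
  have htotal : ∑ p ∈ L (s - 1), z p.1 p.2 = 0 := by
    have hLfull : L (s - 1) = Finset.univ := by
      ext p
      simp only [hL, Finset.mem_filter, Finset.mem_univ, true_and, iff_true]
      have := (β p).is_lt
      omega
    rw [hLfull, ← hzero, ← Finset.sum_product']
    rfl
  -- the key sum, via Abel summation
  have hkey : 0 ≤ ∑ p : Fin t × Fin t, F p * z p.1 p.2 := by
    have hfib : ∑ p : Fin t × Fin t, F p * z p.1 p.2 = ∑ h ∈ Finset.range s, g h * G h := by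
      have hmap : ∀ p ∈ (Finset.univ : Finset (Fin t × Fin t)),
          (β p : ℕ) ∈ Finset.range s := by
        intro p _; simp [(β p).is_lt]
      rw [← Finset.sum_fiberwise_of_maps_to hmap (fun p => F p * z p.1 p.2)]
      apply Finset.sum_congr rfl
      intro h _
      rw [hG, Finset.mul_sum]
      apply Finset.sum_congr rfl
      intro p hp
      simp only [Finset.mem_filter] at hp
      rw [← hgeq p, hp.2]
    rw [hfib]
    have habel := Finset.sum_range_by_parts g G s
    simp only [smul_eq_mul] at habel
    rw [habel]
    rw [hpartial' s hs, htotal, mul_zero, zero_sub]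
    rw [neg_nonneg]
    apply Finset.sum_nonpos
    intro i hi
    simp only [Finset.mem_range] at hi
    rw [hpartial' (i + 1) (Nat.succ_pos i)]
    simp only [Nat.add_sub_cancel]
    apply mul_nonpos_of_nonpos_of_nonneg
    · have := hganti (Nat.le_succ i)
      linarith
    · exact hLsum i (by omega)
  -- relate to the goal via symmetry
  have hdouble : ∑ p : Fin t × Fin t, F p * z p.1 p.2
      = 2 * ∑ i : Fin t, a i * ∑ j : Fin t, z i j := by
    rw [← Finset.univ_product_univ, Finset.sum_product]
    have : ∀ i j : Fin t, F (i, j) * z i j = a i * z i j + a j * z i j := by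
      intro i j; rw [hF]; ring
    calc ∑ i : Fin t, ∑ j : Fin t, F (i, j) * z i j
        = ∑ i : Fin t, ∑ j : Fin t, (a i * z i j + a j * z i j) := by
          simp_rw [this]
      _ = (∑ i : Fin t, ∑ j : Fin t, a i * z i j)
          + ∑ i : Fin t, ∑ j : Fin t, a j * z i j := by
          rw [← Finset.sum_add_distrib]
          exact Finset.sum_congr rfl fun i _ => Finset.sum_add_distrib
      _ = (∑ i : Fin t, ∑ j : Fin t, a i * z i j)
          + ∑ j : Fin t, ∑ i : Fin t, a j * z i j := by
          congr 1
          exact Finset.sum_comm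
      _ = 2 * ∑ i : Fin t, a i * ∑ j : Fin t, z i j := by
          simp_rw [← Finset.mul_sum]
          have : ∀ j : Fin t, ∑ i : Fin t, z i j = ∑ i : Fin t, z j i :=
            fun j => Finset.sum_congr rfl fun i _ => hsymm i j
          simp_rw [this]
          ring
  rw [hdouble] at hkey
  linarith
end

section
/- Let c : E(K_{2nk}) → {1,…,k} be an edge-colouring and M a perfect matching of K_{2nk} that admits no contradicting swap. Let A_1, …, A_t be a partition of {1,…,k}, and for an edge e let α(e) ∈ {1,…,t} be the index with c(e) ∈ A_{α(e)}. Define (i,j) ≻ (i',j') iff m_x(M) + m_y(M) > m_{x'}(M) + m_{y'}(M) + 4 for all colours x ∈ A_i, y ∈ A_j, x' ∈ A_{i'}, y' ∈ A_{j'}. Let P ⊆ {1,…,t}² satisfy: (i,j) ≻ (i',j') whenever (i,j) ∈ P and (i',j') ∉ P. Then, counting ordered quadruples (u,v,x,y) of vertices such that uv and xy are distinct edges of M, the number of such quadruples with (α(ux), α(vy)) ∈ P is at least the number of such quadruples with (α(uv), α(xy)) ∈ P. -/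
/-- `m_i(M)`: the number of edges of the matching `M` with colour `i`. -/
noncomputable def colourCount {N k : ℕ} (c : Sym2 (Fin N) → Fin k) (S : Set (Sym2 (Fin N)))
    (i : Fin k) : ℕ :=
  (S ∩ {e | c e = i}).ncard

/-- Let `M` be a perfect matching of `K_{2nk}` admitting no contradicting
swap, `A₁,…,A_t` a partition of the colours, `α(e)` the index of the part containing `c(e)`,
and `P` an up-set for `≻` (i.e. `(i,j) ≻ (i',j')` whenever `(i,j) ∈ P` and `(i',j') ∉ P`).
Then, among ordered quadruples `(u,v,x,y)` with `uv, xy` distinct edges of `M`, there are at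
least as many with `(α(ux), α(vy)) ∈ P` as with `(α(uv), α(xy)) ∈ P`. -/
theorem swaps_into_upset_at_least_swaps_from_upset
    (n k t : ℕ) (hn : 0 < n) (hk : 0 < k)
    (c : Sym2 (Fin (2 * n * k)) → Fin k)
    (M : (⊤ : SimpleGraph (Fin (2 * n * k))).Subgraph) (hM : M.IsPerfectMatching)
    (hswap : ∀ u v x y : Fin (2 * n * k), M.Adj u v → M.Adj x y → s(u, v) ≠ s(x, y) →
      edgeWeight c M.edgeSet s(u, v) + edgeWeight c M.edgeSet s(x, y)
          ≤ edgeWeight c M.edgeSet s(u, x) + edgeWeight c M.edgeSet s(v, y) + 4 ∧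
      edgeWeight c M.edgeSet s(u, v) + edgeWeight c M.edgeSet s(x, y)
          ≤ edgeWeight c M.edgeSet s(u, y) + edgeWeight c M.edgeSet s(v, x) + 4)
    (A : Fin t → Finset (Fin k))
    (hpart : ∀ x : Fin k, ∃! i : Fin t, x ∈ A i)
    (α : Sym2 (Fin (2 * n * k)) → Fin t)
    (hα : ∀ e : Sym2 (Fin (2 * n * k)), c e ∈ A (α e))
    (P : Set (Fin t × Fin t))
    (hP : ∀ p ∈ P, ∀ q ∉ P,
      ∀ x ∈ A (p.1 : Fin t), ∀ y ∈ A p.2, ∀ x' ∈ A (q.1 : Fin t), ∀ y' ∈ A q.2,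
        colourCount c M.edgeSet x' + colourCount c M.edgeSet y' + 4
          < colourCount c M.edgeSet x + colourCount c M.edgeSet y) :
    {q : Fin (2 * n * k) × Fin (2 * n * k) × Fin (2 * n * k) × Fin (2 * n * k) |
        M.Adj q.1 q.2.1 ∧ M.Adj q.2.2.1 q.2.2.2 ∧ s(q.1, q.2.1) ≠ s(q.2.2.1, q.2.2.2) ∧
        (α s(q.1, q.2.2.1), α s(q.2.1, q.2.2.2)) ∈ P}.ncard
      ≥ {q : Fin (2 * n * k) × Fin (2 * n * k) × Fin (2 * n * k) × Fin (2 * n * k) |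
        M.Adj q.1 q.2.1 ∧ M.Adj q.2.2.1 q.2.2.2 ∧ s(q.1, q.2.1) ≠ s(q.2.2.1, q.2.2.2) ∧
        (α s(q.1, q.2.1), α s(q.2.2.1, q.2.2.2)) ∈ P}.ncard := by
  refine Set.ncard_le_ncard (fun q hq => ?_) (Set.toFinite _)
  obtain ⟨h1, h2, h3, h4⟩ := hq
  refine ⟨h1, h2, h3, ?_⟩
  by_contra hq'
  have hlt := hP _ h4 _ hq' _ (hα s(q.1, q.2.1)) _ (hα s(q.2.2.1, q.2.2.2))
    _ (hα s(q.1, q.2.2.1)) _ (hα s(q.2.1, q.2.2.2))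
  have hle := (hswap q.1 q.2.1 q.2.2.1 q.2.2.2 h1 h2 h3).1
  have hew : ∀ e, edgeWeight c M.edgeSet e = colourCount c M.edgeSet (c e) := fun e => rfl
  simp only [hew] at hle
  omega
end
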